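/- arXiv:0801.4962 — 5 statements merged into one kernel-verified Lean document; each statement's English description precedes it below -/
import Mathlib

section
/- Every ideal I of R_κ = κ[u₁,…,u_n]((S)) admits a Gröbner basis {r₁,…,r_m}; moreover, any Gröbner basis of I generates I as an ideal of R_κ. -/
open scoped Classical

/-- `R_κ = κ[u₁,…,u_n]((S))`, the ring of formal Laurent series in `S` with
coefficients in the polynomial ring `κ[u₁,…,u_n]`. -/
abbrev LaurentPolyRing (κ : Type) [Field κ] (n : ℕ) : Type :=
  LaurentSeries (MvPolynomial (Fin n) κ)

/-- The leading exponent of a multivariate polynomial for the lexicographic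
monomial order (junk value `0` for the zero polynomial). -/
noncomputable def lexLeadExp {κ : Type} [Field κ] {n : ℕ}
    (P : MvPolynomial (Fin n) κ) : Fin n →₀ ℕ :=
  ofLex (WithBot.unbotD (toLex 0) (P.support.image (toLex : (Fin n →₀ ℕ) → Lex (Fin n →₀ ℕ))).max)

/-- The leading term of a nonzero `f ∈ R_κ` for the term order given by lexicographic
comparison of the tuples `(−j, i₁, …, i_n)`. -/
noncomputable def lead {κ : Type} [Field κ] {n : ℕ}
    (f : LaurentPolyRing κ n) : LaurentPolyRing κ n :=
  HahnSeries.single f.order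
    (MvPolynomial.monomial (lexLeadExp (f.coeff f.order))
      ((f.coeff f.order).coeff (lexLeadExp (f.coeff f.order))))

/-- A Gröbner basis of an ideal `I` of `R_κ = κ[u₁,…,u_n]((S))`: a finite set of nonzero
elements of `I` whose leading terms have `S`-exponent `0` (i.e. each element has order `0`)
and such that the leading term of every nonzero element of `I` lies in the ideal generated
by the leading terms of the basis elements. -/
def IsGroebnerBasis {κ : Type} [Field κ] {n : ℕ} (I : Ideal (LaurentPolyRing κ n))
    (rs : Finset (LaurentPolyRing κ n)) : Prop :=
  (∀ r ∈ rs, r ≠ 0 ∧ r ∈ I ∧ (r : LaurentPolyRing κ n).order = 0) ∧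
  ∀ f ∈ I, f ≠ 0 →
    lead f ∈ Ideal.span ((lead : LaurentPolyRing κ n → LaurentPolyRing κ n) '' rs)

section Aux
variable {κ : Type} [Field κ] {n : ℕ}

/-- The "leading polynomial" of a Laurent series over polynomials. -/
noncomputable def leadPoly (f : LaurentPolyRing κ n) : MvPolynomial (Fin n) κ :=
  MvPolynomial.monomial (lexLeadExp (f.coeff f.order))
    ((f.coeff f.order).coeff (lexLeadExp (f.coeff f.order)))

lemma lead_eq (f : LaurentPolyRing κ n) :
    lead f = HahnSeries.single f.order (leadPoly f) := rfl

lemma lexLeadExp_spec {P : MvPolynomial (Fin n) κ} (h : P ≠ 0) :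
    lexLeadExp P ∈ P.support ∧ ∀ m ∈ P.support, toLex m ≤ toLex (lexLeadExp P) := by
  have hs : (P.support.image (toLex : (Fin n →₀ ℕ) → Lex (Fin n →₀ ℕ))).Nonempty :=
    (MvPolynomial.support_nonempty.mpr h).image _
  obtain ⟨ν, hν⟩ := Finset.max_of_nonempty hs
  have hl : lexLeadExp P = ofLex ν := by rw [lexLeadExp, hν, WithBot.unbotD_coe]
  have hmem := Finset.mem_of_max hν
  obtain ⟨m, hm, hmv⟩ := Finset.mem_image.mp hmem
  constructor
  · rw [hl, ← hmv]; exact hm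
  · intro m' hm'
    have := Finset.le_max (Finset.mem_image_of_mem (toLex) hm')
    rw [hν] at this
    rw [hl]
    exact_mod_cast this

lemma lexLeadExp_mem_support {P : MvPolynomial (Fin n) κ} (h : P ≠ 0) :
    lexLeadExp P ∈ P.support := (lexLeadExp_spec h).1

lemma coeff_lexLeadExp_ne_zero {P : MvPolynomial (Fin n) κ} (h : P ≠ 0) :
    P.coeff (lexLeadExp P) ≠ 0 :=
  MvPolynomial.mem_support_iff.mp (lexLeadExp_mem_support h)

lemma le_lexLeadExp {P : MvPolynomial (Fin n) κ} {m : Fin n →₀ ℕ} (h : m ∈ P.support) :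
    toLex m ≤ toLex (lexLeadExp P) := (lexLeadExp_spec (by rintro rfl; simp at h)).2 m h

/-- shift lemma -/
lemma shift_coeff (g : ℤ) (x : LaurentPolyRing κ n) (j : ℤ) :
    (HahnSeries.single g (1 : MvPolynomial (Fin n) κ) * x).coeff j = x.coeff (j - g) := by
  have := HahnSeries.coeff_single_mul_add (r := (1 : MvPolynomial (Fin n) κ)) (x := x)
    (a := j - g) (b := g)
  rw [one_mul] at this
  rw [show j - g + g = j by ring] at this
  exact this

lemma shift_cancel (g : ℤ) (x : LaurentPolyRing κ n) :
    HahnSeries.single g (1 : MvPolynomial (Fin n) κ) * (HahnSeries.single (-g) 1 * x) = x := by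
  rw [← mul_assoc, HahnSeries.single_mul_single, one_mul, add_neg_cancel,
    HahnSeries.single_zero_one, one_mul]

/-- Nonnegative support predicate. -/
def Nn (x : LaurentPolyRing κ n) : Prop := ∀ j : ℤ, j < 0 → x.coeff j = 0

lemma nn_of_order_eq_zero {x : LaurentPolyRing κ n} (hx : x.order = 0) : Nn x := by
  intro j hj
  exact HahnSeries.coeff_eq_zero_of_lt_order (by rw [hx]; exact hj)

lemma order_eq_zero_of_nn {x : LaurentPolyRing κ n} (hx : Nn x) (h0 : x.coeff 0 ≠ 0) :
    x.order = 0 := by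
  have hxne : x ≠ 0 := fun h => h0 (by simp [h])
  refine le_antisymm (HahnSeries.order_le_of_coeff_ne_zero h0) ?_
  by_contra h
  push_neg at h
  exact HahnSeries.coeff_order_eq_zero.not.mpr hxne (hx _ h)

/-- product support bound -/
lemma mul_coeff_eq_zero {x y : LaurentPolyRing κ n} {k l : ℤ}
    (hx : ∀ j < k, x.coeff j = 0) (hy : ∀ j < l, y.coeff j = 0)
    {m : ℤ} (hm : m < k + l) : (x * y).coeff m = 0 := by
  rw [HahnSeries.coeff_mul]
  refine Finset.sum_eq_zero fun ij hij => ?_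
  rw [Finset.mem_addAntidiagonal] at hij
  obtain ⟨h1, h2, h3⟩ := hij
  rw [HahnSeries.mem_support] at h1 h2
  have hk : k ≤ ij.1 := not_lt.mp fun hh => h1 (hx _ hh)
  have hl : l ≤ ij.2 := not_lt.mp fun hh => h2 (hy _ hh)
  exact absurd hm (by omega)

lemma nn_mul {x y : LaurentPolyRing κ n} (hx : Nn x) (hy : Nn y) : Nn (x * y) :=
  fun j hj => mul_coeff_eq_zero (k := 0) (l := 0) (fun _ h => hx _ h) (fun _ h => hy _ h)
    (by omega)

lemma nn_sub {x y : LaurentPolyRing κ n} (hx : Nn x) (hy : Nn y) : Nn (x - y) := by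
  intro j hj
  rw [HahnSeries.coeff_sub, hx j hj, hy j hj, sub_zero]

/-- coefficients of elements of the span of constants lie in the polynomial span -/
lemma coeff_mem_of_mem_span_C {T : Set (MvPolynomial (Fin n) κ)} {x : LaurentPolyRing κ n}
    (hx : x ∈ Ideal.span ((HahnSeries.C : MvPolynomial (Fin n) κ →+* LaurentPolyRing κ n) '' T)) :
    ∀ j : ℤ, x.coeff j ∈ Ideal.span T := by
  refine Submodule.span_induction ?_ ?_ ?_ ?_ hx
  · rintro x ⟨p, hp, rfl⟩ j
    rw [HahnSeries.C_apply, HahnSeries.coeff_single]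
    split
    · exact Ideal.subset_span hp
    · exact zero_mem _
  · intro j; simp
  · intro a b _ _ ha hb j
    rw [HahnSeries.coeff_add]
    exact add_mem (ha j) (hb j)
  · intro a b _ hb j
    rw [smul_eq_mul, HahnSeries.coeff_mul]
    refine sum_mem fun ij _ => Ideal.mul_mem_left _ _ (hb ij.2)

/-- elements of the support of a member of a span are bounded below by supports of generators -/
lemma exists_gen_le_of_mem_support {s : Set (MvPolynomial (Fin n) κ)}
    {x : MvPolynomial (Fin n) κ} (hx : x ∈ Ideal.span s) :
    ∀ m ∈ x.support, ∃ q ∈ s, ∃ m' ∈ q.support, m' ≤ m := by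
  refine Submodule.span_induction ?_ ?_ ?_ ?_ hx
  · intro q hq m hm; exact ⟨q, hq, m, hm, le_rfl⟩
  · intro m hm; simp at hm
  · intro a b _ _ ha hb m hm
    rcases Finset.mem_union.mp (MvPolynomial.support_add hm) with h | h
    · exact ha m h
    · exact hb m h
  · intro a b _ hb m hm
    rw [smul_eq_mul] at hm
    have := MvPolynomial.support_mul a b hm
    rw [Finset.mem_add] at this
    obtain ⟨m₁, hm₁, m₂, hm₂, rfl⟩ := this
    obtain ⟨q, hq, m', hm', hle⟩ := hb m₂ hm₂
    exact ⟨q, hq, m', hm', hle.trans (le_add_self)⟩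

end Aux

section Red
variable {κ : Type} [Field κ] {n : ℕ}

lemma lead_eq_C {r : LaurentPolyRing κ n} (hord : r.order = 0) :
    lead r = HahnSeries.C (leadPoly r) := by
  rw [lead_eq, hord, HahnSeries.C_apply]

lemma reduction {I : Ideal (LaurentPolyRing κ n)} {rs : Finset (LaurentPolyRing κ n)}
    (hrs : ∀ r ∈ rs, r ≠ 0 ∧ r ∈ I ∧ (r : LaurentPolyRing κ n).order = 0)
    (hGB : ∀ f ∈ I, f ≠ 0 → lead f ∈ Ideal.span (lead '' (rs : Set (LaurentPolyRing κ n)))) :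
    ∀ f ∈ I, Nn f → ∃ (a : LaurentPolyRing κ n → MvPolynomial (Fin n) κ)
      (h : LaurentPolyRing κ n), h ∈ I ∧ Nn h ∧
      f = (∑ r ∈ rs, HahnSeries.C (a r) * r) + HahnSeries.single 1 1 * h := by
  have wf := (Finsupp.Lex.wellFoundedLT_of_finite (α := Fin n) (N := ℕ)).wf
  suffices main : ∀ ν : Lex (Fin n →₀ ℕ), ∀ f ∈ I, Nn f →
      toLex (lexLeadExp (f.coeff 0)) = ν →
      ∃ (a : LaurentPolyRing κ n → MvPolynomial (Fin n) κ) (h : LaurentPolyRing κ n),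
      h ∈ I ∧ Nn h ∧
      f = (∑ r ∈ rs, HahnSeries.C (a r) * r) + HahnSeries.single 1 1 * h by
    intro f hf hnn; exact main _ f hf hnn rfl
  intro ν₀
  refine wf.induction (C := fun ν => ∀ f ∈ I, Nn f →
      toLex (lexLeadExp (f.coeff 0)) = ν →
      ∃ (a : LaurentPolyRing κ n → MvPolynomial (Fin n) κ) (h : LaurentPolyRing κ n),
      h ∈ I ∧ Nn h ∧
      f = (∑ r ∈ rs, HahnSeries.C (a r) * r) + HahnSeries.single 1 1 * h) ν₀ ?_
  intro ν IH f hfI hnn hν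
  by_cases h0 : f.coeff 0 = 0
  · refine ⟨0, HahnSeries.single (-1) 1 * f, I.mul_mem_left _ hfI, ?_, ?_⟩
    · intro j hj
      rw [shift_coeff]
      rcases lt_or_eq_of_le (show j - (-1) ≤ 0 by omega) with h | h
      · exact hnn _ h
      · rw [h]; exact h0
    · rw [shift_cancel]; simp
  · have hfne : f ≠ 0 := fun h => h0 (by simp [h])
    have hford : f.order = 0 := order_eq_zero_of_nn hnn h0
    set m := lexLeadExp (f.coeff 0) with hm
    set c := (f.coeff 0).coeff m with hc
    have hcne : c ≠ 0 := coeff_lexLeadExp_ne_zero h0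
    have hleadf : lead f = HahnSeries.C (MvPolynomial.monomial m c) := by
      rw [lead_eq_C hford, leadPoly, hford]
    have hsub : lead '' (rs : Set (LaurentPolyRing κ n)) ⊆
        (HahnSeries.C : MvPolynomial (Fin n) κ →+* LaurentPolyRing κ n) ''
          (leadPoly '' (rs : Set (LaurentPolyRing κ n))) := by
      rintro x ⟨r, hr, rfl⟩
      exact ⟨leadPoly r, ⟨r, hr, rfl⟩, (lead_eq_C (hrs r hr).2.2).symm⟩
    have hmem : MvPolynomial.monomial m c ∈
        Ideal.span (leadPoly '' (rs : Set (LaurentPolyRing κ n))) := by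
      have h5 := coeff_mem_of_mem_span_C
        (Ideal.span_mono hsub (hGB f hfI hfne)) 0
      rwa [hleadf, HahnSeries.C_apply, HahnSeries.coeff_single_same] at h5
    have hmsup : m ∈ (MvPolynomial.monomial m c).support := by
      rw [MvPolynomial.support_monomial, if_neg hcne]; exact Finset.mem_singleton_self m
    obtain ⟨q, hq, m', hm', hle⟩ := exists_gen_le_of_mem_support hmem m hmsup
    obtain ⟨r, hr, rfl⟩ := hq
    obtain ⟨hrne, hrI, hrord⟩ := hrs r hr
    have hr0ne : r.coeff 0 ≠ 0 := by
      have h6 := HahnSeries.coeff_order_eq_zero.not.mpr hrne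
      rwa [hrord] at h6
    set μ := lexLeadExp (r.coeff 0) with hμ
    set lc := (r.coeff 0).coeff μ with hlc
    have hlcne : lc ≠ 0 := coeff_lexLeadExp_ne_zero hr0ne
    have hlpr : leadPoly r = MvPolynomial.monomial μ lc := by rw [leadPoly, hrord]
    have hμle : μ ≤ m := by
      rw [hlpr, MvPolynomial.support_monomial, if_neg hlcne, Finset.mem_singleton] at hm'
      rwa [hm'] at hle
    set d := m - μ with hd
    have hdμ : d + μ = m := tsub_add_cancel_of_le hμle
    set t := MvPolynomial.monomial d (c * lc⁻¹) with ht
    set f' := f - HahnSeries.C t * r with hf'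
    have hf'I : f' ∈ I := I.sub_mem hfI (I.mul_mem_left _ hrI)
    have hCtnn : Nn (HahnSeries.C t : LaurentPolyRing κ n) := by
      intro j hj; rw [HahnSeries.C_apply, HahnSeries.coeff_single, if_neg (by omega)]
    have hf'nn : Nn f' := nn_sub hnn (nn_mul hCtnn (nn_of_order_eq_zero hrord))
    have hq0 : (HahnSeries.C t * r).coeff 0 = t * r.coeff 0 := by
      rw [HahnSeries.C_apply, HahnSeries.coeff_single_zero_mul]
    have hf'0 : f'.coeff 0 = f.coeff 0 - t * r.coeff 0 := by
      rw [hf', HahnSeries.coeff_sub, hq0]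
    have hqm : (t * r.coeff 0).coeff m = c := by
      rw [ht, ← hdμ, MvPolynomial.coeff_monomial_mul, mul_assoc, inv_mul_cancel₀ hlcne, mul_one]
    have hbound : ∀ m'' ∈ (t * (r.coeff 0)).support, toLex m'' ≤ toLex m := by
      intro m'' hmm
      have h2 := MvPolynomial.support_mul t (r.coeff 0) hmm
      rw [Finset.mem_add] at h2
      obtain ⟨m₁, hm₁, m₂, hm₂, rfl⟩ := h2
      have h3 : m₁ = d := by
        rw [ht, MvPolynomial.support_monomial] at hm₁
        split at hm₁
        · simp at hm₁
        · exact Finset.mem_singleton.mp hm₁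
      subst h3
      have h4 : toLex m₂ ≤ toLex μ := le_lexLeadExp hm₂
      calc toLex (d + m₂) = toLex d + toLex m₂ := rfl
        _ ≤ toLex d + toLex μ := add_le_add_right h4 _
        _ = toLex (d + μ) := rfl
        _ = toLex m := by rw [hdμ]
    have hDbound : ∀ m'' ∈ (f'.coeff 0).support, toLex m'' ≤ toLex m := by
      intro m'' hmm
      rw [MvPolynomial.mem_support_iff, hf'0, MvPolynomial.coeff_sub] at hmm
      by_cases h : m'' ∈ (f.coeff 0).support
      · exact le_lexLeadExp h
      · rw [MvPolynomial.notMem_support_iff] at h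
        rw [h, zero_sub, neg_ne_zero] at hmm
        exact hbound _ (MvPolynomial.mem_support_iff.mpr hmm)
    have hDm : (f'.coeff 0).coeff m = 0 := by
      rw [hf'0, MvPolynomial.coeff_sub, hqm, ← hc, sub_self]
    obtain ⟨a', h', hh'I, hh'nn, hdec⟩ :
        ∃ (a' : LaurentPolyRing κ n → MvPolynomial (Fin n) κ) (h' : LaurentPolyRing κ n),
          h' ∈ I ∧ Nn h' ∧
          f' = (∑ x ∈ rs, HahnSeries.C (a' x) * x) + HahnSeries.single 1 1 * h' := by
      by_cases hD0 : f'.coeff 0 = 0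
      · refine ⟨0, HahnSeries.single (-1) 1 * f', I.mul_mem_left _ hf'I, ?_, ?_⟩
        · intro j hj
          rw [shift_coeff]
          rcases lt_or_eq_of_le (show j - (-1) ≤ 0 by omega) with h | h
          · exact hf'nn _ h
          · rw [h]; exact hD0
        · rw [shift_cancel]; simp
      · have hlt : toLex (lexLeadExp (f'.coeff 0)) < ν := by
          rw [← hν]
          refine lt_of_le_of_ne (hDbound _ (lexLeadExp_mem_support hD0)) ?_
          intro heq
          have h7 : lexLeadExp (f'.coeff 0) = m := congrArg ofLex heq
          exact (coeff_lexLeadExp_ne_zero hD0) (by rw [h7]; exact hDm)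
        exact IH _ hlt f' hf'I hf'nn rfl
    refine ⟨fun x => a' x + if x = r then t else 0, h', hh'I, hh'nn, ?_⟩
    have hsingle : (∑ x ∈ rs, HahnSeries.C (if x = r then t else 0) * x)
        = HahnSeries.C t * r := by
      rw [Finset.sum_eq_single r]
      · rw [if_pos rfl]
      · intro b _ hb; rw [if_neg hb, map_zero, zero_mul]
      · intro h; exact absurd hr h
    have hsplit : (∑ x ∈ rs, HahnSeries.C (a' x + if x = r then t else 0) * x)
        = (∑ x ∈ rs, HahnSeries.C (a' x) * x) + HahnSeries.C t * r := by
      calc (∑ x ∈ rs, HahnSeries.C (a' x + if x = r then t else 0) * x)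
          = ∑ x ∈ rs, (HahnSeries.C (a' x) * x
              + HahnSeries.C (if x = r then t else 0) * x) :=
            Finset.sum_congr rfl fun x _ => by rw [map_add, add_mul]
        _ = (∑ x ∈ rs, HahnSeries.C (a' x) * x)
              + ∑ x ∈ rs, HahnSeries.C (if x = r then t else 0) * x :=
            Finset.sum_add_distrib
        _ = (∑ x ∈ rs, HahnSeries.C (a' x) * x) + HahnSeries.C t * r := by rw [hsingle]
    rw [hsplit]
    have h8 : f = f' + HahnSeries.C t * r := by rw [hf']; ring
    rw [h8, hdec]; ring

end Red

section Seq
variable {κ : Type} [Field κ] {n : ℕ}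

lemma sum_coeff {β : Type*} (s : Finset β) (F : β → LaurentPolyRing κ n) (j : ℤ) :
    (∑ x ∈ s, F x).coeff j = ∑ x ∈ s, (F x).coeff j := by
  classical
  induction s using Finset.induction_on with
  | empty => simp
  | insert x s' hx ih =>
                    rw [Finset.sum_insert hx, Finset.sum_insert hx, HahnSeries.coeff_add, ih]

lemma mem_span_of_nn {I : Ideal (LaurentPolyRing κ n)} {rs : Finset (LaurentPolyRing κ n)}
    (hrsnn : ∀ r ∈ rs, Nn r)
    (hred : ∀ f ∈ I, Nn f → ∃ (a : LaurentPolyRing κ n → MvPolynomial (Fin n) κ)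
      (h : LaurentPolyRing κ n), h ∈ I ∧ Nn h ∧
      f = (∑ r ∈ rs, HahnSeries.C (a r) * r) + HahnSeries.single 1 1 * h)
    {f : LaurentPolyRing κ n} (hfI : f ∈ I) (hnn : Nn f) :
    f ∈ Ideal.span (rs : Set (LaurentPolyRing κ n)) := by
  classical
  let step : {x : LaurentPolyRing κ n // x ∈ I ∧ Nn x} →
      (LaurentPolyRing κ n → MvPolynomial (Fin n) κ) ×
        {x : LaurentPolyRing κ n // x ∈ I ∧ Nn x} :=
    fun x => ⟨(hred x.1 x.2.1 x.2.2).choose,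
      ⟨(hred x.1 x.2.1 x.2.2).choose_spec.choose,
        (hred x.1 x.2.1 x.2.2).choose_spec.choose_spec.1,
        (hred x.1 x.2.1 x.2.2).choose_spec.choose_spec.2.1⟩⟩
  let seq : ℕ → {x : LaurentPolyRing κ n // x ∈ I ∧ Nn x} :=
    fun k => (fun t => (step t).2)^[k] ⟨f, hfI, hnn⟩
  let a : ℕ → LaurentPolyRing κ n → MvPolynomial (Fin n) κ := fun k => (step (seq k)).1
  have hspec : ∀ k, (seq k).1 =
      (∑ r ∈ rs, HahnSeries.C (a k r) * r) + HahnSeries.single 1 1 * (seq (k+1)).1 := by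
    intro k
    have h1 : seq (k+1) = (step (seq k)).2 := Function.iterate_succ_apply' _ _ _
    rw [h1]
    exact (hred (seq k).1 (seq k).2.1 (seq k).2.2).choose_spec.choose_spec.2.2
  have hseq0 : (seq 0).1 = f := rfl
  have htel : ∀ k : ℕ, f = (∑ r ∈ rs,
      (∑ i ∈ Finset.range k, HahnSeries.single (i : ℤ) (a i r)) * r)
      + HahnSeries.single (k : ℤ) 1 * (seq k).1 := by
    intro k
    induction k with
    | zero => simp [hseq0, HahnSeries.single_zero_one]
    | succ k ih =>
      rw [ih, hspec k, mul_add]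
      have e1 : HahnSeries.single (k:ℤ) (1 : MvPolynomial (Fin n) κ) *
          (∑ r ∈ rs, HahnSeries.C (a k r) * r)
          = ∑ r ∈ rs, HahnSeries.single (k:ℤ) (a k r) * r := by
        rw [Finset.mul_sum]
        refine Finset.sum_congr rfl fun r _ => ?_
        rw [← mul_assoc, HahnSeries.C_apply, HahnSeries.single_mul_single, add_zero, one_mul]
      have e2 : HahnSeries.single (k:ℤ) (1 : MvPolynomial (Fin n) κ) *
          (HahnSeries.single 1 1 * (seq (k+1)).1)
          = HahnSeries.single ((k+1 : ℕ) : ℤ) 1 * (seq (k+1)).1 := by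
        rw [← mul_assoc, HahnSeries.single_mul_single, one_mul]
        norm_num
      rw [e1, e2]
      have e3 : (∑ r ∈ rs, (∑ i ∈ Finset.range (k+1), HahnSeries.single (i : ℤ) (a i r)) * r)
          = (∑ r ∈ rs, (∑ i ∈ Finset.range k, HahnSeries.single (i : ℤ) (a i r)) * r)
            + ∑ r ∈ rs, HahnSeries.single (k:ℤ) (a k r) * r := by
        rw [← Finset.sum_add_distrib]
        refine Finset.sum_congr rfl fun r _ => ?_
        rw [Finset.sum_range_succ, add_mul]
      rw [e3]; ring
  let G : LaurentPolyRing κ n → LaurentPolyRing κ n := fun r =>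
    HahnSeries.ofPowerSeries ℤ _ (PowerSeries.mk fun i => a i r)
  have hGcoeff : ∀ r, ∀ i : ℕ, (G r).coeff (i : ℤ) = a i r := by
    intro r i
    have h2 := LaurentSeries.coeff_coe_powerSeries (PowerSeries.mk fun i => a i r) i
    rw [show (G r).coeff (i:ℤ)
        = PowerSeries.coeff i (PowerSeries.mk fun i => a i r) from h2,
      PowerSeries.coeff_mk]
  have hGneg : ∀ r, ∀ j : ℤ, j < 0 → (G r).coeff j = 0 := by
    intro r j hj
    rw [show (G r : LaurentSeries (MvPolynomial (Fin n) κ))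
        = (((PowerSeries.mk fun i => a i r) : PowerSeries (MvPolynomial (Fin n) κ)) :
          LaurentSeries (MvPolynomial (Fin n) κ)) from rfl,
      PowerSeries.coeff_coe, if_pos hj]
  have hGdiff : ∀ r (k : ℕ) (j : ℤ), j < (k : ℤ) →
      (G r - ∑ i ∈ Finset.range k, HahnSeries.single (i:ℤ) (a i r)).coeff j = 0 := by
    intro r k j hj
    rw [HahnSeries.coeff_sub, sum_coeff]
    by_cases hneg : j < 0
    · rw [hGneg r j hneg, Finset.sum_eq_zero, sub_zero]
      intro i _
      rw [HahnSeries.coeff_single, if_neg (by omega)]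
    · push_neg at hneg
      obtain ⟨jn, rfl⟩ : ∃ jn : ℕ, j = (jn : ℤ) := ⟨j.toNat, by omega⟩
      rw [hGcoeff]
      have hjk : jn ∈ Finset.range k := Finset.mem_range.mpr (by omega)
      rw [Finset.sum_eq_single jn
        (fun i _ hi => by
          rw [HahnSeries.coeff_single, if_neg (fun h => hi (by exact_mod_cast h.symm))])
        (fun h => absurd hjk h), HahnSeries.coeff_single_same, sub_self]
  have hfinal : f = ∑ r ∈ rs, G r * r := by
    refine HahnSeries.ext (funext fun mI => ?_)
    rw [sum_coeff]
    by_cases hm : mI < 0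
    · rw [hnn _ hm]
      symm
      refine Finset.sum_eq_zero fun r hr => ?_
      exact mul_coeff_eq_zero (k := 0) (l := 0) (fun j hj => hGneg r j hj)
        (fun j hj => hrsnn r hr j hj) (by omega)
    · push_neg at hm
      set k := mI.toNat + 1 with hk
      have hmk : mI < (k : ℤ) := by omega
      have htail : (HahnSeries.single (k:ℤ) (1 : MvPolynomial (Fin n) κ) *
          (seq k).1).coeff mI = 0 := by
        rw [shift_coeff]
        exact (seq k).2.2 _ (by omega)
      have hsplit : ∀ r, G r * r
          = (∑ i ∈ Finset.range k, HahnSeries.single (i:ℤ) (a i r)) * r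
            + (G r - ∑ i ∈ Finset.range k, HahnSeries.single (i:ℤ) (a i r)) * r := by
        intro r; ring
      calc f.coeff mI
          = ((∑ r ∈ rs, (∑ i ∈ Finset.range k, HahnSeries.single (i : ℤ) (a i r)) * r)
            + HahnSeries.single (k : ℤ) 1 * (seq k).1).coeff mI := by rw [← htel k]
        _ = (∑ r ∈ rs, (∑ i ∈ Finset.range k, HahnSeries.single (i : ℤ) (a i r)) * r).coeff mI
            := by rw [HahnSeries.coeff_add, htail, add_zero]
        _ = ∑ r ∈ rs, ((∑ i ∈ Finset.range k, HahnSeries.single (i : ℤ) (a i r)) * r).coeff mI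
            := sum_coeff _ _ _
        _ = ∑ r ∈ rs, (G r * r).coeff mI := by
            refine Finset.sum_congr rfl fun r hr => ?_
            rw [hsplit r, HahnSeries.coeff_add,
              mul_coeff_eq_zero (k := (k:ℤ)) (l := 0) (fun j hj => hGdiff r k j hj)
                (fun j hj => hrsnn r hr j hj) (by omega), add_zero]
  rw [hfinal]
  exact Ideal.sum_mem _ fun r hr => Ideal.mul_mem_left _ _ (Ideal.subset_span hr)

end Seq

section Main
variable {κ : Type} [Field κ] {n : ℕ}

lemma groebner_spans {I : Ideal (LaurentPolyRing κ n)} {rs : Finset (LaurentPolyRing κ n)}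
    (h : IsGroebnerBasis I rs) : Ideal.span (rs : Set (LaurentPolyRing κ n)) = I := by
  obtain ⟨hrs, hGB⟩ := h
  apply le_antisymm
  · rw [Ideal.span_le]; intro r hr; exact (hrs r hr).2.1
  · intro f hfI
    by_cases hf0 : f = 0
    · rw [hf0]; exact zero_mem _
    · set sh := -(min f.order 0) with hsh
      set g := HahnSeries.single sh (1 : MvPolynomial (Fin n) κ) * f with hg
      have hgI : g ∈ I := I.mul_mem_left _ hfI
      have hgnn : Nn g := by
        intro j hj
        rw [hg, shift_coeff]
        apply HahnSeries.coeff_eq_zero_of_lt_order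
        have h1 : min f.order 0 ≤ f.order := min_le_left _ _
        have h2 : sh + min f.order 0 = 0 := by rw [hsh]; ring
        omega
      have hgspan := mem_span_of_nn (fun r hr => nn_of_order_eq_zero (hrs r hr).2.2)
        (reduction hrs hGB) hgI hgnn
      have hf : HahnSeries.single (-sh) 1 * g = f := by
        rw [hg, hsh, neg_neg]
        exact shift_cancel _ f
      rw [← hf]
      exact Ideal.mul_mem_left _ _ hgspan

lemma groebner_exists (I : Ideal (LaurentPolyRing κ n)) :
    ∃ rs : Finset (LaurentPolyRing κ n), IsGroebnerBasis I rs := by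
  classical
  set S : Set (MvPolynomial (Fin n) κ) := leadPoly '' {f : LaurentPolyRing κ n | f ∈ I ∧ f ≠ 0}
    with hS
  have hfg : (Ideal.span S).FG := IsNoetherian.noetherian _
  obtain ⟨Gen, hGen⟩ := hfg
  have hsub : ∀ g ∈ Gen, ∃ T : Finset (MvPolynomial (Fin n) κ),
      ↑T ⊆ S ∧ g ∈ Ideal.span (T : Set (MvPolynomial (Fin n) κ)) := by
    intro g hg
    have hmem : g ∈ Ideal.span S := by
      rw [← hGen]; exact Ideal.subset_span hg
    exact Submodule.mem_span_finite_of_mem_span hmem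
  choose T hT1 hT2 using hsub
  set TT : Finset (MvPolynomial (Fin n) κ) := Gen.attach.biUnion (fun g => T g.1 g.2) with hTT
  have hTTsub : (TT : Set (MvPolynomial (Fin n) κ)) ⊆ S := by
    intro p hp
    obtain ⟨g, _, hpg⟩ := Finset.mem_biUnion.mp (Finset.mem_coe.mp hp)
    exact hT1 g.1 g.2 hpg
  have hTTspan : Ideal.span (TT : Set (MvPolynomial (Fin n) κ)) = Ideal.span S := by
    refine le_antisymm (Ideal.span_mono hTTsub) ?_
    rw [← hGen, Ideal.span_le]
    intro g hg
    refine Ideal.span_mono ?_ (hT2 g hg)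
    intro p hp
    exact Finset.mem_coe.mpr (Finset.mem_biUnion.mpr ⟨⟨g, hg⟩, Finset.mem_attach _ _, hp⟩)
  have hw : ∀ p ∈ S, ∃ f : LaurentPolyRing κ n, (f ∈ I ∧ f ≠ 0) ∧ leadPoly f = p :=
    fun p hp => hp
  let w : MvPolynomial (Fin n) κ → LaurentPolyRing κ n := fun p =>
    if hp : p ∈ S then
      HahnSeries.single (-(hw p hp).choose.order) 1 * (hw p hp).choose
    else 1
  have hwprop : ∀ p ∈ S, w p ≠ 0 ∧ w p ∈ I ∧ (w p).order = 0 ∧ lead (w p) = HahnSeries.C p := by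
    intro p hp
    obtain ⟨⟨hfI, hfne⟩, hlp⟩ := (hw p hp).choose_spec
    set f := (hw p hp).choose with hfdef
    have hwp : w p = HahnSeries.single (-f.order) 1 * f := dif_pos hp
    have hne : w p ≠ 0 := by
      rw [hwp]; exact mul_ne_zero (HahnSeries.single_ne_zero one_ne_zero) hfne
    have hord : (w p).order = 0 := by
      rw [hwp, HahnSeries.order_mul (HahnSeries.single_ne_zero one_ne_zero) hfne,
        HahnSeries.order_single one_ne_zero, neg_add_cancel]
    have hco : (w p).coeff 0 = f.coeff f.order := by
      rw [hwp, show (0:ℤ) = f.order + -f.order by ring, HahnSeries.coeff_single_mul_add, one_mul]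
    have hlead : lead (w p) = HahnSeries.C p := by
      rw [lead_eq_C hord]
      congr 1
      rw [leadPoly, hord, hco]
      exact hlp
    exact ⟨hne, hwp ▸ I.mul_mem_left _ hfI, hord, hlead⟩
  refine ⟨TT.image w, ?_, ?_⟩
  · intro r hr
    obtain ⟨p, hp, rfl⟩ := Finset.mem_image.mp hr
    obtain ⟨h1, h2, h3, _⟩ := hwprop p (hTTsub hp)
    exact ⟨h1, h2, h3⟩
  · intro f hfI hfne
    have h1 : leadPoly f ∈ Ideal.span S := Ideal.subset_span ⟨f, ⟨hfI, hfne⟩, rfl⟩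
    rw [← hTTspan] at h1
    have h2 : HahnSeries.C (leadPoly f) ∈
        Ideal.span ((HahnSeries.C : MvPolynomial (Fin n) κ →+* LaurentPolyRing κ n) ''
          (TT : Set (MvPolynomial (Fin n) κ))) := by
      have h6 := Ideal.mem_map_of_mem
        (HahnSeries.C : MvPolynomial (Fin n) κ →+* LaurentPolyRing κ n) h1
      rwa [Ideal.map_span] at h6
    have h3 : ((HahnSeries.C : MvPolynomial (Fin n) κ →+* LaurentPolyRing κ n) ''
        (TT : Set (MvPolynomial (Fin n) κ)))
        ⊆ lead '' ((TT.image w : Finset (LaurentPolyRing κ n)) : Set (LaurentPolyRing κ n)) := by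
      rintro x ⟨p, hp, rfl⟩
      refine ⟨w p, ?_, (hwprop p (hTTsub hp)).2.2.2⟩
      exact Finset.mem_coe.mpr (Finset.mem_image_of_mem w hp)
    have h4 := Ideal.span_mono h3 h2
    have h5 : lead f = HahnSeries.single f.order 1 * HahnSeries.C (leadPoly f) := by
      rw [lead_eq, HahnSeries.C_apply, HahnSeries.single_mul_single, add_zero, one_mul]
    rw [h5]
    exact Ideal.mul_mem_left _ _ h4

end Main

/-- Every ideal of `R_κ = κ[u₁,…,u_n]((S))` admits a Gröbner basis, and any Gröbner basis
of an ideal generates that ideal. -/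
theorem groebnerBasis_exists_and_spans (κ : Type) [Field κ] (n : ℕ) (hn : 1 ≤ n) :
    (∀ I : Ideal (LaurentPolyRing κ n), ∃ rs : Finset (LaurentPolyRing κ n),
        IsGroebnerBasis I rs) ∧
    (∀ (I : Ideal (LaurentPolyRing κ n)) (rs : Finset (LaurentPolyRing κ n)),
        IsGroebnerBasis I rs → Ideal.span (rs : Set (LaurentPolyRing κ n)) = I) := by
  exact ⟨fun I => groebner_exists I, fun I rs h => groebner_spans h⟩
end

section
/- Let I be an ideal of R_κ = κ[u₁,…,u_n]((S)) and let {r₁,…,r_m} be a Gröbner basis of I. Then for every f ∈ R_κ there exist g₁, …, g_m, f' ∈ R_κ such that f = g₁r₁ + ⋯ + g_m r_m + f', no term of f' is divisible by any lead(r_h), and for every h with g_h ≠ 0 one has lead(g_h r_h) ⪯ lead(f) in the term order. -/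
open scoped Classical

/-- The key by which leading terms are compared: the monomial
`u₁^{i₁}⋯u_n^{i_n} S^j` of the leading term corresponds to the tuple
`(−j, i₁, …, i_n)` ordered lexicographically. -/
noncomputable def leadKey {κ : Type} [Field κ] {n : ℕ}
    (f : LaurentPolyRing κ n) : Lex (ℤ × Lex (Fin n →₀ ℕ)) :=
  toLex (-(f.order), toLex (lexLeadExp (f.coeff f.order)))

/-- `S`-free divisibility of terms: the term `c·u₁^{i₁}⋯u_n^{i_n}S^j` (a nonzero
coefficient of exponent `d = (i₁,…,i_n)` in the coefficient of `S^j`) is divisible by a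
term `c'·u^{d'}·S^0` iff `d' ≤ d` componentwise.  `NoTermDivisibleBy f' r` says that no
term of `f'` is divisible by the leading term `lead r` of `r`. -/
def NoTermDivisibleBy {κ : Type} [Field κ] {n : ℕ}
    (f' r : LaurentPolyRing κ n) : Prop :=
  ∀ (j : ℤ), ∀ d ∈ (f'.coeff j).support, ¬ lexLeadExp (r.coeff r.order) ≤ d

namespace GBAux

variable {κ : Type} [Field κ] {n : ℕ}

local notation "A" => MvPolynomial (Fin n) κ

theorem lexLeadExp_mem {P : A} (h : P ≠ 0) : lexLeadExp P ∈ P.support := by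
  have hs : (P.support.image (toLex : (Fin n →₀ ℕ) → Lex (Fin n →₀ ℕ))).Nonempty :=
    Finset.Nonempty.image (by rwa [Finset.nonempty_iff_ne_empty, Ne,
      MvPolynomial.support_eq_empty]) _
  obtain ⟨b, hb⟩ := Finset.max_of_nonempty hs
  have hbm := Finset.mem_of_max hb
  obtain ⟨d, hd, rfl⟩ := Finset.mem_image.mp hbm
  simpa [lexLeadExp, hb] using hd

theorem le_lexLeadExp {P : A} {d : Fin n →₀ ℕ} (hd : d ∈ P.support) :
    toLex d ≤ toLex (lexLeadExp P) := by
  have hP : P ≠ 0 := fun h => by simp [h] at hd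
  have hs : (P.support.image (toLex : (Fin n →₀ ℕ) → Lex (Fin n →₀ ℕ))).Nonempty :=
    Finset.Nonempty.image (by rwa [Finset.nonempty_iff_ne_empty, Ne,
      MvPolynomial.support_eq_empty]) _
  obtain ⟨b, hb⟩ := Finset.max_of_nonempty hs
  have hle := Finset.le_max (Finset.mem_image_of_mem (toLex : (Fin n →₀ ℕ) → Lex (Fin n →₀ ℕ)) hd)
  rw [hb, WithBot.coe_le_coe] at hle
  have hb2 : toLex (lexLeadExp P) = b := by simp [lexLeadExp, hb]
  rw [hb2]
  exact hle

/-- `Bnd P M` means every exponent of `P` is at most `M` in the lex order. -/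
def Bnd (P : A) (M : Lex (Fin n →₀ ℕ)) : Prop :=
  ∀ d ∈ P.support, toLex d ≤ M

theorem bnd_lexLeadExp (P : A) : Bnd P (toLex (lexLeadExp P)) := fun _ hd => le_lexLeadExp hd

theorem lexLeadExp_le_of_bnd {P : A} {M} (h : P ≠ 0) (hb : Bnd P M) :
    toLex (lexLeadExp P) ≤ M := hb _ (lexLeadExp_mem h)

theorem lexLeadExp_eq_of {P : A} {e : Fin n →₀ ℕ} (hc : P.coeff e ≠ 0)
    (hb : Bnd P (toLex e)) : lexLeadExp P = e := by
  have hP : P ≠ 0 := fun h => by simp [h] at hc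
  have h1 := lexLeadExp_le_of_bnd hP hb
  have h2 := le_lexLeadExp (MvPolynomial.mem_support_iff.mpr hc)
  exact toLex.injective (le_antisymm h1 h2)

theorem lexLeadExp_monomial {d : Fin n →₀ ℕ} {c : κ} (hc : c ≠ 0) :
    lexLeadExp (MvPolynomial.monomial d c : A) = d := by
  apply lexLeadExp_eq_of
  · simpa [MvPolynomial.coeff_monomial] using hc
  · intro e he
    rw [MvPolynomial.support_monomial, if_neg hc] at he
    simp_all

theorem Bnd.add {P Q : A} {M} (hP : Bnd P M) (hQ : Bnd Q M) : Bnd (P + Q) M := by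
  intro d hd
  rcases Finset.mem_union.mp (MvPolynomial.support_add hd) with h | h
  · exact hP d h
  · exact hQ d h

theorem Bnd.neg {P : A} {M} (hP : Bnd P M) : Bnd (-P) M := by
  intro d hd
  exact hP d (by simpa using hd)

theorem Bnd.sub {P Q : A} {M} (hP : Bnd P M) (hQ : Bnd Q M) : Bnd (P - Q) M := by
  rw [sub_eq_add_neg]; exact hP.add hQ.neg

theorem toLex_add' (a b : Fin n →₀ ℕ) :
    toLex (a + b) = toLex a + toLex b := rfl

theorem Bnd.mul {P Q : A} {M N} (hP : Bnd P M) (hQ : Bnd Q N) : Bnd (P * Q) (M + N) := by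
  intro d hd
  have := MvPolynomial.support_mul P Q hd
  rw [Finset.mem_add] at this
  obtain ⟨a, ha, b, hb, rfl⟩ := this
  rw [toLex_add']
  exact add_le_add (hP a ha) (hQ b hb)

theorem Bnd.monomial {d : Fin n →₀ ℕ} {c : κ} {M} (h : toLex d ≤ M) :
    Bnd (MvPolynomial.monomial d c : A) M := by
  intro e he
  rcases eq_or_ne c 0 with rfl | hc
  · simp [MvPolynomial.support_monomial] at he
  · rw [MvPolynomial.support_monomial, if_neg hc, Finset.mem_singleton] at he
    subst he; exact h


variable {m : ℕ}

theorem mv_div_exists (q : Fin m → A) (hq : ∀ h, q h ≠ 0) (p : A) :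
    ∃ aρ : (Fin m → A) × A,
      p = (∑ h, aρ.1 h * q h) + aρ.2 ∧
      (∀ d ∈ aρ.2.support, ∀ h, ¬ lexLeadExp (q h) ≤ d) ∧
      (∀ h, ∀ d ∈ (aρ.1 h).support, toLex (d + lexLeadExp (q h)) ≤ toLex (lexLeadExp p)) := by
  suffices H : ∀ M : Lex (Fin n →₀ ℕ), ∀ p : A, toLex (lexLeadExp p) ≤ M →
      ∃ aρ : (Fin m → A) × A,
      p = (∑ h, aρ.1 h * q h) + aρ.2 ∧
      (∀ d ∈ aρ.2.support, ∀ h, ¬ lexLeadExp (q h) ≤ d) ∧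
      (∀ h, ∀ d ∈ (aρ.1 h).support, toLex (d + lexLeadExp (q h)) ≤ toLex (lexLeadExp p)) by
    exact H _ p le_rfl
  intro M
  induction M using WellFoundedLT.induction with
  | _ M IH =>
  intro p hpM
  by_cases hp0 : p = 0
  · refine ⟨(0, 0), by simp [hp0], by simp, by simp⟩
  set L := lexLeadExp p with hLdef
  have hc : p.coeff L ≠ 0 := MvPolynomial.mem_support_iff.mp (lexLeadExp_mem hp0)
  by_cases hdvd : ∃ h, lexLeadExp (q h) ≤ L
  · obtain ⟨h₀, hle⟩ := hdvd
    set Dq := lexLeadExp (q h₀) with hDq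
    have hlc : (q h₀).coeff Dq ≠ 0 := MvPolynomial.mem_support_iff.mp (lexLeadExp_mem (hq h₀))
    set t : A := MvPolynomial.monomial (L - Dq) (p.coeff L * ((q h₀).coeff Dq)⁻¹) with ht
    set p₁ := p - t * q h₀ with hp₁
    have hsub : (L - Dq) + Dq = L := tsub_add_cancel_of_le hle
    have hco : (t * q h₀).coeff L = p.coeff L := by
      rw [ht]
      have h2 := MvPolynomial.coeff_monomial_mul Dq (L - Dq)
        (p.coeff L * ((q h₀).coeff Dq)⁻¹) (q h₀)
      rw [hsub] at h2
      rw [h2]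
      field_simp
    have htB : Bnd t (toLex (L - Dq)) := Bnd.monomial le_rfl
    have htqB : Bnd (t * q h₀) (toLex L) := by
      have := htB.mul (bnd_lexLeadExp (q h₀))
      rwa [← toLex_add', hsub] at this
    have hBp₁ : Bnd p₁ (toLex L) := (bnd_lexLeadExp p).sub htqB
    have hcoeffL : p₁.coeff L = 0 := by
      rw [hp₁, MvPolynomial.coeff_sub, hco, sub_self]
    by_cases hp₁0 : p₁ = 0
    · refine ⟨(fun h => if h = h₀ then t else 0, 0), ?_, by simp, ?_⟩
      · have : (∑ h, (if h = h₀ then t else 0) * q h) = t * q h₀ := by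
          rw [Finset.sum_eq_single h₀] <;> simp +contextual
        rw [this, add_zero]
        have h3 := hp₁0
        rw [hp₁, sub_eq_zero] at h3
        exact h3
      · intro h d hd
        rcases eq_or_ne h h₀ with rfl | hne
        · simp only [if_pos rfl] at hd
          have := htB d hd
          calc toLex (d + Dq) = toLex d + toLex Dq := toLex_add' _ _
            _ ≤ toLex (L - Dq) + toLex Dq := add_le_add_left this _
            _ = toLex ((L - Dq) + Dq) := (toLex_add' _ _).symm
            _ = toLex L := by rw [hsub]
        · simp [if_neg hne] at hd
    · have hlt : toLex (lexLeadExp p₁) < M := by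
        have h1 : toLex (lexLeadExp p₁) ≤ toLex L := lexLeadExp_le_of_bnd hp₁0 hBp₁
        have h2 : toLex (lexLeadExp p₁) ≠ toLex L := by
          intro h
          have := MvPolynomial.mem_support_iff.mp (lexLeadExp_mem hp₁0)
          rw [toLex.injective h] at this
          exact this hcoeffL
        exact lt_of_lt_of_le (lt_of_le_of_ne h1 h2) hpM
      obtain ⟨⟨a₁, ρ₁⟩, heq, hρ, ha⟩ := IH _ hlt p₁ le_rfl
      refine ⟨(fun h => a₁ h + if h = h₀ then t else 0, ρ₁), ?_, hρ, ?_⟩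
      · have hsum : (∑ h, (a₁ h + if h = h₀ then t else 0) * q h)
            = (∑ h, a₁ h * q h) + t * q h₀ := by
          simp only [add_mul, Finset.sum_add_distrib]
          congr 1
          rw [Finset.sum_eq_single h₀] <;> simp +contextual
        rw [hsum]
        have : p₁ = (∑ h, a₁ h * q h) + ρ₁ := heq
        rw [hp₁] at this
        linear_combination this
      · intro h d hd
        rcases Finset.mem_union.mp (MvPolynomial.support_add hd) with h' | h'
        · exact le_trans (ha h d h') (le_trans (lexLeadExp_le_of_bnd hp₁0 hBp₁) le_rfl)
        · rcases eq_or_ne h h₀ with rfl | hne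
          · simp only [if_pos rfl] at h'
            have := htB d h'
            calc toLex (d + Dq) = toLex d + toLex Dq := toLex_add' _ _
              _ ≤ toLex (L - Dq) + toLex Dq := add_le_add_left this _
              _ = toLex L := by rw [← toLex_add', hsub]
          · simp [if_neg hne] at h'
  · push_neg at hdvd
    set lt0 : A := MvPolynomial.monomial L (p.coeff L) with hlt0
    set p₁ := p - lt0 with hp₁
    have hcoeffL : p₁.coeff L = 0 := by
      rw [hp₁, MvPolynomial.coeff_sub, hlt0, MvPolynomial.coeff_monomial, if_pos rfl, sub_self]
    have hBp₁ : Bnd p₁ (toLex L) := (bnd_lexLeadExp p).sub (Bnd.monomial le_rfl)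
    by_cases hp₁0 : p₁ = 0
    · have hplt : p = lt0 := by
        have h3 := hp₁0
        rw [hp₁, sub_eq_zero] at h3
        exact h3
      refine ⟨(0, p), by simp, ?_, by simp⟩
      intro d hd h
      rw [hplt, hlt0, MvPolynomial.support_monomial, if_neg hc, Finset.mem_singleton] at hd
      subst hd
      exact hdvd h
    · have hlt : toLex (lexLeadExp p₁) < M := by
        have h1 : toLex (lexLeadExp p₁) ≤ toLex L := lexLeadExp_le_of_bnd hp₁0 hBp₁
        have h2 : toLex (lexLeadExp p₁) ≠ toLex L := by
          intro h
          have := MvPolynomial.mem_support_iff.mp (lexLeadExp_mem hp₁0)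
          rw [toLex.injective h] at this
          exact this hcoeffL
        exact lt_of_lt_of_le (lt_of_le_of_ne h1 h2) hpM
      obtain ⟨⟨a₁, ρ₁⟩, heq, hρ, ha⟩ := IH _ hlt p₁ le_rfl
      refine ⟨(a₁, ρ₁ + lt0), ?_, ?_, ?_⟩
      · have : p₁ = (∑ h, a₁ h * q h) + ρ₁ := heq
        rw [hp₁] at this
        linear_combination this
      · intro d hd h
        rcases Finset.mem_union.mp (MvPolynomial.support_add hd) with h' | h'
        · exact hρ d h' h
        · rw [MvPolynomial.support_monomial, if_neg hc, Finset.mem_singleton] at h'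
          subst h'
          exact hdvd h
      · intro h d hd
        exact le_trans (ha h d hd) (lexLeadExp_le_of_bnd hp₁0 hBp₁)


/-- Choice function for division. -/
noncomputable def mvDiv (q : Fin m → A) (hq : ∀ h, q h ≠ 0) (p : A) : (Fin m → A) × A :=
  Classical.choose (mv_div_exists q hq p)

theorem mvDiv_spec (q : Fin m → A) (hq : ∀ h, q h ≠ 0) (p : A) :
    p = (∑ h, (mvDiv q hq p).1 h * q h) + (mvDiv q hq p).2 ∧
      (∀ d ∈ (mvDiv q hq p).2.support, ∀ h, ¬ lexLeadExp (q h) ≤ d) ∧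
      (∀ h, ∀ d ∈ ((mvDiv q hq p).1 h).support,
        toLex (d + lexLeadExp (q h)) ≤ toLex (lexLeadExp p)) :=
  Classical.choose_spec (mv_div_exists q hq p)

/-- Level-by-level division of a power series. -/
noncomputable def divSeq (q : Fin m → A) (hq : ∀ h, q h ≠ 0)
    (R : Fin m → PowerSeries A) (F : PowerSeries A) : ℕ → (Fin m → A) × A
  | k => mvDiv q hq (PowerSeries.coeff k F -
      ∑ i ∈ (Finset.range k).attach,
        ∑ h, (divSeq q hq R F i).1 h * PowerSeries.coeff (k - i) (R h))
  decreasing_by exact Finset.mem_range.mp i.2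


theorem divSeq_eq (q : Fin m → A) (hq : ∀ h, q h ≠ 0) (R : Fin m → PowerSeries A)
    (F : PowerSeries A) (k : ℕ) :
    divSeq q hq R F k = mvDiv q hq (PowerSeries.coeff k F -
      ∑ i ∈ Finset.range k,
        ∑ h, (divSeq q hq R F i).1 h * PowerSeries.coeff (k - i) (R h)) := by
  rw [divSeq, ← Finset.sum_attach (Finset.range k)
    (fun i => ∑ h, (divSeq q hq R F i).1 h * PowerSeries.coeff (k - i) (R h))]

/-- The power-series quotients. -/
noncomputable def Gps (q : Fin m → A) (hq : ∀ h, q h ≠ 0) (R : Fin m → PowerSeries A)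
    (F : PowerSeries A) (h : Fin m) : PowerSeries A :=
  PowerSeries.mk fun k => (divSeq q hq R F k).1 h

/-- The power-series remainder. -/
noncomputable def Fps' (q : Fin m → A) (hq : ∀ h, q h ≠ 0) (R : Fin m → PowerSeries A)
    (F : PowerSeries A) : PowerSeries A :=
  PowerSeries.mk fun k => (divSeq q hq R F k).2

theorem ps_eq (q : Fin m → A) (hq : ∀ h, q h ≠ 0) (R : Fin m → PowerSeries A)
    (F : PowerSeries A) (hqR : ∀ h, PowerSeries.coeff 0 (R h) = q h) :
    F = (∑ h, Gps q hq R F h * R h) + Fps' q hq R F := by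
  refine PowerSeries.ext fun k => ?_
  have hspec := (mvDiv_spec q hq (PowerSeries.coeff k F -
      ∑ i ∈ Finset.range k,
        ∑ h, (divSeq q hq R F i).1 h * PowerSeries.coeff (k - i) (R h))).1
  rw [← divSeq_eq q hq R F k] at hspec
  rw [map_add, map_sum]
  simp only [PowerSeries.coeff_mul, Finset.Nat.sum_antidiagonal_eq_sum_range_succ_mk,
    Gps, Fps', PowerSeries.coeff_mk]
  have hsplit : ∀ h : Fin m,
      (∑ i ∈ Finset.range (k + 1),
        (divSeq q hq R F i).1 h * PowerSeries.coeff (k - i) (R h))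
      = (∑ i ∈ Finset.range k,
          (divSeq q hq R F i).1 h * PowerSeries.coeff (k - i) (R h))
        + (divSeq q hq R F k).1 h * q h := by
    intro h
    rw [Finset.sum_range_succ, Nat.sub_self, hqR]
  rw [Finset.sum_congr rfl fun h _ => hsplit h, Finset.sum_add_distrib,
    Finset.sum_comm]
  linear_combination hspec

theorem ps_rem (q : Fin m → A) (hq : ∀ h, q h ≠ 0) (R : Fin m → PowerSeries A)
    (F : PowerSeries A) (k : ℕ) :
    ∀ d ∈ ((divSeq q hq R F k).2).support, ∀ h, ¬ lexLeadExp (q h) ≤ d := by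
  rw [divSeq_eq]
  exact (mvDiv_spec q hq _).2.1

theorem ps_top (q : Fin m → A) (hq : ∀ h, q h ≠ 0) (R : Fin m → PowerSeries A)
    (F : PowerSeries A) :
    ∀ h, ∀ d ∈ ((divSeq q hq R F 0).1 h).support,
      toLex (d + lexLeadExp (q h)) ≤ toLex (lexLeadExp (PowerSeries.coeff 0 F)) := by
  have h0 : divSeq q hq R F 0 = mvDiv q hq (PowerSeries.coeff 0 F) := by
    rw [divSeq_eq]; simp
  rw [h0]
  exact (mvDiv_spec q hq _).2.2


theorem ofPS_coeff_neg (x : PowerSeries A) {j : ℤ} (hj : j < 0) :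
    (HahnSeries.ofPowerSeries ℤ A x).coeff j = 0 := by
  rw [HahnSeries.ofPowerSeries_apply, HahnSeries.embDomain_notin_range]
  intro hmem
  simp only [Set.mem_range, RelEmbedding.coe_mk, Function.Embedding.coeFn_mk] at hmem
  obtain ⟨k, hk⟩ := hmem
  have hk' : ((k : ℤ)) = j := hk
  omega

theorem coeff_order_ne_zero' {R : Type*} [Zero R] {x : HahnSeries ℤ R} (h : x ≠ 0) :
    x.coeff x.order ≠ 0 := by
  rw [← HahnSeries.leadingCoeff_eq]; exact HahnSeries.leadingCoeff_ne_zero.mpr h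

theorem singleMulCoeff (j₀ j : ℤ) (x : HahnSeries ℤ A) :
    (HahnSeries.single j₀ (1 : A) * x).coeff j = x.coeff (j - j₀) := by
  have h := HahnSeries.coeff_single_mul_add (r := (1 : A)) (x := x) (a := j - j₀) (b := j₀)
  rw [sub_add_cancel] at h
  rw [h, one_mul]

end GBAux

/-- Division algorithm: if `r 1, …, r m` is a Gröbner basis of an ideal `I` of
`R_κ = κ[u₁,…,u_n]((S))`, then every `f ∈ R_κ` can be written as
`f = g₁r₁ + ⋯ + g_m r_m + f'` where no term of `f'` is divisible by any `lead (r h)` and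
`lead (g_h · r_h) ⪯ lead f` whenever `g_h ≠ 0`. -/
theorem groebner_division_algorithm {κ : Type} [Field κ] {n : ℕ} (hn : 1 ≤ n)
    (I : Ideal (LaurentPolyRing κ n)) (m : ℕ) (r : Fin m → LaurentPolyRing κ n)
    (hne : ∀ h, r h ≠ 0) (hmem : ∀ h, r h ∈ I) (hord : ∀ h, (r h).order = 0)
    (hlead : ∀ f ∈ I, f ≠ 0 →
      lead f ∈ Ideal.span (Set.range fun h => lead (r h)))
    (f : LaurentPolyRing κ n) :
    ∃ (g : Fin m → LaurentPolyRing κ n) (f' : LaurentPolyRing κ n),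
      f = (∑ h, g h * r h) + f' ∧
      (∀ h, NoTermDivisibleBy f' (r h)) ∧
      (∀ h, g h ≠ 0 → leadKey (g h * r h) ≤ leadKey f) := by
  classical
  by_cases hf : f = 0
  · exact ⟨0, 0, by simp [hf], fun h j d hd => by simp at hd, fun h hg => (hg rfl).elim⟩
  set A := MvPolynomial (Fin n) κ
  set j₀ := f.order with hj₀
  set q : Fin m → A := fun h => (r h).coeff 0 with hqdef
  have hq : ∀ h, q h ≠ 0 := fun h => by
    have := GBAux.coeff_order_ne_zero' (hne h)
    rwa [hord h] at this
  set R : Fin m → PowerSeries A := fun h => (r h).powerSeriesPart with hRdef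
  have hqR : ∀ h, PowerSeries.coeff 0 (R h) = q h := fun h => by
    simp [hRdef, hqdef, LaurentSeries.powerSeriesPart_coeff, hord h]
  set F := f.powerSeriesPart with hFdef
  have hrof : ∀ h, HahnSeries.ofPowerSeries ℤ A (R h) = r h := fun h => by
    have h1 := LaurentSeries.single_order_mul_powerSeriesPart (r h)
    rwa [hord h, HahnSeries.single_zero_one, one_mul] at h1
  set G : Fin m → PowerSeries A := GBAux.Gps q hq R F with hGdef
  set F' := GBAux.Fps' q hq R F with hF'def
  have hFeq : F = (∑ h, G h * R h) + F' := GBAux.ps_eq q hq R F hqR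
  set g : Fin m → LaurentPolyRing κ n :=
    fun h => HahnSeries.single j₀ 1 * HahnSeries.ofPowerSeries ℤ A (G h) with hgdef
  set f' : LaurentPolyRing κ n := HahnSeries.single j₀ 1 * HahnSeries.ofPowerSeries ℤ A F'
    with hf'def
  have hfC : f = HahnSeries.single j₀ 1 * HahnSeries.ofPowerSeries ℤ A F :=
    (LaurentSeries.single_order_mul_powerSeriesPart f).symm
  have hGcoeff : ∀ (x : PowerSeries A) (j : ℤ),
      (HahnSeries.single j₀ (1:A) * HahnSeries.ofPowerSeries ℤ A x).coeff j
        = (HahnSeries.ofPowerSeries ℤ A x).coeff (j - j₀) :=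
    fun x j => GBAux.singleMulCoeff j₀ j _
  refine ⟨g, f', ?_, ?_, ?_⟩
  · rw [hfC, hFeq, map_add, map_sum, mul_add, Finset.mul_sum]
    congr 1
    refine Finset.sum_congr rfl fun h _ => ?_
    rw [map_mul, ← mul_assoc, hrof h]
  · intro h j d hd
    rw [hf'def, hGcoeff] at hd
    rcases lt_or_ge (j - j₀) 0 with hneg | hpos
    · rw [GBAux.ofPS_coeff_neg _ hneg] at hd
      simp at hd
    · obtain ⟨k, hk⟩ : ∃ k : ℕ, (k : ℤ) = j - j₀ := ⟨(j - j₀).toNat, Int.toNat_of_nonneg hpos⟩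
      rw [← hk, HahnSeries.ofPowerSeries_apply_coeff] at hd
      rw [hF'def, GBAux.Fps', PowerSeries.coeff_mk] at hd
      rw [hord h]
      exact GBAux.ps_rem q hq R F k d hd h
  · intro h hgh
    have hgeq : g h = HahnSeries.single j₀ 1 * HahnSeries.ofPowerSeries ℤ A (G h) := rfl
    have hOfG : HahnSeries.ofPowerSeries ℤ A (G h) ≠ 0 := by
      intro h0
      apply hgh
      rw [hgeq, h0, mul_zero]
    have hgcoeff : ∀ j : ℤ, (g h).coeff j
        = (HahnSeries.ofPowerSeries ℤ A (G h)).coeff (j - j₀) := fun j => by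
      rw [hgeq, hGcoeff]
    have hcoeff_lt : ∀ j : ℤ, j < j₀ → (g h).coeff j = 0 := fun j hj => by
      rw [hgcoeff]
      exact GBAux.ofPS_coeff_neg _ (by omega)
    have horder_ge : j₀ ≤ (g h).order := by
      by_contra hlt
      exact GBAux.coeff_order_ne_zero' hgh (hcoeff_lt _ (lt_of_not_ge hlt))
    have horder_mul : (g h * r h).order = (g h).order := by
      rw [HahnSeries.order_mul hgh (hne h), hord h, add_zero]
    rcases eq_or_lt_of_le horder_ge with heq | hlt
    · -- order g h = j₀
      have hc₀ : (g h).coeff j₀ = (GBAux.divSeq q hq R F 0).1 h := by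
        rw [hgcoeff, sub_self]
        rw [show (0 : ℤ) = ((0 : ℕ) : ℤ) from rfl, HahnSeries.ofPowerSeries_apply_coeff]
        rw [hGdef, GBAux.Gps, PowerSeries.coeff_mk]
      have hc₀ne : (g h).coeff j₀ ≠ 0 := by
        have := GBAux.coeff_order_ne_zero' hgh
        rwa [← heq] at this
      have htop : (g h * r h).coeff ((g h * r h).order) = (g h).coeff j₀ * q h := by
        rw [horder_mul, ← heq]
        have h1 := HahnSeries.coeff_mul_order_add_order (g h) (r h)
        rw [← heq, hord h, add_zero] at h1
        rw [h1, HahnSeries.leadingCoeff_eq, HahnSeries.leadingCoeff_eq, ← heq, hord h, hqdef]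
      have hprodne : (g h).coeff j₀ * q h ≠ 0 := mul_ne_zero hc₀ne (hq h)
      have hfc : PowerSeries.coeff 0 F = f.coeff j₀ := by
        rw [hFdef, LaurentSeries.powerSeriesPart_coeff]
        push_cast
        rw [add_zero]
      have hbnd : toLex (lexLeadExp ((g h).coeff j₀ * q h))
          ≤ toLex (lexLeadExp (f.coeff j₀)) := by
        apply GBAux.lexLeadExp_le_of_bnd hprodne
        intro d' hd'
        have hmem := MvPolynomial.support_mul _ _ hd'
        rw [Finset.mem_add] at hmem
        obtain ⟨a, ha, b, hb, rfl⟩ := hmem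
        rw [hc₀] at ha
        calc toLex (a + b) = toLex a + toLex b := GBAux.toLex_add' _ _
          _ ≤ toLex a + toLex (lexLeadExp (q h)) :=
            add_le_add_right (GBAux.le_lexLeadExp hb) _
          _ = toLex (a + lexLeadExp (q h)) := (GBAux.toLex_add' _ _).symm
          _ ≤ toLex (lexLeadExp (PowerSeries.coeff 0 F)) := GBAux.ps_top q hq R F h a ha
          _ = toLex (lexLeadExp (f.coeff j₀)) := by rw [hfc]
      rw [leadKey, leadKey, Prod.Lex.le_iff]
      right
      constructor
      · rw [horder_mul, ← heq, hj₀]; rfl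
      · rw [htop, ← hj₀]
        exact hbnd
    · rw [leadKey, leadKey, Prod.Lex.le_iff]
      left
      simp only [ofLex_toLex, neg_lt_neg_iff]
      rw [horder_mul, ← hj₀]
      exact hlt
end

section
/- Let O be a Cohen ring for κ, let (b₁,…,b_m) be a finite p-basis of κ, and let B₁,…,B_m ∈ O be elements reducing to b₁,…,b_m modulo the maximal ideal. Then there exists a unique ring homomorphism ψ : O → O[[δ₁,…,δ_m]] (formal power series in m variables over O), continuous for the maximal-ideal-adic topologies, such that ψ(B_j) = B_j + δ_j for all j = 1,…,m and, for every g ∈ O, ψ(g) − g lies in the ideal generated by δ₁,…,δ_m. -/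
set_option linter.unusedSectionVars false
set_option linter.unusedTactic false
set_option linter.unnecessarySimpa false
set_option maxHeartbeats 1000000
set_option synthInstance.maxHeartbeats 400000

/-- `b : J → κ` is a `p`-basis of the field `κ` (of characteristic `p`): every element of
`κ` has a unique representation `x = Σ_e a_e^p · ∏_j b_j^{e_j}` over the multi-indices
`e : J →₀ ℕ` with all entries `< p`. -/
def IsPBasis (p : ℕ) {κ : Type} [Field κ] {J : Type} (b : J → κ) : Prop :=
  ∀ x : κ, ∃! a : {e : J →₀ ℕ // ∀ j, e j < p} →₀ κ,
    x = a.sum fun e c => c ^ p * (e : J →₀ ℕ).prod fun j k => b j ^ k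

namespace CohenDef
open MvPowerSeries
variable {m : ℕ} {O : Type} [CommRing O] (p : ℕ)

/-- total degree of a multi-index -/
def deg (d : Fin m →₀ ℕ) : ℕ := d.sum fun _ k => k

lemma deg_apply (d : Fin m →₀ ℕ) : deg d = ∑ j, d j :=
  Finsupp.sum_fintype _ _ (fun _ => rfl)

lemma deg_add (d e : Fin m →₀ ℕ) : deg (d + e) = deg d + deg e := by
  simp [deg_apply, Finset.sum_add_distrib]

lemma deg_eq_zero {d : Fin m →₀ ℕ} (h : deg d = 0) : d = 0 := by
  rw [deg_apply] at h
  ext j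
  exact (Finset.sum_eq_zero_iff.mp h) j (Finset.mem_univ j)

lemma deg_single (j : Fin m) (n : ℕ) : deg (Finsupp.single j n) = n := by
  simp [deg, Finsupp.sum_single_index]

lemma le_deg (d : Fin m →₀ ℕ) (j : Fin m) : d j ≤ deg d := by
  rw [deg_apply]
  exact Finset.single_le_sum (fun _ _ => Nat.zero_le _) (Finset.mem_univ j)

/-- the ideal of series whose coefficients below (total) degree `N` vanish -/
noncomputable def K (N : ℕ) : Ideal (MvPowerSeries (Fin m) O) where
  carrier := {f | ∀ d, deg d < N → coeff (R := O) d f = 0}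
  add_mem' := fun {f} {g} hf hg d hd => by
    simp [map_add, hf d hd, hg d hd]
  zero_mem' := fun d _ => by simp
  smul_mem' := fun c f hf d hd => by
    classical
    rw [smul_eq_mul, coeff_mul]
    refine Finset.sum_eq_zero fun x hx => ?_
    rw [Finset.HasAntidiagonal.mem_antidiagonal] at hx
    have : deg x.2 < N := by
      have := deg_add x.1 x.2
      rw [hx] at this
      omega
    rw [hf x.2 this, mul_zero]

lemma mem_K {N : ℕ} {f : MvPowerSeries (Fin m) O} :
    f ∈ (K N : Ideal (MvPowerSeries (Fin m) O)) ↔ ∀ d, deg d < N → coeff (R := O) d f = 0 :=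
  Iff.rfl

/-- the ideal generated by the variables -/
noncomputable def J : Ideal (MvPowerSeries (Fin m) O) :=
  Ideal.span (Set.range (X : Fin m → MvPowerSeries (Fin m) O))

lemma X_mem_J (j : Fin m) : (X j : MvPowerSeries (Fin m) O) ∈ (J : Ideal (MvPowerSeries (Fin m) O)) :=
  Ideal.subset_span ⟨j, rfl⟩

lemma coeff_X_mul' (j : Fin m) (g : MvPowerSeries (Fin m) O) (d : Fin m →₀ ℕ) :
    coeff (R := O) d (X j * g) = if Finsupp.single j 1 ≤ d then coeff (R := O) (d - Finsupp.single j 1) g else 0 := by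
  classical
  rw [X, coeff_monomial_mul]
  simp

lemma K_le_J_pow (N : ℕ) : (K N : Ideal (MvPowerSeries (Fin m) O)) ≤ J ^ N := by
  classical
  induction N with
  | zero => intro f _; simp
  | succ n ih =>
    intro f hf
    rw [mem_K] at hf
    set g : Fin m → MvPowerSeries (Fin m) O := fun j e =>
      if (∀ i, i < j → e i = 0) then coeff (R := O) (e + Finsupp.single j 1) f else 0 with hg
    have hcg : ∀ j e, coeff (R := O) e (g j) =
        if (∀ i, i < j → e i = 0) then coeff (R := O) (e + Finsupp.single j 1) f else 0 := fun j e => rfl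
    have hsplit : f = ∑ j, X j * g j := by
      refine MvPowerSeries.ext fun d => ?_
      rw [map_sum]
      by_cases hd : d = 0
      · subst hd
        rw [hf 0 (by simp [deg])]
        symm
        refine Finset.sum_eq_zero fun j _ => ?_
        rw [coeff_X_mul', if_neg]
        intro hle
        have := (Finsupp.single_le_iff).mp hle
        simp at this
      · have hsupp : d.support.Nonempty := by
          rwa [Finsupp.support_nonempty_iff]
        set j0 := d.support.min' hsupp with hj0
        have hj0mem : j0 ∈ d.support := d.support.min'_mem hsupp
        have hdj0 : d j0 ≠ 0 := Finsupp.mem_support_iff.mp hj0mem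
        rw [Finset.sum_eq_single j0]
        · rw [coeff_X_mul', if_pos (Finsupp.single_le_iff.mpr (by omega)), hcg, if_pos,
            tsub_add_cancel_of_le (Finsupp.single_le_iff.mpr (by omega))]
          intro i hi
          rw [Finsupp.tsub_apply]
          have : i ∉ d.support := fun hmem => absurd (d.support.min'_le i hmem) (by omega)
          have := Finsupp.notMem_support_iff.mp this
          omega
        · intro j _ hj
          rw [coeff_X_mul']
          split
          · next hle =>
            rw [hcg, if_neg]
            intro hall
            have hdj : 1 ≤ d j := Finsupp.single_le_iff.mp hle
            have hjs : j ∈ d.support := Finsupp.mem_support_iff.mpr (by omega)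
            have hlt : j0 < j := lt_of_le_of_ne (d.support.min'_le j hjs) (by simpa [eq_comm] using hj)
            have := hall j0 hlt
            rw [Finsupp.tsub_apply] at this
            rw [Finsupp.single_apply, if_neg (by omega)] at this
            omega
          · rfl
        · intro h
          exact absurd (Finset.mem_univ j0) h
    rw [hsplit, pow_succ']
    refine Ideal.sum_mem _ fun j _ => ?_
    refine Ideal.mul_mem_mul (Ideal.subset_span ⟨j, rfl⟩) (ih ?_)
    rw [mem_K]
    intro e he
    rw [hcg]
    split
    · refine hf _ ?_
      rw [deg_add, deg_single]
      omega
    · rfl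

/-- the "maximal-type" ideal `(p, X_1, ..., X_m)` -/
noncomputable def MM : Ideal (MvPowerSeries (Fin m) O) :=
  Ideal.span (insert ((p : MvPowerSeries (Fin m) O)) (Set.range (X : Fin m → MvPowerSeries (Fin m) O)))

lemma J_le_MM : (J : Ideal (MvPowerSeries (Fin m) O)) ≤ MM p :=
  Ideal.span_mono (Set.subset_insert _ _)

lemma p_mem_MM : ((p : MvPowerSeries (Fin m) O)) ∈ (MM p : Ideal (MvPowerSeries (Fin m) O)) :=
  Ideal.subset_span (Set.mem_insert _ _)

lemma X_mem_MM (j : Fin m) : (X j : MvPowerSeries (Fin m) O) ∈ (MM p : Ideal (MvPowerSeries (Fin m) O)) :=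
  Ideal.subset_span (Set.mem_insert_of_mem _ ⟨j, rfl⟩)

/-- the ideal of series whose `d`-th coefficient is divisible by `p^(N - deg d)` -/
noncomputable def KP (N : ℕ) : Ideal (MvPowerSeries (Fin m) O) where
  carrier := {f | ∀ d, (p : O) ^ (N - deg d) ∣ coeff (R := O) d f}
  add_mem' := fun {f} {g} hf hg d => by
    rw [map_add]; exact dvd_add (hf d) (hg d)
  zero_mem' := fun d => by simp
  smul_mem' := fun c f hf d => by
    classical
    rw [smul_eq_mul, coeff_mul]
    refine Finset.dvd_sum fun x hx => ?_
    rw [Finset.HasAntidiagonal.mem_antidiagonal] at hx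
    have hdd : deg x.1 + deg x.2 = deg d := by rw [← deg_add, hx]
    exact Dvd.dvd.mul_left (dvd_trans (pow_dvd_pow _ (by omega)) (hf x.2)) _

lemma mem_KP {N : ℕ} {f : MvPowerSeries (Fin m) O} :
    f ∈ (KP p N : Ideal (MvPowerSeries (Fin m) O)) ↔ ∀ d, (p : O) ^ (N - deg d) ∣ coeff (R := O) d f :=
  Iff.rfl

lemma KP_mul {a b : ℕ} {f g : MvPowerSeries (Fin m) O}
    (hf : f ∈ (KP p a : Ideal (MvPowerSeries (Fin m) O)))
    (hg : g ∈ (KP p b : Ideal (MvPowerSeries (Fin m) O))) :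
    f * g ∈ (KP p (a + b) : Ideal (MvPowerSeries (Fin m) O)) := by
  classical
  intro d
  rw [coeff_mul]
  refine Finset.dvd_sum fun x hx => ?_
  rw [Finset.HasAntidiagonal.mem_antidiagonal] at hx
  have hdd : deg x.1 + deg x.2 = deg d := by rw [← deg_add, hx]
  have h1 := hf x.1
  have h2 := hg x.2
  have : (p:O) ^ ((a + b) - deg d) ∣ (p:O)^(a - deg x.1) * (p:O)^(b - deg x.2) := by
    rw [← pow_add]
    exact pow_dvd_pow _ (by omega)
  exact dvd_trans this (mul_dvd_mul h1 h2)

lemma MM_le_KP1 : (MM p : Ideal (MvPowerSeries (Fin m) O)) ≤ KP p 1 := by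
  classical
  rw [MM, Ideal.span_le]
  rintro x hx
  rcases Set.mem_insert_iff.mp hx with rfl | ⟨j, rfl⟩
  · intro d
    rw [show ((p : MvPowerSeries (Fin m) O)) = C (σ := Fin m) (R := O) ((p:O)) by rw [map_natCast], coeff_C]
    split
    · next h =>
      subst h
      rw [show deg (0 : Fin m →₀ ℕ) = 0 by simp [deg]]
      simp
    · exact dvd_zero _
  · intro d
    rw [coeff_X]
    split
    · next h =>
      subst h
      rw [deg_single]
      simp
    · exact dvd_zero _

lemma MM_pow_le_KP (N : ℕ) : (MM p ^ N : Ideal (MvPowerSeries (Fin m) O)) ≤ KP p N := by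
  induction N with
  | zero => intro f _; intro d; simp
  | succ n ih =>
    rw [pow_succ]
    refine Ideal.mul_le.mpr fun f hf g hg => ?_
    exact KP_mul p (ih hf) (MM_le_KP1 p hg)

lemma coeff_dvd_of_mem_MM_pow {N : ℕ} {f : MvPowerSeries (Fin m) O}
    (hf : f ∈ (MM p ^ N : Ideal (MvPowerSeries (Fin m) O))) (d : Fin m →₀ ℕ) :
    (p : O) ^ (N - deg d) ∣ coeff (R := O) d f :=
  MM_pow_le_KP p N hf d

lemma monomial_one_eq_prod (d : Fin m →₀ ℕ) :
    (monomial (R := O) d (1 : O) : MvPowerSeries (Fin m) O) = ∏ j, X j ^ d j := by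
  classical
  have key : ∀ (t : Finset (Fin m)), (∏ j ∈ t, (X j : MvPowerSeries (Fin m) O) ^ d j)
      = monomial (R := O) (∑ j ∈ t, Finsupp.single j (d j)) 1 := by
    intro t
    induction t using Finset.induction with
    | empty => simp
    | insert _ _ hnotmem ih =>
      rw [Finset.prod_insert hnotmem, Finset.sum_insert hnotmem, ih, X_pow_eq,
        monomial_mul_monomial, one_mul]
  have hsum : (∑ j, Finsupp.single j (d j)) = d := by
    have := Finsupp.sum_single d
    rw [Finsupp.sum_fintype _ _ (fun j => Finsupp.single_zero j)] at this
    exact this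
  rw [key Finset.univ, hsum]

lemma monomial_one_mem (d : Fin m →₀ ℕ) :
    (monomial (R := O) d (1 : O) : MvPowerSeries (Fin m) O) ∈ (MM p ^ (deg d) : Ideal (MvPowerSeries (Fin m) O)) := by
  rw [monomial_one_eq_prod, deg_apply, ← Finset.prod_pow_eq_pow_sum]
  exact Ideal.prod_mem_prod fun j _ => Ideal.pow_mem_pow (X_mem_MM p j) _

/-- converse: coefficient divisibility implies membership in `MM^N` -/
lemma mem_MM_pow_of_coeff_dvd {N : ℕ} {f : MvPowerSeries (Fin m) O}
    (h : ∀ d, (p : O) ^ (N - deg d) ∣ coeff (R := O) d f) :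
    f ∈ (MM p ^ N : Ideal (MvPowerSeries (Fin m) O)) := by
  classical
  have hfin : {d : Fin m →₀ ℕ | deg d < N}.Finite := by
    have h2 : {v : Fin m → ℕ | ∀ j, v j < N}.Finite := by
      have : {v : Fin m → ℕ | ∀ j, v j < N} = Set.pi Set.univ (fun _ => Set.Iio N) := by
        ext v; simp [Set.mem_pi]
      rw [this]
      exact Set.Finite.pi fun _ => Set.finite_Iio N
    refine Set.Finite.subset (Set.Finite.preimage (f := fun d : Fin m →₀ ℕ => (d : Fin m → ℕ))
      (Set.injOn_of_injective (DFunLike.coe_injective)) h2) ?_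
    intro d hd j
    exact lt_of_le_of_lt (le_deg d j) hd
  set T := hfin.toFinset with hT
  set head : MvPowerSeries (Fin m) O := ∑ d ∈ T, monomial (R := O) d (coeff (R := O) d f) with hhead
  have hheadmem : head ∈ (MM p ^ N : Ideal (MvPowerSeries (Fin m) O)) := by
    refine Ideal.sum_mem _ fun d hd => ?_
    have hdlt : deg d < N := by
      rw [hT, Set.Finite.mem_toFinset] at hd
      exact hd
    obtain ⟨u, hu⟩ := h d
    have : (monomial (R := O) d (coeff (R := O) d f) : MvPowerSeries (Fin m) O)
        = (p : MvPowerSeries (Fin m) O) ^ (N - deg d) * (C (σ := Fin m) (R := O) u * monomial (R := O) d 1) := by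
      rw [hu]
      rw [show (C (σ := Fin m) (R := O) u * monomial (R := O) d (1:O)) = monomial (R := O) d u by
        rw [← monomial_zero_eq_C_apply, monomial_mul_monomial, zero_add, mul_one]]
      rw [show ((p : MvPowerSeries (Fin m) O)) ^ (N - deg d)
          = C (σ := Fin m) (R := O) ((p:O) ^ (N - deg d)) by rw [map_pow, map_natCast]]
      rw [← monomial_zero_eq_C_apply, monomial_mul_monomial, zero_add]
    have hpowsplit : (MM p ^ N : Ideal (MvPowerSeries (Fin m) O))
        = MM p ^ (N - deg d) * MM p ^ deg d := by
      rw [← pow_add]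
      congr 1
      omega
    rw [this, hpowsplit]
    exact Ideal.mul_mem_mul (Ideal.pow_mem_pow (p_mem_MM p) _)
      (Ideal.mul_mem_left _ _ (monomial_one_mem p d))
  have htail : f - head ∈ (K N : Ideal (MvPowerSeries (Fin m) O)) := by
    rw [mem_K]
    intro d hd
    rw [map_sub, hhead, map_sum]
    have : ∀ d' ∈ T, coeff (R := O) d (monomial (R := O) d' (coeff (R := O) d' f)) = if d = d' then coeff (R := O) d' f else 0 :=
      fun d' _ => coeff_monomial d d' _
    rw [Finset.sum_congr rfl this, Finset.sum_ite_eq T d (fun d' => coeff (R := O) d' f),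
      if_pos (by rw [hT, Set.Finite.mem_toFinset]; exact hd), sub_self]
  have : f = head + (f - head) := by ring
  rw [this]
  exact Ideal.add_mem _ hheadmem
    (((K_le_J_pow N).trans (Ideal.pow_right_mono (J_le_MM p) N)) htail)

/-- separatedness -/
lemma eq_zero_of_mem_MM_pow {f : MvPowerSeries (Fin m) O}
    (hsep : ∀ x : O, (∀ k, (p : O) ^ k ∣ x) → x = 0)
    (h : ∀ N, f ∈ (MM p ^ N : Ideal (MvPowerSeries (Fin m) O))) : f = 0 := by
  refine MvPowerSeries.ext fun d => ?_
  rw [map_zero]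
  refine hsep _ fun k => ?_
  have := coeff_dvd_of_mem_MM_pow p (h (k + deg d)) d
  rwa [Nat.add_sub_cancel] at this

end CohenDef

namespace CohenSEC

variable {O : Type} [CommRing O] {m : ℕ}
variable {R : Type} [CommRing R] (ρ : R →+* O)

section defs
variable (hρ : Function.Surjective ρ) (p : ℕ)

/-- a set-theoretic section of `ρ` -/
noncomputable def lft (g : O) : R := Function.surjInv hρ g

lemma ρ_lft (g : O) : ρ (lft ρ hρ g) = g := Function.surjInv_eq hρ g

/-- the multiplicative lift of `p`-th-power type -/
noncomputable def mm (g : O) : R := lft ρ hρ g ^ p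

/-- the additive lift of `p`-divisible type -/
noncomputable def ii (z : O) : R := (p : R) * lft ρ hρ z

/-- products of the `B j` -/
def Bpow (B : Fin m → O) (e : Fin m → Fin p) : O := ∏ j, B j ^ (e j : ℕ)

/-- products of the `β j` -/
def bpow (β : Fin m → R) (e : Fin m → Fin p) : R := ∏ j, β j ^ (e j : ℕ)

/-- the subset of `R` of elements in expanded normal form -/
def NF (β : Fin m → R) : Set R :=
  {x : R | ∃ (g : (Fin m → Fin p) → O) (z : O),
    x = (∑ e, mm ρ hρ p (g e) * bpow p β e) + ii ρ hρ p z}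

end defs

variable {p : ℕ}

lemma ρ_mm (hρ : Function.Surjective ρ) (g : O) : ρ (mm ρ hρ p g) = g ^ p := by
  rw [mm, map_pow, ρ_lft]

lemma ρ_ii (hρ : Function.Surjective ρ) (z : O) : ρ (ii ρ hρ p z) = p * z := by
  rw [ii, map_mul, map_natCast, ρ_lft]

section lemmas

variable (hp : p.Prime) (hρ : Function.Surjective ρ)
  (hN2 : ∀ x y : R, ρ x = 0 → ρ y = 0 → x * y = 0)
  (hNp : ∀ x : R, ρ x = 0 → (p : R) * x = 0)

include hp hρ hN2 hNp

lemma pow_eq_mm {r : R} {g : O} (h : ρ r = g) : r ^ p = mm ρ hρ p g := by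
  obtain ⟨ν, hν, hr⟩ : ∃ ν : R, ρ ν = 0 ∧ r = lft ρ hρ g + ν :=
    ⟨r - lft ρ hρ g, by rw [map_sub, h, ρ_lft, sub_self], by ring⟩
  rw [hr, add_pow, Finset.sum_range_succ]
  simp only [Nat.sub_self, pow_zero, mul_one, Nat.choose_self, Nat.cast_one]
  have hzero : ∀ k ∈ Finset.range p,
      lft ρ hρ g ^ k * ν ^ (p - k) * (Nat.choose p k : R) = 0 := by
    intro k hk
    rw [Finset.mem_range] at hk
    rcases Nat.lt_or_ge k (p - 1) with hk2 | hk2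
    · have : ν ^ (p - k) = ν * ν * ν ^ (p - k - 2) := by
        rw [← pow_two, ← pow_add]
        congr 1
        omega
      rw [this, hN2 ν ν hν hν, zero_mul, mul_zero, zero_mul]
    · have hk1 : k = p - 1 := by omega
      subst hk1
      have hchoose : (Nat.choose p (p - 1)) = p := by
        rw [Nat.choose_symm (by omega), Nat.choose_one_right]
      rw [hchoose, show p - (p - 1) = 1 by omega, pow_one]
      have : lft ρ hρ g ^ (p - 1) * ν * (p : R) = (p:R) * (lft ρ hρ g ^ (p - 1) * ν) := by ring
      rw [this, hNp _ (by rw [map_mul, hν, mul_zero])]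
  rw [Finset.sum_eq_zero hzero, zero_add, mm]

lemma mm_mul (g h : O) : mm ρ hρ p (g * h) = mm ρ hρ p g * mm ρ hρ p h := by
  have : mm ρ hρ p (g * h) = (lft ρ hρ g * lft ρ hρ h) ^ p :=
    (pow_eq_mm ρ hp hρ hN2 hNp (by rw [map_mul, ρ_lft, ρ_lft])).symm
  rw [this, mul_pow, mm, mm]

lemma mm_one : mm ρ hρ p 1 = 1 := by
  have := pow_eq_mm ρ hp hρ hN2 hNp (map_one ρ)
  rw [one_pow] at this
  exact this.symm

lemma mm_pow (g : O) (k : ℕ) : mm ρ hρ p (g ^ k) = mm ρ hρ p g ^ k := by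
  induction k with
  | zero => simpa using mm_one ρ hp hρ hN2 hNp
  | succ n ih =>
    rw [pow_succ, pow_succ, mm_mul ρ hp hρ hN2 hNp, ih]

lemma ii_eq (r : R) : (p : R) * r = ii ρ hρ p (ρ r) := by
  have : ρ (r - lft ρ hρ (ρ r)) = 0 := by rw [map_sub, ρ_lft, sub_self]
  have h2 := hNp _ this
  rw [mul_sub] at h2
  rw [ii]
  linear_combination h2

lemma ii_add (z z' : O) : ii ρ hρ p (z + z') = ii ρ hρ p z + ii ρ hρ p z' := by
  have h1 : ii ρ hρ p z + ii ρ hρ p z' = (p:R) * (lft ρ hρ z + lft ρ hρ z') := by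
    rw [ii, ii]; ring
  rw [h1, ii_eq ρ hp hρ hN2 hNp, map_add, ρ_lft, ρ_lft]

lemma ii_zero : ii ρ hρ p 0 = 0 := by
  have := hNp (lft ρ hρ 0) (by rw [ρ_lft])
  rwa [ii]

lemma ii_mul (z : O) (r : R) : ii ρ hρ p z * r = ii ρ hρ p (z * ρ r) := by
  have h1 : ii ρ hρ p z * r = (p : R) * (lft ρ hρ z * r) := by rw [ii]; ring
  rw [h1, ii_eq ρ hp hρ hN2 hNp, map_mul, ρ_lft]

lemma ii_neg (z : O) : ii ρ hρ p (-z) = - ii ρ hρ p z := by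
  have h1 := ii_add ρ hp hρ hN2 hNp z (-z)
  rw [add_neg_cancel, ii_zero ρ hp hρ hN2 hNp] at h1
  linear_combination -h1

lemma ii_sum {ι : Type} (s : Finset ι) (f : ι → O) :
    ii ρ hρ p (∑ x ∈ s, f x) = ∑ x ∈ s, ii ρ hρ p (f x) := by
  classical
  induction s using Finset.induction with
  | empty => simpa using ii_zero ρ hp hρ hN2 hNp
  | insert _ _ hnm ih =>
    rw [Finset.sum_insert hnm, Finset.sum_insert hnm, ii_add ρ hp hρ hN2 hNp, ih]

lemma mm_zero : mm ρ hρ p 0 = 0 := by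
  have hν : ρ (lft ρ hρ (0:O)) = 0 := ρ_lft ρ hρ 0
  rw [mm, show p = 2 + (p - 2) by have := hp.two_le; omega, pow_add, pow_two, hN2 _ _ hν hν, zero_mul]

/-- additivity defect of `mm` -/
lemma mm_add_defect (g h : O) : ∃ w : O,
    mm ρ hρ p (g + h) = mm ρ hρ p g + mm ρ hρ p h + ii ρ hρ p w := by
  classical
  refine ⟨∑ k ∈ (Finset.range p).erase 0, ((Nat.choose p k / p : ℕ) * g ^ k * h ^ (p - k)), ?_⟩
  have key : mm ρ hρ p (g + h) = (lft ρ hρ g + lft ρ hρ h) ^ p :=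
    (pow_eq_mm ρ hp hρ hN2 hNp (by rw [map_add, ρ_lft, ρ_lft])).symm
  rw [key, add_pow, Finset.sum_range_succ]
  simp only [Nat.sub_self, pow_zero, mul_one, Nat.choose_self, Nat.cast_one]
  have hsplit : ∀ k ∈ Finset.range p, lft ρ hρ g ^ k * lft ρ hρ h ^ (p - k) * (Nat.choose p k : R)
      = (if k = 0 then mm ρ hρ p h else ii ρ hρ p ((Nat.choose p k / p : ℕ) * g ^ k * h ^ (p - k))) := by
    intro k hk
    rw [Finset.mem_range] at hk
    by_cases hk0 : k = 0
    · subst hk0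
      simp [mm]
    · have hdvd : p ∣ Nat.choose p k := hp.dvd_choose_self hk0 hk
      obtain ⟨c, hc⟩ := hdvd
      have h1 : lft ρ hρ g ^ k * lft ρ hρ h ^ (p - k) * (Nat.choose p k : R)
          = (p : R) * (lft ρ hρ g ^ k * lft ρ hρ h ^ (p - k) * (c:R)) := by
        rw [hc]
        push_cast
        ring
      rw [if_neg hk0, h1, ii_eq ρ hp hρ hN2 hNp]
      congr 1
      rw [map_mul, map_mul, map_pow, map_pow, map_natCast, ρ_lft, ρ_lft, hc,
        Nat.mul_div_cancel_left c hp.pos]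
      push_cast
      ring
  rw [Finset.sum_congr rfl hsplit,
    ← Finset.add_sum_erase _ _ (Finset.mem_range.mpr hp.pos), if_pos rfl]
  have h2 : ∀ k ∈ (Finset.range p).erase 0,
      (if k = 0 then mm ρ hρ p h else ii ρ hρ p ((Nat.choose p k / p : ℕ) * g ^ k * h ^ (p - k)))
      = ii ρ hρ p ((Nat.choose p k / p : ℕ) * g ^ k * h ^ (p - k)) :=
    fun k hk => if_neg (Finset.ne_of_mem_erase hk)
  rw [Finset.sum_congr rfl h2, ← ii_sum ρ hp hρ hN2 hNp]
  rw [show mm ρ hρ p g = lft ρ hρ g ^ p from rfl]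
  push_cast
  ring


variable (B : Fin m → O) (β : Fin m → R) (hβ : ∀ j, ρ (β j) = B j)

include hβ

lemma ρ_bpow (e : Fin m → Fin p) : ρ (bpow p β e) = Bpow p B e := by
  rw [bpow, map_prod, Bpow]
  exact Finset.prod_congr rfl fun j _ => by rw [map_pow, hβ j]

lemma beta_pow (j : Fin m) : β j ^ p = mm ρ hρ p (B j) :=
  pow_eq_mm ρ hp hρ hN2 hNp (hβ j)

omit hβ in
lemma mm_prod {ι : Type} (t : Finset ι) (f : ι → O) :
    mm ρ hρ p (∏ i ∈ t, f i) = ∏ i ∈ t, mm ρ hρ p (f i) := by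
  classical
  induction t using Finset.induction with
  | empty => simpa using mm_one ρ hp hρ hN2 hNp
  | insert _ _ hnm ih =>
    rw [Finset.prod_insert hnm, Finset.prod_insert hnm, mm_mul ρ hp hρ hN2 hNp, ih]

/-- multiplication of monomials in the `β j` with carries -/
lemma bpow_mul (e f : Fin m → Fin p) :
    bpow p β e * bpow p β f
      = mm ρ hρ p (∏ j, B j ^ (((e j : ℕ) + (f j : ℕ)) / p))
        * bpow p β (fun j => (⟨((e j : ℕ) + (f j : ℕ)) % p, Nat.mod_lt _ hp.pos⟩ : Fin p)) := by
  have hj : ∀ j, β j ^ ((e j : ℕ) + (f j : ℕ))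
      = mm ρ hρ p (B j ^ (((e j : ℕ) + (f j : ℕ)) / p)) * β j ^ (((e j : ℕ) + (f j : ℕ)) % p) := by
    intro j
    calc β j ^ ((e j : ℕ) + (f j : ℕ))
        = β j ^ (p * (((e j : ℕ) + (f j : ℕ)) / p) + ((e j : ℕ) + (f j : ℕ)) % p) := by
          rw [Nat.div_add_mod]
      _ = (β j ^ p) ^ (((e j : ℕ) + (f j : ℕ)) / p) * β j ^ (((e j : ℕ) + (f j : ℕ)) % p) := by
          rw [pow_add, pow_mul]
      _ = mm ρ hρ p (B j ^ (((e j : ℕ) + (f j : ℕ)) / p)) * β j ^ (((e j : ℕ) + (f j : ℕ)) % p) := by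
          rw [beta_pow ρ hp hρ hN2 hNp B β hβ j, ← mm_pow ρ hp hρ hN2 hNp]
  calc bpow p β e * bpow p β f = ∏ j, β j ^ ((e j : ℕ) + (f j : ℕ)) := by
        rw [bpow, bpow, ← Finset.prod_mul_distrib]
        exact Finset.prod_congr rfl fun j _ => by rw [pow_add]
    _ = ∏ j, (mm ρ hρ p (B j ^ (((e j : ℕ) + (f j : ℕ)) / p)) * β j ^ (((e j : ℕ) + (f j : ℕ)) % p)) :=
        Finset.prod_congr rfl fun j _ => hj j
    _ = (∏ j, mm ρ hρ p (B j ^ (((e j : ℕ) + (f j : ℕ)) / p)))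
        * ∏ j, β j ^ (((e j : ℕ) + (f j : ℕ)) % p) := Finset.prod_mul_distrib
    _ = _ := by
        rw [← mm_prod ρ hp hρ hN2 hNp]
        rfl

omit hβ in
lemma nf_single (u : O) (e : Fin m → Fin p) :
    mm ρ hρ p u * bpow p β e ∈ NF ρ hρ p β := by
  classical
  refine ⟨fun e' => if e' = e then u else 0, 0, ?_⟩
  rw [ii_zero ρ hp hρ hN2 hNp, add_zero, Finset.sum_eq_single e
    (fun e' _ hne => by simp only [if_neg hne, mm_zero ρ hp hρ hN2 hNp, zero_mul])
    (fun h => absurd (Finset.mem_univ e) h)]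
  simp

lemma nf_add_single {x : R} (hx : x ∈ NF ρ hρ p β) (u : O) (e : Fin m → Fin p) :
    x + mm ρ hρ p u * bpow p β e ∈ NF ρ hρ p β := by
  classical
  obtain ⟨g, z, rfl⟩ := hx
  obtain ⟨w, hw⟩ := mm_add_defect ρ hp hρ hN2 hNp (g e) u
  refine ⟨Function.update g e (g e + u), z + -(w * Bpow p B e), ?_⟩
  have h1 : ∑ e', mm ρ hρ p (Function.update g e (g e + u) e') * bpow p β e'
      = (∑ e' ∈ Finset.univ \ {e}, mm ρ hρ p (g e') * bpow p β e')
        + mm ρ hρ p (g e + u) * bpow p β e := by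
    rw [Finset.sum_eq_sum_sdiff_singleton_add (Finset.mem_univ e)]
    congr 1
    · refine Finset.sum_congr rfl fun e' he' => ?_
      have hne : e' ≠ e := by
        have := (Finset.mem_sdiff.mp he').2
        simpa using this
      rw [Function.update_of_ne hne]
    · rw [Function.update_self]
  have h2 : ∑ e', mm ρ hρ p (g e') * bpow p β e'
      = (∑ e' ∈ Finset.univ \ {e}, mm ρ hρ p (g e') * bpow p β e')
        + mm ρ hρ p (g e) * bpow p β e :=
    Finset.sum_eq_sum_sdiff_singleton_add (Finset.mem_univ e) _
  have hii : ii ρ hρ p (w * Bpow p B e) = ii ρ hρ p w * bpow p β e := by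
    rw [ii_mul ρ hp hρ hN2 hNp, ρ_bpow ρ hp hρ hN2 hNp B β hβ]
  rw [h2, h1, hw, ii_add ρ hp hρ hN2 hNp, ii_neg ρ hp hρ hN2 hNp, hii]
  ring

lemma nf_add_many {x : R} (hx : x ∈ NF ρ hρ p β) {ι : Type} (t : Finset ι)
    (u : ι → O) (r : ι → (Fin m → Fin p)) :
    x + ∑ i ∈ t, mm ρ hρ p (u i) * bpow p β (r i) ∈ NF ρ hρ p β := by
  classical
  induction t using Finset.induction with
  | empty => simpa using hx
  | insert _ _ hnm ih =>
    rw [Finset.sum_insert hnm, show ∀ a b c : R, a + (b + c) = (a + c) + b by intros; ring]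
    exact nf_add_single ρ hp hρ hN2 hNp B β hβ ih _ _

lemma nf_ii {x : R} (hx : x ∈ NF ρ hρ p β) (z' : O) : x + ii ρ hρ p z' ∈ NF ρ hρ p β := by
  obtain ⟨g, z, rfl⟩ := hx
  exact ⟨g, z + z', by rw [ii_add ρ hp hρ hN2 hNp, add_assoc]⟩

lemma nf_add {x y : R} (hx : x ∈ NF ρ hρ p β) (hy : y ∈ NF ρ hρ p β) :
    x + y ∈ NF ρ hρ p β := by
  obtain ⟨g, z, rfl⟩ := hy
  rw [← add_assoc]
  exact nf_ii ρ hp hρ hN2 hNp B β hβ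
    (nf_add_many ρ hp hρ hN2 hNp B β hβ hx Finset.univ g id) z

omit hβ in
lemma nf_zero : (0 : R) ∈ NF ρ hρ p β := by
  refine ⟨0, 0, ?_⟩
  rw [ii_zero ρ hp hρ hN2 hNp]
  simp [mm_zero ρ hp hρ hN2 hNp]

lemma nf_neg {x : R} (hx : x ∈ NF ρ hρ p β) : -x ∈ NF ρ hρ p β := by
  classical
  obtain ⟨g, z, rfl⟩ := hx
  choose w hw using fun e => mm_add_defect ρ hp hρ hN2 hNp (g e) (-(g e))
  refine ⟨fun e => -(g e), (∑ e, w e * Bpow p B e) - z, ?_⟩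
  have hmm : ∀ e, mm ρ hρ p (-(g e)) = -(ii ρ hρ p (w e)) - mm ρ hρ p (g e) := by
    intro e
    have h0 := hw e
    rw [add_neg_cancel, mm_zero ρ hp hρ hN2 hNp] at h0
    linear_combination -h0
  have hIB : ∀ e, ii ρ hρ p (w e) * bpow p β e = ii ρ hρ p (w e * Bpow p B e) := by
    intro e
    rw [ii_mul ρ hp hρ hN2 hNp, ρ_bpow ρ hp hρ hN2 hNp B β hβ]
  have hsum : ∑ e, mm ρ hρ p (-(g e)) * bpow p β e
      = -(∑ e, ii ρ hρ p (w e * Bpow p B e)) - ∑ e, mm ρ hρ p (g e) * bpow p β e := by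
    rw [← Finset.sum_neg_distrib, ← Finset.sum_sub_distrib]
    refine Finset.sum_congr rfl fun e _ => ?_
    linear_combination bpow p β e * hmm e - hIB e
  rw [hsum, show (∑ e, w e * Bpow p B e) - z = (∑ e, w e * Bpow p B e) + (-z) by ring,
    ii_add ρ hp hρ hN2 hNp, ii_sum ρ hp hρ hN2 hNp, ii_neg ρ hp hρ hN2 hNp]
  ring

omit hβ in
lemma nf_one : (1 : R) ∈ NF ρ hρ p β := by
  have h1 : mm ρ hρ p 1 * bpow p β (fun _ => (⟨0, hp.pos⟩ : Fin p)) = 1 := by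
    rw [mm_one ρ hp hρ hN2 hNp, bpow]
    simp
  have h2 := nf_single ρ hp hρ hN2 hNp β 1 (fun _ => (⟨0, hp.pos⟩ : Fin p))
  rwa [h1] at h2

lemma nf_beta (j : Fin m) : β j ∈ NF ρ hρ p β := by
  classical
  set ind : Fin m → Fin p := fun i => if i = j then (⟨1, hp.one_lt⟩ : Fin p) else ⟨0, hp.pos⟩ with hind
  have h1 : bpow p β ind = β j := by
    rw [bpow]
    have : ∀ i, β i ^ ((ind i : ℕ)) = if i = j then β i else 1 := by
      intro i
      rw [hind]
      by_cases hij : i = j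
      · simp [hij]
      · simp [hij]
    rw [Finset.prod_congr rfl fun i _ => this i, Finset.prod_ite_eq' Finset.univ j (fun i => β i),
      if_pos (Finset.mem_univ j)]
  have h2 := nf_single ρ hp hρ hN2 hNp β 1 ind
  rwa [mm_one ρ hp hρ hN2 hNp, one_mul, h1] at h2

lemma nf_mul {x y : R} (hx : x ∈ NF ρ hρ p β) (hy : y ∈ NF ρ hρ p β) :
    x * y ∈ NF ρ hρ p β := by
  classical
  obtain ⟨g, z, rfl⟩ := hx
  obtain ⟨h, z', rfl⟩ := hy
  set S1 := ∑ e, mm ρ hρ p (g e) * bpow p β e with hS1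
  set S2 := ∑ f, mm ρ hρ p (h f) * bpow p β f with hS2
  set U : (Fin m → Fin p) × (Fin m → Fin p) → O :=
    fun q => g q.1 * h q.2 * ∏ j, B j ^ (((q.1 j : ℕ) + (q.2 j : ℕ)) / p) with hU
  set Rf : (Fin m → Fin p) × (Fin m → Fin p) → (Fin m → Fin p) :=
    fun q j => (⟨((q.1 j : ℕ) + (q.2 j : ℕ)) % p, Nat.mod_lt _ hp.pos⟩ : Fin p) with hRf
  have key : S1 * S2 = ∑ q : (Fin m → Fin p) × (Fin m → Fin p), mm ρ hρ p (U q) * bpow p β (Rf q) := by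
    rw [hS1, hS2, Finset.sum_mul_sum, ← Finset.univ_product_univ, Finset.sum_product]
    refine Finset.sum_congr rfl fun e _ => Finset.sum_congr rfl fun f _ => ?_
    have h3 : (mm ρ hρ p (g e) * bpow p β e) * (mm ρ hρ p (h f) * bpow p β f)
        = (mm ρ hρ p (g e) * mm ρ hρ p (h f)) * (bpow p β e * bpow p β f) := by ring
    rw [h3, bpow_mul ρ hp hρ hN2 hNp B β hβ, ← mm_mul ρ hp hρ hN2 hNp, ← mul_assoc,
      ← mm_mul ρ hp hρ hN2 hNp]
  have e1 : ii ρ hρ p z * (S2 + ii ρ hρ p z') = ii ρ hρ p (z * ρ (S2 + ii ρ hρ p z')) :=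
    ii_mul ρ hp hρ hN2 hNp _ _
  have e2 : ii ρ hρ p z' * S1 = ii ρ hρ p (z' * ρ S1) := ii_mul ρ hp hρ hN2 hNp _ _
  have hxy : (S1 + ii ρ hρ p z) * (S2 + ii ρ hρ p z')
      = ((0 + ∑ q : (Fin m → Fin p) × (Fin m → Fin p), mm ρ hρ p (U q) * bpow p β (Rf q))
          + ii ρ hρ p (z * ρ (S2 + ii ρ hρ p z'))) + ii ρ hρ p (z' * ρ S1) := by
    rw [zero_add, ← key, ← e1, ← e2]
    ring
  rw [hxy]
  exact nf_ii ρ hp hρ hN2 hNp B β hβ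
    (nf_ii ρ hp hρ hN2 hNp B β hβ
      (nf_add_many ρ hp hρ hN2 hNp B β hβ (nf_zero ρ hp hρ hN2 hNp β) Finset.univ U Rf) _) _

lemma ρ_nf (g : (Fin m → Fin p) → O) (z : O) :
    ρ ((∑ e, mm ρ hρ p (g e) * bpow p β e) + ii ρ hρ p z)
      = (∑ e, g e ^ p * Bpow p B e) + p * z := by
  rw [map_add, map_sum, ρ_ii]
  congr 1
  refine Finset.sum_congr rfl fun e _ => ?_
  rw [map_mul, ρ_mm, ρ_bpow ρ hp hρ hN2 hNp B β hβ]

lemma nf_inj0 (htf : ∀ x : O, (p : O) * x = 0 → x = 0)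
    (hindep : ∀ (A : (Fin m → Fin p) → O) (z : O),
      (∑ e, A e ^ p * Bpow p B e) + (p : O) * z = 0 → ∀ e, ∃ u, A e = (p : O) * u)
    {x : R} (hx : x ∈ NF ρ hρ p β) (h0 : ρ x = 0) : x = 0 := by
  obtain ⟨g, z, rfl⟩ := hx
  have horig := h0
  rw [ρ_nf ρ hp hρ hN2 hNp B β hβ] at h0
  choose u hu using hindep g z h0
  have hmmg : ∀ e, mm ρ hρ p (g e) = ii ρ hρ p ((p:O)^(p-1) * (u e)^p) := by
    intro e
    rw [hu e]
    have h1 : mm ρ hρ p ((p:O) * u e) = ((p:R) * lft ρ hρ (u e)) ^ p :=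
      (pow_eq_mm ρ hp hρ hN2 hNp (by rw [map_mul, map_natCast, ρ_lft])).symm
    rw [h1, mul_pow, show (p:R)^p = (p:R) * (p:R)^(p-1) by
      rw [← pow_succ']
      congr 1
      have := hp.pos
      omega]
    rw [mul_assoc, ii_eq ρ hp hρ hN2 hNp]
    congr 1
    rw [map_mul, map_pow, map_pow, map_natCast, ρ_lft]
  have hx2 : (∑ e, mm ρ hρ p (g e) * bpow p β e) + ii ρ hρ p z
      = ii ρ hρ p ((∑ e, (p:O)^(p-1) * (u e)^p * Bpow p B e) + z) := by
    rw [ii_add ρ hp hρ hN2 hNp, ii_sum ρ hp hρ hN2 hNp]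
    congr 1
    refine Finset.sum_congr rfl fun e _ => ?_
    rw [hmmg e, ii_mul ρ hp hρ hN2 hNp, ρ_bpow ρ hp hρ hN2 hNp B β hβ]
  rw [hx2]
  have hZ : ((∑ e, (p:O)^(p-1) * (u e)^p * Bpow p B e) + z) = 0 := by
    refine htf _ ?_
    rw [← ρ_ii ρ hρ, ← hx2]
    exact horig
  rw [hZ, ii_zero ρ hp hρ hN2 hNp]

theorem exists_section
    (htf : ∀ x : O, (p : O) * x = 0 → x = 0)
    (hexp : ∀ g : O, ∃ (A : (Fin m → Fin p) → O) (t : O),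
      g = (∑ e, A e ^ p * Bpow p B e) + (p : O) * t)
    (hindep : ∀ (A : (Fin m → Fin p) → O) (z : O),
      (∑ e, A e ^ p * Bpow p B e) + (p : O) * z = 0 → ∀ e, ∃ u, A e = (p : O) * u) :
    ∃ s : O →+* R, (∀ g, ρ (s g) = g) ∧ (∀ j, s (B j) = β j) := by
  classical
  choose A t hAt using hexp
  set sf : O → R := fun g => (∑ e, mm ρ hρ p (A g e) * bpow p β e) + ii ρ hρ p (t g) with hsf
  have hmem : ∀ g, sf g ∈ NF ρ hρ p β := fun g => ⟨A g, t g, rfl⟩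
  have hρs : ∀ g, ρ (sf g) = g := fun g => by
    rw [hsf]
    dsimp only
    rw [ρ_nf ρ hp hρ hN2 hNp B β hβ]
    exact (hAt g).symm
  have inj2 : ∀ x y : R, x ∈ NF ρ hρ p β → y ∈ NF ρ hρ p β → ρ x = ρ y → x = y := by
    intro x y hx hy hxy
    have h1 : x + (-y) = 0 := by
      refine nf_inj0 ρ hp hρ hN2 hNp B β hβ htf hindep
        (nf_add ρ hp hρ hN2 hNp B β hβ hx (nf_neg ρ hp hρ hN2 hNp B β hβ hy)) ?_
      rw [map_add, map_neg, hxy]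
      ring
    have : x - y = 0 := by rw [sub_eq_add_neg]; exact h1
    exact sub_eq_zero.mp this
  refine ⟨{ toFun := sf
            map_one' := inj2 _ 1 (hmem 1) (nf_one ρ hp hρ hN2 hNp β) (by rw [hρs, map_one])
            map_mul' := fun a b => inj2 _ _ (hmem _)
              (nf_mul ρ hp hρ hN2 hNp B β hβ (hmem a) (hmem b))
              (by rw [hρs, map_mul, hρs, hρs])
            map_zero' := nf_inj0 ρ hp hρ hN2 hNp B β hβ htf hindep (hmem 0) (by rw [hρs])
            map_add' := fun a b => inj2 _ _ (hmem _)
              (nf_add ρ hp hρ hN2 hNp B β hβ (hmem a) (hmem b))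
              (by rw [hρs, map_add, hρs, hρs]) },
    hρs, fun j => inj2 (sf (B j)) (β j) (hmem _) (nf_beta ρ hp hρ hN2 hNp B β hβ j)
      (by rw [hρs, hβ])⟩

end lemmas
end CohenSEC

namespace CohenMain
open CohenSEC CohenDef


/-- the equivalence between bounded multi-indices and tuples -/
noncomputable def ETequiv (p m : ℕ) : {e : Fin m →₀ ℕ // ∀ j, e j < p} ≃ (Fin m → Fin p) where
  toFun s := fun j => ⟨s.1 j, s.2 j⟩
  invFun v := ⟨Finsupp.equivFunOnFinite.symm (fun j => (v j : ℕ)), fun j => by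
    simpa using (v j).2⟩
  left_inv s := by
    apply Subtype.ext
    ext j
    simp
  right_inv v := by
    ext j
    simp

variable {p : ℕ} (hp : p.Prime) {κ : Type} [Field κ] [CharP κ p] {O : Type} [CommRing O]
  (π : O →+* κ) (hπ : Function.Surjective π) {m : ℕ}
  (b : Fin m → κ) (hb : IsPBasis p b) (B : Fin m → O) (hB : ∀ j, π (B j) = b j)
  (hker : RingHom.ker π = Ideal.span {(p : O)})

lemma conv1 (hp0 : p ≠ 0) (a : {e : Fin m →₀ ℕ // ∀ j, e j < p} →₀ κ) :
    (a.sum fun e c => c ^ p * (e : Fin m →₀ ℕ).prod fun j k => b j ^ k)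
      = ∑ v : Fin m → Fin p, (a ((ETequiv p m).symm v)) ^ p * ∏ j, b j ^ (v j : ℕ) := by
  letI : Fintype {e : Fin m →₀ ℕ // ∀ j, e j < p} := Fintype.ofEquiv _ (ETequiv p m).symm
  rw [Finsupp.sum_fintype _ _ (fun s => by rw [zero_pow hp0, zero_mul])]
  rw [← Equiv.sum_comp (ETequiv p m).symm
    (fun s => (a s) ^ p * ((s : Fin m →₀ ℕ).prod fun j k => b j ^ k))]
  refine Finset.sum_congr rfl fun v _ => ?_
  congr 1
  rw [Finsupp.prod_fintype _ _ (fun j => pow_zero _)]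
  refine Finset.prod_congr rfl fun j _ => ?_
  simp [ETequiv]

include hp hπ hb hB hker in
lemma exp_lemma : ∀ g : O, ∃ (A : (Fin m → Fin p) → O) (t : O),
    g = (∑ e, A e ^ p * Bpow p B e) + (p : O) * t := by
  intro g
  obtain ⟨a, ha, -⟩ := hb (π g)
  set A : (Fin m → Fin p) → O := fun v => Function.surjInv hπ (a ((ETequiv p m).symm v)) with hA
  have hπA : ∀ v, π (A v) = a ((ETequiv p m).symm v) := fun v => Function.surjInv_eq hπ _
  have hsum : π (∑ e, A e ^ p * Bpow p B e) = π g := by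
    rw [map_sum, ha, conv1 b hp.ne_zero]
    refine Finset.sum_congr rfl fun v _ => ?_
    rw [map_mul, map_pow, hπA, Bpow, map_prod]
    congr 1
    exact Finset.prod_congr rfl fun j _ => by rw [map_pow, hB]
  have hmem : g - ∑ e, A e ^ p * Bpow p B e ∈ RingHom.ker π := by
    rw [RingHom.mem_ker, map_sub, hsum, sub_self]
  rw [hker, Ideal.mem_span_singleton] at hmem
  obtain ⟨t, ht⟩ := hmem
  exact ⟨A, t, by rw [← ht]; ring⟩

include hp hb hB hker in
lemma indep_lemma : ∀ (A : (Fin m → Fin p) → O) (z : O),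
    (∑ e, A e ^ p * Bpow p B e) + (p : O) * z = 0 → ∀ e, ∃ u, A e = (p : O) * u := by
  intro A z h0 e
  letI : Fintype {e : Fin m →₀ ℕ // ∀ j, e j < p} := Fintype.ofEquiv _ (ETequiv p m).symm
  set a : {e : Fin m →₀ ℕ // ∀ j, e j < p} →₀ κ :=
    Finsupp.equivFunOnFinite.symm (fun s => π (A (ETequiv p m s))) with ha
  have hav : ∀ v, a ((ETequiv p m).symm v) = π (A v) := fun v => by
    rw [ha]
    simp
  have hsum0 : (0 : κ) = a.sum fun e c => c ^ p * (e : Fin m →₀ ℕ).prod fun j k => b j ^ k := by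
    rw [conv1 b hp.ne_zero]
    have : ∀ v : Fin m → Fin p, (a ((ETequiv p m).symm v)) ^ p * ∏ j, b j ^ (v j : ℕ)
        = π (A v ^ p * Bpow p B v) := by
      intro v
      rw [hav, map_mul, map_pow, Bpow, map_prod]
      congr 1
      exact Finset.prod_congr rfl fun j _ => by rw [map_pow, hB]
    rw [Finset.sum_congr rfl fun v _ => this v, ← map_sum]
    have h1 : (∑ e, A e ^ p * Bpow p B e) = -((p:O) * z) := by linear_combination h0
    rw [h1, map_neg, map_mul, map_natCast, CharP.cast_eq_zero κ p, zero_mul, neg_zero]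
  obtain ⟨a0, ha0, hun⟩ := hb 0
  have h2 : a = a0 := hun a hsum0
  have h3 : (0 : {e : Fin m →₀ ℕ // ∀ j, e j < p} →₀ κ) = a0 :=
    hun 0 (by simp [Finsupp.sum_zero_index])
  have h4 : a = 0 := by rw [h2, ← h3]
  have h5 : π (A e) = 0 := by
    rw [← hav e, h4]
    simp
  have h6 : A e ∈ RingHom.ker π := h5
  rw [hker, Ideal.mem_span_singleton] at h6
  obtain ⟨u, hu⟩ := h6
  exact ⟨u, hu⟩

end CohenMain

namespace CohenTower
open CohenSEC CohenDef MvPowerSeries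

variable {O : Type} [CommRing O] {m : ℕ}

/-- lifts at level `n` -/
def LiftT (p : ℕ) (B : Fin m → O) (n : ℕ) :=
  {ψ : O →+* MvPowerSeries (Fin m) O ⧸ (MM p ^ (n + 1) : Ideal (MvPowerSeries (Fin m) O)) //
    ∀ j, ψ (B j) = Ideal.Quotient.mk _ (C (σ := Fin m) (R := O) (B j) + X j)}

/-- base of the tower -/
noncomputable def base (p : ℕ) (B : Fin m → O) : LiftT p B 0 :=
  ⟨(Ideal.Quotient.mk (MM p ^ (0 + 1) : Ideal (MvPowerSeries (Fin m) O))).comp (C (σ := Fin m) (R := O)),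
    fun j => by
      rw [RingHom.comp_apply, Ideal.Quotient.eq]
      have h1 : C (σ := Fin m) (R := O) (B j) - (C (σ := Fin m) (R := O) (B j) + X j) = -(X j) := by ring
      rw [h1, pow_one]
      exact neg_mem (X_mem_MM p j)⟩

variable (B : Fin m → O) {p : ℕ}

lemma step_exists [IsDomain O] (hp : p.Prime)
    (htf : ∀ x : O, (p : O) * x = 0 → x = 0)
    (hexp : ∀ g : O, ∃ (A : (Fin m → Fin p) → O) (t : O),
      g = (∑ e, A e ^ p * Bpow p B e) + (p : O) * t)
    (hindep : ∀ (A : (Fin m → Fin p) → O) (z : O),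
      (∑ e, A e ^ p * Bpow p B e) + (p : O) * z = 0 → ∀ e, ∃ u, A e = (p : O) * u)
    (n : ℕ) (prev : LiftT p B n) :
    ∃ next : LiftT p B (n + 1), ∀ g,
      Ideal.Quotient.factor (S := (MM p ^ (n + 1 + 1) : Ideal (MvPowerSeries (Fin m) O))) (T := MM p ^ (n + 1))
        (Ideal.pow_le_pow_right (by omega)) (next.1 g) = prev.1 g := by
  classical
  set Q2 := (MvPowerSeries (Fin m) O ⧸ (MM p ^ (n + 1 + 1) : Ideal (MvPowerSeries (Fin m) O)))
    with hQ2
  set fac := Ideal.Quotient.factor (S := (MM p ^ (n + 1 + 1) : Ideal (MvPowerSeries (Fin m) O)))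
    (T := MM p ^ (n + 1)) (Ideal.pow_le_pow_right (by omega)) with hfac
  set Rs : Subring (Q2 × O) :=
    RingHom.eqLocus (fac.comp (RingHom.fst Q2 O)) (prev.1.comp (RingHom.snd Q2 O)) with hRs
  set ρ : Rs →+* O := (RingHom.snd Q2 O).comp Rs.subtype with hρdef
  have hρval : ∀ x : Rs, ρ x = (x : Q2 × O).2 := fun x => rfl
  have hmem : ∀ x : Rs, fac ((x : Q2 × O).1) = prev.1 ((x : Q2 × O).2) := fun x => x.2
  have hρsurj : Function.Surjective ρ := by
    intro g
    obtain ⟨y, hy⟩ := Ideal.Quotient.mk_surjective (prev.1 g)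
    refine ⟨⟨(Ideal.Quotient.mk _ y, g), ?_⟩, rfl⟩
    show fac (Ideal.Quotient.mk _ y) = prev.1 g
    rw [hfac, Ideal.Quotient.factor_mk, hy]
  have hkey : ∀ x : Rs, ρ x = 0 → ∃ y ∈ (MM p ^ (n + 1) : Ideal (MvPowerSeries (Fin m) O)),
      (x : Q2 × O).1 = Ideal.Quotient.mk _ y := by
    intro x hx
    obtain ⟨y, hy⟩ := Ideal.Quotient.mk_surjective ((x : Q2 × O).1)
    have h1 := hmem x
    rw [hρval] at hx
    rw [hx, map_zero, ← hy, hfac, Ideal.Quotient.factor_mk,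
      Ideal.Quotient.eq_zero_iff_mem] at h1
    exact ⟨y, h1, hy.symm⟩
  have hN2 : ∀ x y : Rs, ρ x = 0 → ρ y = 0 → x * y = 0 := by
    intro x y hx hy
    obtain ⟨y1, hy1m, hy1⟩ := hkey x hx
    obtain ⟨y2, hy2m, hy2⟩ := hkey y hy
    apply Subtype.ext
    apply Prod.ext
    · show ((x : Q2 × O).1 * (y : Q2 × O).1) = 0
      rw [hy1, hy2, ← map_mul, Ideal.Quotient.eq_zero_iff_mem]
      have hle : (MM p : Ideal (MvPowerSeries (Fin m) O)) ^ (n+1) * MM p ^ (n+1)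
          ≤ MM p ^ (n+1+1) := by
        rw [← pow_add]
        exact Ideal.pow_le_pow_right (by omega)
      exact hle (Ideal.mul_mem_mul hy1m hy2m)
    · show ((x : Q2 × O).2 * (y : Q2 × O).2) = 0
      rw [hρval] at hx
      rw [hx, zero_mul]
  have hNp : ∀ x : Rs, ρ x = 0 → (p : Rs) * x = 0 := by
    intro x hx
    obtain ⟨y1, hy1m, hy1⟩ := hkey x hx
    apply Subtype.ext
    apply Prod.ext
    · show (((p : Rs) : Q2 × O).1 * (x : Q2 × O).1) = 0
      have hc : (((p : Rs) : Q2 × O)).1 = (p : Q2) := by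
        rw [show ((p : Rs) : Q2 × O) = (p : Q2 × O) by exact_mod_cast rfl]
        rfl
      rw [hc, hy1, show (p : Q2) = Ideal.Quotient.mk _ ((p : MvPowerSeries (Fin m) O)) by
        rw [map_natCast], ← map_mul, Ideal.Quotient.eq_zero_iff_mem]
      have h2 : (p : MvPowerSeries (Fin m) O) * y1 = y1 * (p : MvPowerSeries (Fin m) O) := by ring
      rw [h2, show n + 1 + 1 = (n + 1) + 1 by rfl, pow_succ]
      exact Ideal.mul_mem_mul hy1m (p_mem_MM p)
    · show (((p : Rs) : Q2 × O).2 * (x : Q2 × O).2) = 0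
      rw [hρval] at hx
      rw [hx, mul_zero]
  set β : Fin m → Rs := fun j =>
    ⟨(Ideal.Quotient.mk _ (C (σ := Fin m) (R := O) (B j) + X j), B j), by
      show fac (Ideal.Quotient.mk _ _) = prev.1 (B j)
      rw [hfac, Ideal.Quotient.factor_mk]
      exact (prev.2 j).symm⟩ with hβdef
  have hβ : ∀ j, ρ (β j) = B j := fun j => rfl
  obtain ⟨s, hs1, hs2⟩ :=
    CohenSEC.exists_section ρ hp hρsurj hN2 hNp B β hβ htf hexp hindep
  refine ⟨⟨(RingHom.fst Q2 O).comp (Rs.subtype.comp s), fun j => ?_⟩, fun g => ?_⟩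
  · show ((s (B j) : Q2 × O)).1 = Ideal.Quotient.mk _ (C (σ := Fin m) (R := O) (B j) + X j)
    rw [hs2 j]
  · show fac ((s g : Q2 × O).1) = prev.1 g
    rw [hmem (s g), show ((s g : Q2 × O).2) = g from hs1 g]

variable [IsDomain O] (hp : p.Prime)
  (htf : ∀ x : O, (p : O) * x = 0 → x = 0)
  (hexp : ∀ g : O, ∃ (A : (Fin m → Fin p) → O) (t : O),
    g = (∑ e, A e ^ p * Bpow p B e) + (p : O) * t)
  (hindep : ∀ (A : (Fin m → Fin p) → O) (z : O),
    (∑ e, A e ^ p * Bpow p B e) + (p : O) * z = 0 → ∀ e, ∃ u, A e = (p : O) * u)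

/-- the tower of lifts -/
noncomputable def tower : (n : ℕ) → LiftT p B n := fun n =>
  Nat.rec (base p B)
    (fun k prev => (step_exists B hp htf hexp hindep k prev).choose) n

lemma tower_compat (n : ℕ) (g : O) :
    Ideal.Quotient.factor (S := (MM p ^ (n + 1 + 1) : Ideal (MvPowerSeries (Fin m) O))) (T := MM p ^ (n + 1))
      (Ideal.pow_le_pow_right (by omega))
      ((tower B hp htf hexp hindep (n + 1)).1 g)
      = (tower B hp htf hexp hindep n).1 g :=
  (step_exists B hp htf hexp hindep n (tower B hp htf hexp hindep n)).choose_spec g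

lemma tower_zero : tower B hp htf hexp hindep 0 = base p B := rfl

end CohenTower

namespace CohenUniq
open CohenSEC CohenDef

variable {O : Type} [CommRing O] {m : ℕ} {p : ℕ} (B : Fin m → O)

lemma uniq_aux {T : Type} [CommRing T] (hp : p.Prime) (χ₁ χ₂ : O →+* T) (I : Ideal T)
    (hpI : (p : T) ∈ I)
    (hexp : ∀ g : O, ∃ (A : (Fin m → Fin p) → O) (t : O),
      g = (∑ e, A e ^ p * Bpow p B e) + (p : O) * t)
    (hBeq : ∀ j, χ₁ (B j) = χ₂ (B j))
    (hbase : ∀ g, χ₁ g - χ₂ g ∈ I) :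
    ∀ n, ∀ g : O, χ₁ g - χ₂ g ∈ I ^ (n + 1) := by
  intro n
  induction n with
  | zero => intro g; rw [pow_one]; exact hbase g
  | succ n ih =>
    intro g
    obtain ⟨A, t, hgt⟩ := hexp g
    have hW : ∀ e, χ₁ (Bpow p B e) = χ₂ (Bpow p B e) := by
      intro e
      rw [Bpow, map_prod, map_prod]
      exact Finset.prod_congr rfl fun j _ => by rw [map_pow, map_pow, hBeq j]
    have hterm : ∀ e, χ₁ (A e ^ p * Bpow p B e) - χ₂ (A e ^ p * Bpow p B e) ∈ I ^ (n + 1 + 1) := by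
      intro e
      rw [map_mul, map_mul, hW e]
      have hfactor : χ₁ (A e ^ p) * χ₂ (Bpow p B e) - χ₂ (A e ^ p) * χ₂ (Bpow p B e)
          = (χ₁ (A e) ^ p - χ₂ (A e) ^ p) * χ₂ (Bpow p B e) := by
        rw [map_pow, map_pow]; ring
      rw [hfactor]
      refine Ideal.mul_mem_right _ _ ?_
      have hd : χ₁ (A e) - χ₂ (A e) ∈ I ^ (n + 1) := ih (A e)
      set a := χ₂ (A e) with ha
      set d := χ₁ (A e) - χ₂ (A e) with hdd
      have hsplit : χ₁ (A e) = a + d := by rw [ha, hdd]; ring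
      rw [hsplit, add_pow, Finset.sum_range_succ]
      simp only [Nat.sub_self, pow_zero, mul_one, Nat.choose_self, Nat.cast_one]
      rw [add_sub_cancel_right]
      refine Ideal.sum_mem _ fun k hk => ?_
      rw [Finset.mem_range] at hk
      rcases Nat.lt_or_ge k (p - 1) with hk2 | hk2
      · have hpow : d ^ (p - k) = d * d * d ^ (p - k - 2) := by
          rw [← pow_two, ← pow_add]
          congr 1
          omega
        have h2 : d * d ∈ I ^ (n + 1 + 1) := by
          have h3 := Ideal.mul_mem_mul hd hd
          rw [← pow_add] at h3
          exact Ideal.pow_le_pow_right (by omega) h3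
        rw [hpow, show a ^ k * (d * d * d ^ (p - k - 2)) * ((p.choose k : ℕ) : T)
          = (d * d) * (a ^ k * d ^ (p - k - 2) * ((p.choose k : ℕ) : T)) by ring]
        exact Ideal.mul_mem_right _ _ h2
      · have hk1 : k = p - 1 := by omega
        subst hk1
        have hchoose : (p.choose (p - 1)) = p := by
          rw [Nat.choose_symm (by omega), Nat.choose_one_right]
        rw [hchoose, show p - (p - 1) = 1 by have := hp.two_le; omega, pow_one,
          show a ^ (p - 1) * d * (p : T) = (p : T) * (a ^ (p - 1) * d) by ring,
          pow_succ' I (n + 1)]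
        exact Ideal.mul_mem_mul hpI (Ideal.mul_mem_left _ _ hd)
    have hgoal : χ₁ g - χ₂ g
        = (∑ e, (χ₁ (A e ^ p * Bpow p B e) - χ₂ (A e ^ p * Bpow p B e)))
          + (p : T) * (χ₁ t - χ₂ t) := by
      rw [hgt, map_add, map_add, map_mul, map_mul, map_natCast, map_natCast,
        Finset.sum_sub_distrib, ← map_sum, ← map_sum]
      ring
    rw [hgoal]
    refine Ideal.add_mem _ (Ideal.sum_mem _ fun e _ => hterm e) ?_
    rw [pow_succ' I (n + 1)]
    exact Ideal.mul_mem_mul hpI (ih t)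

end CohenUniq

namespace CohenFinal
open CohenDef CohenSEC CohenMain CohenTower CohenUniq MvPowerSeries in
theorem cohen_deformation_aux
    {p : ℕ} (hp : p.Prime)
    {κ : Type} [Field κ] [CharP κ p]
    {O : Type} [CommRing O] [IsDomain O] [IsDiscreteValuationRing O] [CharZero O]
    (hmax : IsLocalRing.maximalIdeal O = Ideal.span {(p : O)})
    [IsAdicComplete (IsLocalRing.maximalIdeal O) O]
    (π : O →+* κ) (hπ : Function.Surjective π)
    (hker : RingHom.ker π = IsLocalRing.maximalIdeal O)
    {m : ℕ} (b : Fin m → κ) (hb : IsPBasis p b)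
    (B : Fin m → O) (hB : ∀ j, π (B j) = b j) :
    ∃! ψ : O →+* MvPowerSeries (Fin m) O,
      (∀ N : ℕ, ∃ k : ℕ, ∀ x ∈ IsLocalRing.maximalIdeal O ^ k,
        ψ x ∈ IsLocalRing.maximalIdeal (MvPowerSeries (Fin m) O) ^ N) ∧
      (∀ j, ψ (B j) = MvPowerSeries.C (σ := Fin m) (R := O) (B j) + MvPowerSeries.X j) ∧
      (∀ g : O, ψ g - MvPowerSeries.C (σ := Fin m) (R := O) g ∈
        Ideal.span (Set.range (MvPowerSeries.X : Fin m → MvPowerSeries (Fin m) O))) := by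
  classical
  have hker' : RingHom.ker π = Ideal.span {(p : O)} := by rw [hker, hmax]
  have hpO : (p : O) ≠ 0 := Nat.cast_ne_zero.mpr hp.ne_zero
  have htf : ∀ x : O, (p : O) * x = 0 → x = 0 := by
    intro x hx
    rcases mul_eq_zero.mp hx with h | h
    · exact absurd h hpO
    · exact h
  have hexp := CohenMain.exp_lemma hp π hπ b hb B hB hker'
  have hindep := CohenMain.indep_lemma hp π b hb B hB hker'
  have hsep : ∀ x : O, (∀ k, (p : O) ^ k ∣ x) → x = 0 := by
    intro x hx
    refine IsHausdorff.haus (I := IsLocalRing.maximalIdeal O) (M := O) inferInstance x fun n => ?_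
    rw [SModEq.zero, smul_eq_mul, Ideal.mul_top, hmax, Ideal.span_singleton_pow,
      Ideal.mem_span_singleton]
    exact hx n
  set tw := CohenTower.tower B hp htf hexp hindep with htw
  have hLex : ∀ (n : ℕ) (g : O), ∃ y : MvPowerSeries (Fin m) O,
      Ideal.Quotient.mk (MM p ^ (n + 1)) y = (tw n).1 g :=
    fun n g => Ideal.Quotient.mk_surjective _
  choose L hL using hLex
  have hLdiff : ∀ (n : ℕ) (g : O),
      L (n + 1) g - L n g ∈ (MM p ^ (n + 1) : Ideal (MvPowerSeries (Fin m) O)) := by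
    intro n g
    rw [← Ideal.Quotient.eq]
    have h1 : Ideal.Quotient.mk (MM p ^ (n + 1) : Ideal (MvPowerSeries (Fin m) O)) (L (n + 1) g)
        = Ideal.Quotient.factor (S := (MM p ^ (n + 1 + 1) : Ideal (MvPowerSeries (Fin m) O))) (T := MM p ^ (n + 1))
            (Ideal.pow_le_pow_right (by omega))
            (Ideal.Quotient.mk (MM p ^ (n + 1 + 1) : Ideal (MvPowerSeries (Fin m) O)) (L (n + 1) g)) :=
      (Ideal.Quotient.factor_mk _ _).symm
    rw [h1, hL (n + 1) g, htw, CohenTower.tower_compat B hp htf hexp hindep n g, ← htw, hL n g]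
  have hLdiff2 : ∀ (n n' : ℕ) (g : O), n ≤ n' →
      L n' g - L n g ∈ (MM p ^ (n + 1) : Ideal (MvPowerSeries (Fin m) O)) := by
    intro n n' g h
    induction n', h using Nat.le_induction with
    | base => simp
    | succ k hk ihk =>
      have h3 : L (k + 1) g - L n g = (L (k + 1) g - L k g) + (L k g - L n g) := by ring
      rw [h3]
      exact Ideal.add_mem _ (Ideal.pow_le_pow_right (by omega) (hLdiff k g)) ihk
  have hchain : ∀ (g : O) (d : Fin m →₀ ℕ), ∃ c : O, ∀ k : ℕ,
      (p : O) ^ k ∣ c - coeff (R := O) d (L (k + deg d) g) := by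
    intro g d
    have hprec : IsPrecomplete (IsLocalRing.maximalIdeal O) O := inferInstance
    have hf : ∀ {k k' : ℕ}, k ≤ k' →
        coeff (R := O) d (L (k + deg d) g) ≡ coeff (R := O) d (L (k' + deg d) g)
          [SMOD (IsLocalRing.maximalIdeal O ^ k • ⊤ : Submodule O O)] := by
      intro k k' hkk
      rw [SModEq.sub_mem, smul_eq_mul, Ideal.mul_top, hmax, Ideal.span_singleton_pow,
        Ideal.mem_span_singleton]
      have hmem := hLdiff2 (k + deg d) (k' + deg d) g (by omega)
      have hdvd := coeff_dvd_of_mem_MM_pow p hmem d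
      rw [map_sub] at hdvd
      rw [dvd_sub_comm]
      exact dvd_trans (pow_dvd_pow _ (show k ≤ k + deg d + 1 - deg d by omega)) hdvd
    obtain ⟨c, hc⟩ := hprec.prec (f := fun k => coeff (R := O) d (L (k + deg d) g)) hf
    refine ⟨c, fun k => ?_⟩
    have h4 := hc k
    rw [SModEq.sub_mem, smul_eq_mul, Ideal.mul_top, hmax, Ideal.span_singleton_pow,
      Ideal.mem_span_singleton] at h4
    rwa [dvd_sub_comm] at h4
  choose cc hcc using hchain
  set Ψf : O → MvPowerSeries (Fin m) O := fun g => (fun d => cc g d) with hΨf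
  have hcoeffΨ : ∀ g d, coeff (R := O) d (Ψf g) = cc g d := fun g d => rfl
  have hkeymk : ∀ (n : ℕ) (g : O),
      Ideal.Quotient.mk (MM p ^ (n + 1)) (Ψf g) = (tw n).1 g := by
    intro n g
    rw [← hL n g, Ideal.Quotient.eq]
    refine mem_MM_pow_of_coeff_dvd p fun d => ?_
    rw [map_sub, hcoeffΨ]
    have h1 := hcc g d (n + 1)
    have h2 := coeff_dvd_of_mem_MM_pow p (hLdiff2 n (n + 1 + deg d) g (by omega)) d
    rw [map_sub] at h2
    have h3 : cc g d - coeff (R := O) d (L n g)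
        = (cc g d - coeff (R := O) d (L (n + 1 + deg d) g))
          + (coeff (R := O) d (L (n + 1 + deg d) g) - coeff (R := O) d (L n g)) := by ring
    rw [h3]
    exact dvd_add (dvd_trans (pow_dvd_pow _ (show n + 1 - deg d ≤ n + 1 by omega)) h1) h2
  have hzero : ∀ x : MvPowerSeries (Fin m) O,
      (∀ n : ℕ, x ∈ (MM p ^ (n + 1) : Ideal (MvPowerSeries (Fin m) O))) → x = 0 := by
    intro x hx
    refine eq_zero_of_mem_MM_pow p hsep fun N => ?_
    cases N with
    | zero => simp [Ideal.one_eq_top]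
    | succ n => exact hx n
  have hmkdiff : ∀ x y : MvPowerSeries (Fin m) O,
      (∀ n : ℕ, Ideal.Quotient.mk (MM p ^ (n + 1)) x = Ideal.Quotient.mk (MM p ^ (n + 1)) y)
      → x = y := by
    intro x y h
    have h2 : x - y = 0 := hzero _ fun n => (Ideal.Quotient.eq).mp (h n)
    exact sub_eq_zero.mp h2
  set Ψ : O →+* MvPowerSeries (Fin m) O :=
    { toFun := Ψf
      map_one' := hmkdiff _ _ fun n => by rw [hkeymk n 1, map_one, map_one]
      map_mul' := fun a a' => hmkdiff _ _ fun n => by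
        rw [hkeymk n (a * a'), map_mul, ← hkeymk n a, ← hkeymk n a', ← map_mul]
      map_zero' := hmkdiff _ _ fun n => by rw [hkeymk n 0, map_zero, map_zero]
      map_add' := fun a a' => hmkdiff _ _ fun n => by
        rw [hkeymk n (a + a'), map_add, ← hkeymk n a, ← hkeymk n a', ← map_add] } with hΨ
  have hΨval : ∀ g, Ψ g = Ψf g := fun g => rfl
  have hΨmk : ∀ (n : ℕ) (g : O),
      Ideal.Quotient.mk (MM p ^ (n + 1)) (Ψ g) = (tw n).1 g := fun n g => hkeymk n g
  have hΨB : ∀ j, Ψ (B j) = C (σ := Fin m) (R := O) (B j) + X j := by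
    intro j
    refine hmkdiff _ _ fun n => ?_
    rw [hΨval, hkeymk n (B j)]
    exact (tw n).2 j
  -- condition (1)
  have hpS_mem : (p : MvPowerSeries (Fin m) O)
      ∈ IsLocalRing.maximalIdeal (MvPowerSeries (Fin m) O) := by
    rw [IsLocalRing.mem_maximalIdeal]
    intro hu
    have h2 := IsUnit.map (constantCoeff (σ := Fin m) (R := O)) hu
    rw [map_natCast] at h2
    have h3 : (p : O) ∈ IsLocalRing.maximalIdeal O := by
      rw [hmax]
      exact Ideal.mem_span_singleton_self _
    exact ((IsLocalRing.mem_maximalIdeal _).mp h3) h2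
  have cond1 : ∀ N : ℕ, ∃ k : ℕ, ∀ x ∈ IsLocalRing.maximalIdeal O ^ k,
      Ψ x ∈ IsLocalRing.maximalIdeal (MvPowerSeries (Fin m) O) ^ N := by
    intro N
    refine ⟨N, fun x hx => ?_⟩
    rw [hmax, Ideal.span_singleton_pow, Ideal.mem_span_singleton] at hx
    obtain ⟨y, hy⟩ := hx
    rw [hy, map_mul, map_pow, map_natCast]
    exact Ideal.mul_mem_right _ _ (Ideal.pow_mem_pow hpS_mem N)
  -- constant coefficient is the identity
  have hM1 : ∀ g : O, Ψ g - C (σ := Fin m) (R := O) g ∈ (MM p : Ideal (MvPowerSeries (Fin m) O)) := by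
    intro g
    have h := hΨmk 0 g
    rw [htw, CohenTower.tower_zero] at h
    have h2 : (CohenTower.base p B).1 g
        = Ideal.Quotient.mk (MM p ^ (0 + 1)) (C (σ := Fin m) (R := O) g) := rfl
    rw [h2] at h
    have h3 := (Ideal.Quotient.eq).mp h
    rwa [zero_add, pow_one] at h3
  have hMtoP : ∀ f ∈ (MM p : Ideal (MvPowerSeries (Fin m) O)),
      constantCoeff (σ := Fin m) (R := O) f ∈ Ideal.span {(p : O)} := by
    have hle : (MM p : Ideal (MvPowerSeries (Fin m) O))
        ≤ Ideal.comap (constantCoeff (σ := Fin m) (R := O)) (Ideal.span {(p : O)}) := by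
      rw [MM, Ideal.span_le]
      rintro x hx
      rcases Set.mem_insert_iff.mp hx with rfl | ⟨j, rfl⟩
      · show constantCoeff (σ := Fin m) (R := O) (p : MvPowerSeries (Fin m) O) ∈ Ideal.span {(p : O)}
        rw [map_natCast]
        exact Ideal.mem_span_singleton_self _
      · show constantCoeff (σ := Fin m) (R := O) (X j) ∈ Ideal.span {(p : O)}
        rw [constantCoeff_X]
        exact zero_mem _
    exact fun f hf => hle hf
  have hEps : ∀ g : O, (constantCoeff (σ := Fin m) (R := O)) (Ψ g) - g ∈ Ideal.span {(p : O)} := by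
    intro g
    have h2 := hMtoP _ (hM1 g)
    rwa [map_sub, constantCoeff_C] at h2
  have hid : ∀ g : O, (constantCoeff (σ := Fin m) (R := O)) (Ψ g) = g := by
    intro g
    have huniq := CohenUniq.uniq_aux B hp ((constantCoeff (σ := Fin m) (R := O)).comp Ψ) (RingHom.id O)
      (Ideal.span {(p : O)}) (Ideal.mem_span_singleton_self _) hexp
      (fun j => by
        rw [RingHom.comp_apply, hΨB j, RingHom.id_apply, map_add, constantCoeff_C,
          constantCoeff_X, add_zero])
      (fun g' => hEps g')
    have hdvd : ∀ k : ℕ, (p : O) ^ k ∣ (constantCoeff (σ := Fin m) (R := O)) (Ψ g) - g := by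
      intro k
      have h2 := huniq k g
      rw [Ideal.span_singleton_pow, Ideal.mem_span_singleton] at h2
      exact dvd_trans (pow_dvd_pow _ (Nat.le_succ k)) h2
    exact sub_eq_zero.mp (hsep _ hdvd)
  have cond3 : ∀ g : O, Ψ g - C (σ := Fin m) (R := O) g ∈
      Ideal.span (Set.range (X : Fin m → MvPowerSeries (Fin m) O)) := by
    intro g
    have hK : Ψ g - C (σ := Fin m) (R := O) g ∈ (K 1 : Ideal (MvPowerSeries (Fin m) O)) := by
      rw [mem_K]
      intro d hd
      have hd0 : d = 0 := deg_eq_zero (by omega)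
      subst hd0
      rw [coeff_zero_eq_constantCoeff_apply, map_sub, constantCoeff_C, hid, sub_self]
    have h2 := K_le_J_pow 1 hK
    rw [pow_one] at h2
    exact h2
  refine ⟨Ψ, ⟨cond1, hΨB, cond3⟩, ?_⟩
  rintro χ ⟨-, hχB, hχ3⟩
  have hbase : ∀ g : O, χ g - Ψ g ∈ (MM p : Ideal (MvPowerSeries (Fin m) O)) := by
    intro g
    have h1 : χ g - Ψ g = (χ g - C (σ := Fin m) (R := O) g) - (Ψ g - C (σ := Fin m) (R := O) g) := by ring
    rw [h1]
    exact Ideal.sub_mem _ (J_le_MM p (hχ3 g)) (J_le_MM p (cond3 g))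
  have huniq := CohenUniq.uniq_aux B hp χ Ψ (MM p) (p_mem_MM p) hexp
    (fun j => by rw [hχB j, hΨB j]) hbase
  refine RingHom.ext fun g => ?_
  exact sub_eq_zero.mp (hzero _ fun n => huniq n g)

end CohenFinal

/-- Deformation of a Cohen ring.  Let `O` be a Cohen ring for `κ`, `(b₁,…,b_m)` a finite
`p`-basis of `κ`, and `B₁,…,B_m ∈ O` lifts of the `b_j`.  Then there is a unique ring
homomorphism `ψ : O → O[[δ₁,…,δ_m]]`, continuous for the maximal-ideal-adic topologies,
with `ψ(B_j) = B_j + δ_j` for all `j` and `ψ(g) − g ∈ (δ₁,…,δ_m)` for all `g ∈ O`. -/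
theorem cohen_deformation
    {p : ℕ} (hp : p.Prime)
    {κ : Type} [Field κ] [CharP κ p]
    {O : Type} [CommRing O] [IsDomain O] [IsDiscreteValuationRing O] [CharZero O]
    (hmax : IsLocalRing.maximalIdeal O = Ideal.span {(p : O)})
    [IsAdicComplete (IsLocalRing.maximalIdeal O) O]
    (π : O →+* κ) (hπ : Function.Surjective π)
    (hker : RingHom.ker π = IsLocalRing.maximalIdeal O)
    {m : ℕ} (b : Fin m → κ) (hb : IsPBasis p b)
    (B : Fin m → O) (hB : ∀ j, π (B j) = b j) :
    ∃! ψ : O →+* MvPowerSeries (Fin m) O,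
      (∀ N : ℕ, ∃ k : ℕ, ∀ x ∈ IsLocalRing.maximalIdeal O ^ k,
        ψ x ∈ IsLocalRing.maximalIdeal (MvPowerSeries (Fin m) O) ^ N) ∧
      (∀ j, ψ (B j) = MvPowerSeries.C (σ := Fin m) (R := O) (B j) + MvPowerSeries.X j) ∧
      (∀ g : O, ψ g - MvPowerSeries.C (σ := Fin m) (R := O) g ∈
        Ideal.span (Set.range (MvPowerSeries.X : Fin m → MvPowerSeries (Fin m) O))) :=
  CohenFinal.cohen_deformation_aux hp hmax π hπ hker b hb B hB
end

section
/- Let κ be a field of characteristic p admitting a finite p-basis (b₁, …, b_m). Fix j ∈ {1,…,m} and let b' ∈ κ[[s]] be a formal power series whose constant term equals b_j. Then there exists a ring automorphism σ of the field of formal Laurent series κ((s)) such that σ(s) = s, σ(b_j) = b', and σ(b_i) = b_i for all i ≠ j (elements of κ being viewed in κ((s)) as constant series). -/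
open PowerSeries

namespace PBaux

variable {p : ℕ} {κ : Type} [Field κ] {m : ℕ}

/-- p-restricted exponent multi-indices -/
abbrev E (p m : ℕ) := {e : Fin m →₀ ℕ // ∀ i, e i < p}

noncomputable instance : Fintype (E p m) :=
  Fintype.ofInjective (fun (e : E p m) (i : Fin m) => (⟨e.1 i, e.2 i⟩ : Fin p))
    (by
      intro e e' h
      ext i
      exact congrArg Fin.val (congrFun h i))

/-- monomial in the p-basis elements -/
def Bk (b : Fin m → κ) (w : Fin m →₀ ℕ) : κ := w.prod fun i k => b i ^ k


lemma Bk_add (b : Fin m → κ) (w w' : Fin m →₀ ℕ) : Bk b (w + w') = Bk b w * Bk b w' :=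
  Finsupp.prod_add_index (fun a _ => pow_zero _) (fun a _ k k' => pow_add _ _ _)

variable (hp : p.Prime) [CharP κ p] {b : Fin m → κ}

noncomputable def D (hb : IsPBasis p b) (x : κ) : E p m →₀ κ := (hb x).choose

include hp

lemma Dsum (hb : IsPBasis p b) (x : κ) :
    ∑ e : E p m, D hb x e ^ p * Bk b e.1 = x := by
  have h : x = (D hb x).sum fun e c => c ^ p * (e : Fin m →₀ ℕ).prod fun i k => b i ^ k :=
    (hb x).choose_spec.1
  rw [Finsupp.sum_fintype _ _ (fun e => by simp [zero_pow hp.ne_zero])] at h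
  simpa [Bk] using h.symm

lemma Duniq (hb : IsPBasis p b) (x : κ) (c : E p m → κ)
    (h : ∑ e : E p m, c e ^ p * Bk b e.1 = x) : ∀ e, c e = D hb x e := by
  intro e
  have key : x = (Finsupp.equivFunOnFinite.symm c).sum
      fun e cc => cc ^ p * (e : Fin m →₀ ℕ).prod fun i k => b i ^ k := by
    rw [Finsupp.sum_fintype _ _ (fun e => by simp [zero_pow hp.ne_zero])]
    simpa [Bk] using h.symm
  have h2 := (hb x).choose_spec.2 _ key
  calc c e = (Finsupp.equivFunOnFinite.symm c) e := by simp
    _ = D hb x e := by rw [h2]; rfl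

lemma D_add (hb : IsPBasis p b) (x y : κ) (e : E p m) :
    D hb (x + y) e = D hb x e + D hb y e := by
  haveI := Fact.mk hp
  refine (Duniq hp hb _ (fun e => D hb x e + D hb y e) ?_ e).symm
  calc ∑ e : E p m, (D hb x e + D hb y e) ^ p * Bk b e.1
      = ∑ e : E p m, (D hb x e ^ p * Bk b e.1 + D hb y e ^ p * Bk b e.1) := by
        refine Finset.sum_congr rfl fun e' _ => ?_
        rw [add_pow_char, add_mul]
    _ = x + y := by rw [Finset.sum_add_distrib, Dsum hp hb, Dsum hp hb]

lemma D_zero (hb : IsPBasis p b) (e : E p m) : D hb 0 e = 0 := by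
  refine (Duniq hp hb 0 (fun _ => 0) ?_ e).symm
  simp [zero_pow hp.ne_zero]

lemma D_psmul (hb : IsPBasis p b) (y x : κ) (e : E p m) :
    D hb (y ^ p * x) e = y * D hb x e := by
  refine (Duniq hp hb _ (fun e => y * D hb x e) ?_ e).symm
  calc ∑ e : E p m, (y * D hb x e) ^ p * Bk b e.1
      = y ^ p * ∑ e : E p m, D hb x e ^ p * Bk b e.1 := by
        rw [Finset.mul_sum]
        refine Finset.sum_congr rfl fun e' _ => ?_
        rw [mul_pow]; ring
    _ = y ^ p * x := by rw [Dsum hp hb x]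

lemma D_basis (hb : IsPBasis p b) (e₀ : E p m) (e : E p m) :
    D hb (Bk b e₀.1) e = if e = e₀ then 1 else 0 := by
  refine (Duniq hp hb _ (fun e => if e = e₀ then 1 else 0) ?_ e).symm
  rw [Finset.sum_eq_single e₀]
  · simp
  · intro e' _ hne; simp [hne, zero_pow hp.ne_zero]
  · intro h; exact absurd (Finset.mem_univ e₀) h

lemma D_one (hb : IsPBasis p b) (e : E p m) :
    D hb 1 e = if e = ⟨0, fun i => hp.pos⟩ then 1 else 0 := by
  have := D_basis hp hb ⟨0, fun i => hp.pos⟩ e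
  simpa [Bk] using this



lemma coeff_pow_p (f : PowerSeries κ) (n : ℕ) :
    coeff n (f ^ p) = if p ∣ n then coeff (n / p) f ^ p else 0 := by
  haveI := Fact.mk hp
  haveI : CharP (PowerSeries κ) p :=
    charP_of_injective_ringHom (f := C)
      (fun a c h => by simpa using congrArg (constantCoeff) h) p
  set q : Polynomial κ := trunc (n+1) f with hq
  obtain ⟨r, hr⟩ : (X : PowerSeries κ)^(n+1) ∣ f - ↑q := by
    rw [X_pow_dvd_iff]
    intro d hd
    simp [hq, coeff_trunc, hd, Polynomial.coeff_coe]
  have hf : f = (q : PowerSeries κ) + X^(n+1) * r := by rw [← hr]; ring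
  have hfp : f ^ p = ((q ^ p : Polynomial κ) : PowerSeries κ) + X ^ ((n+1) * p) * r ^ p := by
    rw [hf, add_pow_char, Polynomial.coe_pow, mul_pow, ← pow_mul]
  have h1 : coeff n ((X : PowerSeries κ) ^ ((n+1)*p) * r ^ p) = 0 := by
    rw [coeff_X_pow_mul', if_neg]
    have : n + 1 ≤ (n+1) * p := Nat.le_mul_of_pos_right _ hp.pos
    omega
  have h2 : (q ^ p).coeff n = if p ∣ n then coeff (n / p) f ^ p else 0 := by
    rw [← Polynomial.map_frobenius_expand, Polynomial.coeff_map, Polynomial.coeff_expand hp.pos,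
      frobenius_def]
    split_ifs with h
    · congr 1
      rw [hq, coeff_trunc, if_pos (Nat.lt_succ_of_le (Nat.div_le_self n p))]
    · exact zero_pow hp.ne_zero
  rw [hfp, map_add, h1, add_zero, Polynomial.coeff_coe, h2]

/-- products of the moved basis family -/
noncomputable def Bp (β : Fin m → PowerSeries κ) (w : Fin m →₀ ℕ) : PowerSeries κ :=
  ∏ i : Fin m, β i ^ w i

omit hp in
lemma Bp_add (β : Fin m → PowerSeries κ) (w w' : Fin m →₀ ℕ) :
    Bp β (w + w') = Bp β w * Bp β w' := by
  rw [Bp, Bp, Bp, ← Finset.prod_mul_distrib]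
  exact Finset.prod_congr rfl fun i _ => by rw [Finsupp.add_apply, pow_add]

omit hp in
lemma Bp_psmul (β : Fin m → PowerSeries κ) (w : Fin m →₀ ℕ) :
    Bp β (p • w) = (Bp β w) ^ p := by
  rw [Bp, Bp, ← Finset.prod_pow]
  refine Finset.prod_congr rfl fun i _ => ?_
  rw [Finsupp.smul_apply, smul_eq_mul, mul_comm, pow_mul]

omit hp in
lemma Bk_eq (w : Fin m →₀ ℕ) : Bk b w = ∏ i : Fin m, b i ^ w i := by
  rw [Bk, Finsupp.prod_fintype]
  intro i; exact pow_zero _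

omit hp in
lemma constantCoeff_Bp (β : Fin m → PowerSeries κ)
    (hβ : ∀ i, constantCoeff (β i) = b i) (w : Fin m →₀ ℕ) :
    constantCoeff (Bp β w) = Bk b w := by
  rw [Bp, map_prod, Bk_eq]
  exact Finset.prod_congr rfl fun i _ => by rw [map_pow, hβ]

omit hp in
lemma Bp_single (β : Fin m → PowerSeries κ) (i : Fin m) :
    Bp β (Finsupp.single i 1) = β i := by
  rw [Bp, Finset.prod_eq_single i]
  · simp
  · intro i' _ hne; simp [Finsupp.single_apply, Ne.symm hne]
  · intro h; exact absurd (Finset.mem_univ i) h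

/-- the (e,k)-component of the canonical decomposition of `f` over the p-th powers -/
noncomputable def ac (hb : IsPBasis p b) (f : PowerSeries κ) (e : E p m) (k : ℕ) :
    PowerSeries κ :=
  mk fun t => D hb (coeff (p * t + k) f) e

lemma ac_add (hb : IsPBasis p b) (f g : PowerSeries κ) (e : E p m) (k : ℕ) :
    ac hb (f + g) e k = ac hb f e k + ac hb g e k := by
  ext t
  simp [ac, coeff_mk, D_add hp hb]

lemma Adecomp (hb : IsPBasis p b) (f : PowerSeries κ) :
    ∑ e : E p m, ∑ k ∈ Finset.range p, (ac hb f e k) ^ p * C (Bk b e.1) * X ^ k = f := by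
  ext n
  rw [map_sum]
  have hterm : ∀ (e : E p m) (k : ℕ), k < p →
      coeff n ((ac hb f e k) ^ p * C (Bk b e.1) * X ^ k)
      = if k = n % p then (D hb (coeff n f) e) ^ p * Bk b e.1 else 0 := by
    intro e k hk
    rw [coeff_mul_X_pow', coeff_mul_C, coeff_pow_p hp]
    by_cases h1 : k ≤ n
    · rw [if_pos h1]
      by_cases h2 : p ∣ n - k
      · obtain ⟨c, hc⟩ := h2
        have hkmod : k = n % p := by
          have : n = p * c + k := by omega
          rw [this, Nat.mul_add_mod, Nat.mod_eq_of_lt hk]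
        rw [if_pos ⟨c, hc⟩, if_pos hkmod]
        simp only [ac, coeff_mk]
        have h3 : (n - k) / p = c := by rw [hc, Nat.mul_div_cancel_left _ hp.pos]
        have h4 : p * ((n - k) / p) + k = n := by rw [h3]; omega
        rw [h4]
      · rw [if_neg h2, zero_mul, if_neg]
        intro hkmod
        refine h2 ⟨n / p, ?_⟩
        have := Nat.div_add_mod n p
        omega
    · rw [if_neg h1, if_neg]
      intro hkmod
      exact h1 (by rw [hkmod]; exact Nat.mod_le n p)
  calc ∑ e : E p m, coeff n (∑ k ∈ Finset.range p, (ac hb f e k) ^ p * C (Bk b e.1) * X ^ k)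
      = ∑ e : E p m, (D hb (coeff n f) e) ^ p * Bk b e.1 := by
        refine Finset.sum_congr rfl fun e _ => ?_
        rw [map_sum]
        rw [Finset.sum_congr rfl fun k hk => hterm e k (Finset.mem_range.mp hk)]
        rw [Finset.sum_ite_eq' (Finset.range p) (n % p)
          (fun _ => (D hb (coeff n f) e) ^ p * Bk b e.1)]
        rw [if_pos (Finset.mem_range.mpr (Nat.mod_lt n hp.pos))]
    _ = coeff n f := Dsum hp hb _



instance charP_powerSeries [CharP κ p] : CharP (PowerSeries κ) p :=
  charP_of_injective_ringHom (f := C)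
    (fun a c h => by simpa using congrArg (constantCoeff) h) p

omit hp in
lemma Bk_single (i : Fin m) : Bk b (Finsupp.single i 1) = b i := by
  rw [Bk_eq, Finset.prod_eq_single i]
  · simp
  · intro i' _ hne; simp [Finsupp.single_apply, Ne.symm hne]
  · intro h; exact absurd (Finset.mem_univ i) h

omit hp in
lemma Bp_zero (β : Fin m → PowerSeries κ) : Bp β 0 = 1 := by
  simp [Bp]

omit hp in
lemma Bk_zero : Bk b (0 : Fin m →₀ ℕ) = 1 := by simp [Bk]

lemma ac_basic (hb : IsPBasis p b) (c : PowerSeries κ) (u : κ) (l : ℕ) (e : E p m) (k : ℕ)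
    (hk : k < p) :
    ac hb (c ^ p * C u * X ^ l) e k
      = if k = l % p then X ^ (l / p) * c * C (D hb u e) else 0 := by
  have hl := Nat.div_add_mod l p
  ext t
  simp only [ac, coeff_mk]
  rw [coeff_mul_X_pow', coeff_mul_C, coeff_pow_p hp]
  by_cases hk0 : k = l % p
  · rw [if_pos hk0]
    rw [coeff_mul_C, coeff_X_pow_mul']
    by_cases ht : l / p ≤ t
    · have h1 : l ≤ p * t + k := by
        have : p * (l / p) ≤ p * t := Nat.mul_le_mul_left p ht
        omega
      rw [if_pos h1]
      have h2 : p * t + k - l = p * (t - l / p) := by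
        have hmul : p * (t - l / p) + p * (l / p) = p * t := by
          rw [← Nat.mul_add]; congr 1; omega
        omega
      rw [if_pos (h2 ▸ ⟨t - l / p, rfl⟩)]
      rw [h2, Nat.mul_div_cancel_left _ hp.pos]
      rw [D_psmul hp hb, if_pos ht]
    · rw [if_neg, if_neg ht, zero_mul]
      · exact D_zero hp hb e
      · intro h1
        have : p * t + p ≤ p * (l / p) := by
          have : t + 1 ≤ l / p := by omega
          calc p * t + p = p * (t + 1) := by ring
            _ ≤ p * (l / p) := Nat.mul_le_mul_left p this
        omega
  · rw [if_neg hk0]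
    by_cases h1 : l ≤ p * t + k
    · rw [if_pos h1, if_neg, zero_mul]
      · exact D_zero hp hb e
      · rintro ⟨c', hc'⟩
        apply hk0
        have : p * t + k = p * c' + l := by omega
        have h5 : (p * t + k) % p = k := by rw [Nat.mul_add_mod, Nat.mod_eq_of_lt hk]
        rw [this] at h5
        rw [← h5]
        conv_lhs => rw [← hl]
        rw [← Nat.add_assoc, Nat.add_comm (p * c') (p * (l/p)), ← Nat.mul_add, Nat.mul_add_mod,
          Nat.mod_eq_of_lt (Nat.mod_lt l hp.pos)]
    · rw [if_neg h1]
      exact D_zero hp hb e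

/-- the approximating maps -/
noncomputable def sig (hb : IsPBasis p b) (β : Fin m → PowerSeries κ) :
    ℕ → PowerSeries κ → PowerSeries κ
  | 0, f => f
  | n+1, f => ∑ e : E p m, ∑ k ∈ Finset.range p,
      (sig hb β n (ac hb f e k)) ^ p * Bp β e.1 * X ^ k

variable {β : Fin m → PowerSeries κ}

lemma sig_zero (hb : IsPBasis p b) : ∀ n, sig hb β n 0 = 0 := by
  intro n
  induction n with
  | zero => rfl
  | succ n ih =>
    rw [sig]
    have hac : ∀ (e : E p m) (k : ℕ), ac hb (0 : PowerSeries κ) e k = 0 := by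
      intro e k; ext t; simp [ac, coeff_mk, D_zero hp hb]
    refine Finset.sum_eq_zero fun e _ => Finset.sum_eq_zero fun k _ => ?_
    rw [hac, ih, zero_pow hp.ne_zero, zero_mul, zero_mul]

lemma sig_add (hb : IsPBasis p b) (n : ℕ) (f g : PowerSeries κ) :
    sig hb β n (f + g) = sig hb β n f + sig hb β n g := by
  haveI := Fact.mk hp
  induction n generalizing f g with
  | zero => rfl
  | succ n ih =>
    rw [sig, sig, sig, ← Finset.sum_add_distrib]
    refine Finset.sum_congr rfl fun e _ => ?_
    rw [← Finset.sum_add_distrib]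
    refine Finset.sum_congr rfl fun k _ => ?_
    rw [ac_add hp hb, ih, add_pow_char, add_mul, add_mul]

lemma sig_sum (hb : IsPBasis p b) (n : ℕ) {ι : Type*} (s : Finset ι) (F : ι → PowerSeries κ) :
    sig hb β n (∑ i ∈ s, F i) = ∑ i ∈ s, sig hb β n (F i) := by
  classical
  induction s using Finset.induction_on with
  | empty => simp [sig_zero hp hb]
  | insert a s' hns ih =>
                     rw [Finset.sum_insert hns, Finset.sum_insert hns, sig_add hp hb, ih]

lemma sig_basic (hb : IsPBasis p b) (n : ℕ) (c : PowerSeries κ) (u : κ) (l : ℕ) :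
    sig hb β (n+1) (c ^ p * C u * X ^ l)
      = (∑ e : E p m, (sig hb β n (X ^ (l / p) * c * C (D hb u e))) ^ p * Bp β e.1)
        * X ^ (l % p) := by
  rw [sig, Finset.sum_mul]
  refine Finset.sum_congr rfl fun e _ => ?_
  rw [Finset.sum_eq_single (l % p)]
  · rw [ac_basic hp hb c u l e _ (Nat.mod_lt l hp.pos), if_pos rfl]
  · intro k hks hne
    rw [ac_basic hp hb c u l e _ (Finset.mem_range.mp hks), if_neg hne,
      sig_zero hp hb, zero_pow hp.ne_zero, zero_mul, zero_mul]
  · intro h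
    exact absurd (Finset.mem_range.mpr (Nat.mod_lt l hp.pos)) h

lemma sig_Xpow (hb : IsPBasis p b) (n t : ℕ) : sig hb β n (X ^ t) = X ^ t := by
  induction n generalizing t with
  | zero => rfl
  | succ n ih =>
    have h := sig_basic hp hb (β := β) n 1 1 t
    rw [map_one] at h
    simp only [one_pow, one_mul, mul_one] at h
    rw [h, Finset.sum_eq_single (⟨0, fun i => hp.pos⟩ : E p m)]
    · rw [D_one hp hb, if_pos rfl, map_one, mul_one, ih, Bp_zero, mul_one,
        ← pow_mul, ← pow_add]
      congr 1
      have := Nat.div_add_mod t p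
      have h2 := Nat.mul_comm (t / p) p
      omega
    · intro e _ hne
      rw [D_one hp hb, if_neg hne, map_zero, mul_zero, sig_zero hp hb,
        zero_pow hp.ne_zero, zero_mul]
    · intro h; exact absurd (Finset.mem_univ _) h

lemma sig_one (hb : IsPBasis p b) (n : ℕ) : sig hb β n 1 = 1 := by
  have := sig_Xpow hp hb (β := β) n 0
  simpa using this

lemma sig_C_basis (hb : IsPBasis p b) (n : ℕ) (e₀ : E p m) :
    sig hb β (n+1) (C (Bk b e₀.1)) = Bp β e₀.1 := by
  have h := sig_basic hp hb (β := β) n 1 (Bk b e₀.1) 0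
  simp only [one_pow, one_mul, mul_one, pow_zero, Nat.zero_div, Nat.zero_mod] at h
  rw [h, Finset.sum_eq_single e₀]
  · rw [D_basis hp hb, if_pos rfl, map_one, sig_one hp hb, one_pow, one_mul]
  · intro e _ hne
    rw [D_basis hp hb, if_neg hne, map_zero, sig_zero hp hb,
      zero_pow hp.ne_zero, zero_mul]
  · intro hco; exact absurd (Finset.mem_univ _) hco

lemma sig_C_b (hb : IsPBasis p b) (n : ℕ) (i : Fin m) :
    sig hb β (n+1) (C (b i)) = β i := by
  have he : ∀ i' : Fin m, (Finsupp.single i (1 : ℕ)) i' < p := by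
    intro i'
    rw [Finsupp.single_apply]
    split
    · exact hp.one_lt
    · exact hp.pos
  have := sig_C_basis hp (β := β) hb n ⟨Finsupp.single i 1, he⟩
  rw [Bk_single] at this
  rw [this, Bp_single]

lemma sig_const (hb : IsPBasis p b) (hβ : ∀ i, constantCoeff (β i) = b i) (n : ℕ)
    (f : PowerSeries κ) :
    constantCoeff (sig hb β n f) = constantCoeff f := by
  induction n generalizing f with
  | zero => rfl
  | succ n ih =>
    rw [sig, map_sum]
    have : ∀ e : E p m, constantCoeff
        (∑ k ∈ Finset.range p, (sig hb β n (ac hb f e k)) ^ p * Bp β e.1 * X ^ k)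
        = (D hb (constantCoeff f) e) ^ p * Bk b e.1 := by
      intro e
      rw [map_sum, Finset.sum_eq_single 0]
      · rw [map_mul, map_mul, map_pow, map_pow, ih, constantCoeff_Bp (b := b) β hβ, pow_zero, mul_one]
        have : constantCoeff (ac hb f e 0) = D hb (constantCoeff f) e := by
          have h0 := coeff_mk 0 (fun t => D hb (coeff (p * t + 0) f) e)
          simp only [ac]
          rw [← coeff_zero_eq_constantCoeff_apply, ← coeff_zero_eq_constantCoeff_apply, h0]
          norm_num
        rw [this]
      · intro k _ hk
        rw [map_mul, map_pow, constantCoeff_X, zero_pow hk, mul_zero]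
      · intro h; exact absurd (Finset.mem_range.mpr hp.pos) h
    rw [Finset.sum_congr rfl fun e _ => this e]
    exact Dsum hp hb _

/-- agreement of coefficients below `N` -/
def cg (N : ℕ) (f g : PowerSeries κ) : Prop := ∀ d, d < N → coeff d f = coeff d g

omit hp in
lemma cg_refl (N : ℕ) (f : PowerSeries κ) : cg N f f := fun _ _ => rfl

omit hp in
lemma cg_symm {N : ℕ} {f g : PowerSeries κ} (h : cg N f g) : cg N g f :=
  fun d hd => (h d hd).symm

omit hp in
lemma cg_trans {N : ℕ} {f g h : PowerSeries κ} (h1 : cg N f g) (h2 : cg N g h) : cg N f h :=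
  fun d hd => (h1 d hd).trans (h2 d hd)

omit hp in
lemma cg_mono {M N : ℕ} (hMN : M ≤ N) {f g : PowerSeries κ} (h : cg N f g) : cg M f g :=
  fun d hd => h d (lt_of_lt_of_le hd hMN)

omit hp in
lemma cg_add {N : ℕ} {f f' g g' : PowerSeries κ} (h1 : cg N f f') (h2 : cg N g g') :
    cg N (f + g) (f' + g') := fun d hd => by
  rw [map_add, map_add, h1 d hd, h2 d hd]

omit hp in
lemma cg_sum {N : ℕ} {ι : Type*} (s : Finset ι) (F G : ι → PowerSeries κ)
    (h : ∀ i ∈ s, cg N (F i) (G i)) : cg N (∑ i ∈ s, F i) (∑ i ∈ s, G i) := fun d hd => by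
  rw [map_sum, map_sum]
  exact Finset.sum_congr rfl fun i hi => h i hi d hd

omit hp in
lemma cg_mul {N : ℕ} {f f' g g' : PowerSeries κ} (h1 : cg N f f') (h2 : cg N g g') :
    cg N (f * g) (f' * g') := fun d hd => by
  rw [coeff_mul, coeff_mul]
  refine Finset.sum_congr rfl fun ij hij => ?_
  rw [Finset.HasAntidiagonal.mem_antidiagonal] at hij
  rw [h1 ij.1 (by omega), h2 ij.2 (by omega)]

lemma cg_pgain {N : ℕ} {f g : PowerSeries κ} (h : cg N f g) : cg (p * N) (f ^ p) (g ^ p) := by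
  intro d hd
  rw [coeff_pow_p hp, coeff_pow_p hp]
  split_ifs with hdvd
  · rw [h (d / p) (by rw [Nat.div_lt_iff_lt_mul hp.pos, Nat.mul_comm N p]; exact hd)]
  · rfl

lemma sig_C (hb : IsPBasis p b) (n : ℕ) (u : κ) :
    sig hb β (n+1) (C u)
      = ∑ e : E p m, (sig hb β n (C (D hb u e))) ^ p * Bp β e.1 := by
  have h := sig_basic hp hb (β := β) n 1 u 0
  simp only [one_pow, one_mul, mul_one, pow_zero, Nat.zero_div, Nat.zero_mod] at h
  exact h

omit hp in
lemma Bk_psmul (w : Fin m →₀ ℕ) : Bk b (p • w) = Bk b w ^ p := by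
  rw [Bk_eq, Bk_eq, ← Finset.prod_pow]
  refine Finset.prod_congr rfl fun i _ => ?_
  rw [Finsupp.smul_apply, smul_eq_mul, mul_comm, pow_mul]

lemma cg_pgain' {n : ℕ} {f g : PowerSeries κ} (h : cg (p ^ n) f g) :
    cg (p ^ (n+1)) (f ^ p) (g ^ p) := by
  have := cg_pgain hp h
  rwa [← pow_succ'] at this

lemma key (hb : IsPBasis p b) (n : ℕ)
    (hmul : ∀ f g, cg (p ^ n) (sig hb β n (f * g)) (sig hb β n f * sig hb β n g))
    (c : PowerSeries κ) (u : κ) (l : ℕ) :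
    cg (p ^ (n+1)) (sig hb β (n+1) (c ^ p * C u * X ^ l))
      ((sig hb β n c) ^ p * (sig hb β (n+1) (C u)) * X ^ l) := by
  rw [sig_basic hp hb, sig_C hp hb, Finset.mul_sum, Finset.sum_mul, Finset.sum_mul]
  refine cg_sum _ _ _ fun e _ => ?_
  have h1 : cg (p ^ n) (sig hb β n (X ^ (l / p) * c * C (D hb u e)))
      (X ^ (l / p) * sig hb β n c * sig hb β n (C (D hb u e))) := by
    refine cg_trans (hmul _ _) (cg_mul ?_ (cg_refl _ _))
    refine cg_trans (hmul _ _) ?_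
    rw [sig_Xpow hp hb]
    exact cg_refl _ _
  have h2 := cg_pgain' hp h1
  have hXX : ((X : PowerSeries κ) ^ (l / p)) ^ p * X ^ (l % p) = X ^ l := by
    rw [← pow_mul, ← pow_add]
    congr 1
    have := Nat.div_add_mod l p
    have := Nat.mul_comm (l / p) p
    omega
  have heq : (X ^ (l / p) * sig hb β n c * sig hb β n (C (D hb u e))) ^ p
      * Bp β e.1 * X ^ (l % p)
      = sig hb β n c ^ p * (sig hb β n (C (D hb u e)) ^ p * Bp β e.1) * X ^ l := by
    rw [← hXX]; ring
  refine cg_trans (cg_mul (cg_mul h2 (cg_refl _ _)) (cg_refl _ _)) ?_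
  rw [heq]
  exact cg_refl _ _

lemma mult_all (hb : IsPBasis p b) (hβ : ∀ i, constantCoeff (β i) = b i) (n : ℕ) :
    (∀ f g, cg (p ^ n) (sig hb β n (f * g)) (sig hb β n f * sig hb β n g)) ∧
    (∀ w : Fin m →₀ ℕ, cg (p ^ n) (sig hb β n (C (Bk b w))) (Bp β w)) := by
  induction n with
  | zero =>
    constructor
    · intro f g d hd
      rw [pow_zero] at hd
      interval_cases d
      rfl
    · intro w d hd
      rw [pow_zero] at hd
      interval_cases d
      show coeff 0 (C (Bk b w)) = coeff 0 (Bp β w)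
      rw [coeff_zero_eq_constantCoeff_apply, coeff_zero_eq_constantCoeff_apply,
        constantCoeff_C, constantCoeff_Bp (b := b) β hβ]
  | succ n ih =>
    obtain ⟨hmul, hW⟩ := ih
    have hkey := key hp hb n hmul
    -- the W-part at level n+1
    have hW' : ∀ w : Fin m →₀ ℕ,
        cg (p ^ (n+1)) (sig hb β (n+1) (C (Bk b w))) (Bp β w) := by
      intro w
      set w1 : Fin m →₀ ℕ := w.mapRange (· / p) (Nat.zero_div p) with hw1
      set w0 : Fin m →₀ ℕ := w.mapRange (· % p) (Nat.zero_mod p) with hw0def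
      have hw0lt : ∀ i, w0 i < p := by
        intro i
        rw [hw0def, Finsupp.mapRange_apply]
        exact Nat.mod_lt _ hp.pos
      have hw : w = p • w1 + w0 := by
        ext i
        rw [Finsupp.add_apply, Finsupp.smul_apply, smul_eq_mul, hw1, hw0def,
          Finsupp.mapRange_apply, Finsupp.mapRange_apply]
        have := Nat.div_add_mod (w i) p
        omega
      have hCBk : (C (Bk b w) : PowerSeries κ)
          = (C (Bk b w1)) ^ p * C (Bk b w0) * X ^ 0 := by
        rw [pow_zero, mul_one, ← map_pow, ← map_mul]
        congr 1
        rw [hw, Bk_add, Bk_psmul]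
      have h1 := hkey (C (Bk b w1)) (Bk b w0) 0
      rw [← hCBk] at h1
      have h2 : sig hb β (n+1) (C (Bk b w0)) = Bp β w0 :=
        sig_C_basis hp hb n ⟨w0, hw0lt⟩
      rw [h2, pow_zero, mul_one] at h1
      refine cg_trans h1 ?_
      have h3 := cg_mul (cg_pgain' hp (hW w1)) (cg_refl (p ^ (n+1)) (Bp β w0))
      refine cg_trans h3 ?_
      rw [← Bp_psmul, ← Bp_add, ← hw]
      exact cg_refl _ _
    refine ⟨?_, hW'⟩
    intro f g
    -- expand f * g into basic pieces
    have hfg : f * g = ∑ e : E p m, ∑ e' : E p m, ∑ k ∈ Finset.range p, ∑ k' ∈ Finset.range p,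
        ((ac hb f e k * ac hb g e' k') ^ p * C (Bk b (e.1 + e'.1)) * X ^ (k + k')) := by
      conv_lhs => rw [← Adecomp hp hb f, ← Adecomp hp hb g]
      rw [Finset.sum_mul_sum]
      refine Finset.sum_congr rfl fun e _ => Finset.sum_congr rfl fun e' _ => ?_
      rw [Finset.sum_mul_sum]
      refine Finset.sum_congr rfl fun k _ => Finset.sum_congr rfl fun k' _ => ?_
      rw [Bk_add, map_mul]
      ring
    have hsig : sig hb β (n+1) (f * g)
        = ∑ e : E p m, ∑ e' : E p m, ∑ k ∈ Finset.range p, ∑ k' ∈ Finset.range p,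
          sig hb β (n+1)
            ((ac hb f e k * ac hb g e' k') ^ p * C (Bk b (e.1 + e'.1)) * X ^ (k + k')) := by
      rw [hfg, sig_sum hp hb]
      refine Finset.sum_congr rfl fun e _ => ?_
      rw [sig_sum hp hb]
      refine Finset.sum_congr rfl fun e' _ => ?_
      rw [sig_sum hp hb]
      refine Finset.sum_congr rfl fun k _ => ?_
      rw [sig_sum hp hb]
    have hrhs : sig hb β (n+1) f * sig hb β (n+1) g
        = ∑ e : E p m, ∑ e' : E p m, ∑ k ∈ Finset.range p, ∑ k' ∈ Finset.range p,
          ((sig hb β n (ac hb f e k) ^ p * Bp β e.1 * X ^ k)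
            * (sig hb β n (ac hb g e' k') ^ p * Bp β e'.1 * X ^ k')) := by
      rw [sig, sig, Finset.sum_mul_sum]
      refine Finset.sum_congr rfl fun e _ => Finset.sum_congr rfl fun e' _ => ?_
      rw [Finset.sum_mul_sum]
    rw [hsig, hrhs]
    refine cg_sum _ _ _ fun e _ => cg_sum _ _ _ fun e' _ => cg_sum _ _ _ fun k _ =>
      cg_sum _ _ _ fun k' _ => ?_
    have h1 := hkey (ac hb f e k * ac hb g e' k') (Bk b (e.1 + e'.1)) (k + k')
    refine cg_trans h1 ?_
    have h2 := cg_mul (cg_mul (cg_pgain' hp (hmul (ac hb f e k) (ac hb g e' k')))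
      (hW' (e.1 + e'.1))) (cg_refl (p ^ (n+1)) ((X : PowerSeries κ) ^ (k + k')))
    refine cg_trans h2 ?_
    rw [Bp_add]
    have heq : (sig hb β n (ac hb f e k) * sig hb β n (ac hb g e' k')) ^ p
        * (Bp β e.1 * Bp β e'.1) * X ^ (k + k')
        = (sig hb β n (ac hb f e k) ^ p * Bp β e.1 * X ^ k)
          * (sig hb β n (ac hb g e' k') ^ p * Bp β e'.1 * X ^ k') := by
      ring
    rw [heq]
    exact cg_refl _ _

lemma stab (hb : IsPBasis p b) (hβ : ∀ i, constantCoeff (β i) = b i) :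
    ∀ n f, cg (p ^ n) (sig hb β (n+1) f) (sig hb β n f) := by
  intro n
  induction n with
  | zero =>
    intro f d hd
    rw [pow_zero] at hd
    interval_cases d
    rw [coeff_zero_eq_constantCoeff_apply, coeff_zero_eq_constantCoeff_apply,
      sig_const hp hb hβ, sig_const hp hb hβ]
  | succ n ih =>
    intro f
    rw [sig, sig]
    refine cg_sum _ _ _ fun e _ => cg_sum _ _ _ fun k _ => ?_
    exact cg_mul (cg_mul (cg_pgain' hp (ih (ac hb f e k))) (cg_refl _ _)) (cg_refl _ _)

lemma stab_le (hb : IsPBasis p b) (hβ : ∀ i, constantCoeff (β i) = b i)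
    {n N : ℕ} (hnN : n ≤ N) (f : PowerSeries κ) :
    cg (p ^ n) (sig hb β N f) (sig hb β n f) := by
  induction N with
  | zero =>
    have : n = 0 := Nat.le_zero.mp hnN
    subst this
    exact cg_refl _ _
  | succ N ih =>
    rcases Nat.lt_or_ge n (N+1) with h | h
    · have h1 : n ≤ N := by omega
      refine cg_trans (cg_mono (Nat.pow_le_pow_right hp.pos h1) (stab hp hb hβ N f)) (ih h1)
    · have : n = N + 1 := by omega
      subst this
      exact cg_refl _ _

/-- the limit endomorphism -/
noncomputable def Sig (hb : IsPBasis p b) (β : Fin m → PowerSeries κ) (f : PowerSeries κ) :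
    PowerSeries κ :=
  mk fun d => coeff d (sig hb β (d+1) f)

lemma d_lt_pow (d : ℕ) : d < p ^ (d+1) := by
  have h1 : d < 2 ^ (d+1) := by
    have := Nat.lt_two_pow_self (n := d)
    have h2 : (2:ℕ) ^ d ≤ 2 ^ (d+1) := Nat.pow_le_pow_right (by norm_num) (by omega)
    omega
  exact lt_of_lt_of_le h1 (Nat.pow_le_pow_left hp.two_le _)

lemma cg_Sig (hb : IsPBasis p b) (hβ : ∀ i, constantCoeff (β i) = b i)
    (N : ℕ) (f : PowerSeries κ) : cg (p ^ N) (Sig hb β f) (sig hb β N f) := by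
  intro d hd
  have hmk : coeff d (Sig hb β f) = coeff d (sig hb β (d+1) f) := coeff_mk _ _
  rw [hmk]
  rcases le_or_gt (d+1) N with h | h
  · exact (stab_le hp hb hβ h f d (d_lt_pow hp d)).symm
  · exact stab_le hp hb hβ (by omega) f d hd

/-- the limit endomorphism as ring hom -/
noncomputable def SigHom (hb : IsPBasis p b) (hβ : ∀ i, constantCoeff (β i) = b i) :
    PowerSeries κ →+* PowerSeries κ where
  toFun := Sig hb β
  map_one' := by
    ext d
    have hmk : coeff d (Sig hb β 1) = coeff d (sig hb β (d+1) 1) := coeff_mk _ _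
    rw [hmk, sig_one hp hb]
  map_mul' := by
    intro f g
    ext d
    have hmk : coeff d (Sig hb β (f * g)) = coeff d (sig hb β (d+1) (f * g)) := coeff_mk _ _
    rw [hmk]
    have h1 := (mult_all hp hb hβ (d+1)).1 f g d (d_lt_pow hp d)
    rw [h1]
    have h2 := cg_mul (cg_symm (cg_Sig hp hb hβ (d+1) f)) (cg_symm (cg_Sig hp hb hβ (d+1) g))
    exact h2 d (d_lt_pow hp d)
  map_zero' := by
    ext d
    have hmk : coeff d (Sig hb β 0) = coeff d (sig hb β (d+1) 0) := coeff_mk _ _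
    rw [hmk, sig_zero hp hb]
  map_add' := by
    intro f g
    ext d
    have hmk : coeff d (Sig hb β (f + g)) = coeff d (sig hb β (d+1) (f + g)) := coeff_mk _ _
    have hmkf : coeff d (Sig hb β f) = coeff d (sig hb β (d+1) f) := coeff_mk _ _
    have hmkg : coeff d (Sig hb β g) = coeff d (sig hb β (d+1) g) := coeff_mk _ _
    rw [hmk, sig_add hp hb, map_add, map_add, hmkf, hmkg]

lemma SigHom_Xpow (hb : IsPBasis p b) (hβ : ∀ i, constantCoeff (β i) = b i) (t : ℕ) :
    SigHom hp hb hβ (X ^ t) = X ^ t := by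
  ext d
  show coeff d (Sig hb β (X ^ t)) = coeff d (X ^ t)
  have hmk : coeff d (Sig hb β (X ^ t)) = coeff d (sig hb β (d+1) (X ^ t)) := coeff_mk _ _
  rw [hmk, sig_Xpow hp hb]

lemma SigHom_X (hb : IsPBasis p b) (hβ : ∀ i, constantCoeff (β i) = b i) :
    SigHom hp hb hβ X = X := by
  have := SigHom_Xpow hp hb hβ 1
  simpa using this

lemma SigHom_C_b (hb : IsPBasis p b) (hβ : ∀ i, constantCoeff (β i) = b i) (i : Fin m) :
    SigHom hp hb hβ (C (b i)) = β i := by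
  ext d
  show coeff d (Sig hb β (C (b i))) = coeff d (β i)
  have hmk : coeff d (Sig hb β (C (b i))) = coeff d (sig hb β (d+1) (C (b i))) :=
    coeff_mk _ _
  rw [hmk, sig_C_b hp hb]

lemma SigHom_const (hb : IsPBasis p b) (hβ : ∀ i, constantCoeff (β i) = b i)
    (f : PowerSeries κ) :
    constantCoeff (SigHom hp hb hβ f) = constantCoeff f := by
  show constantCoeff (Sig hb β f) = constantCoeff f
  rw [← coeff_zero_eq_constantCoeff_apply, ← coeff_zero_eq_constantCoeff_apply]
  have hmk : coeff 0 (Sig hb β f) = coeff 0 (sig hb β 1 f) := coeff_mk _ _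
  rw [hmk]
  rw [coeff_zero_eq_constantCoeff_apply, coeff_zero_eq_constantCoeff_apply,
    sig_const hp hb hβ]

lemma SigHom_inj (hb : IsPBasis p b) (hβ : ∀ i, constantCoeff (β i) = b i) :
    Function.Injective (SigHom hp hb hβ) := by
  have hker : ∀ f, SigHom hp hb hβ f = 0 → f = 0 := by
    intro f hf
    ext d
    induction d using Nat.strong_induction_on with
    | _ d ihd =>
      have hdvd : (X : PowerSeries κ) ^ d ∣ f := by
        rw [X_pow_dvd_iff]
        intro d' hd'
        simpa using ihd d' hd'
      obtain ⟨r, hr⟩ := hdvd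
      have h0 : (X : PowerSeries κ) ^ d * SigHom hp hb hβ r = 0 := by
        rw [← SigHom_Xpow hp hb hβ d, ← map_mul, ← hr, hf]
      have hSr : SigHom hp hb hβ r = 0 := by
        rcases mul_eq_zero.mp h0 with h | h
        · exact absurd h (pow_ne_zero _ X_ne_zero)
        · exact h
      have hc : constantCoeff r = 0 := by
        rw [← SigHom_const hp hb hβ r, hSr, map_zero]
      rw [hr, map_zero]
      have := coeff_X_pow_mul r d 0
      rw [Nat.zero_add] at this
      rw [this, coeff_zero_eq_constantCoeff_apply, hc]
  intro f g hfg
  have : SigHom hp hb hβ (f - g) = 0 := by rw [map_sub, hfg, sub_self]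
  have := hker _ this
  linear_combination (norm := abel) this

/-- the shift-down operator -/
noncomputable def shift (x : PowerSeries κ) : PowerSeries κ := mk fun d => coeff (d+1) x

omit hp in
lemma shift_spec (x : PowerSeries κ) (hx : constantCoeff x = 0) :
    X * shift x = x := by
  ext d
  cases d with
  | zero =>
    rw [coeff_zero_eq_constantCoeff_apply, coeff_zero_eq_constantCoeff_apply, hx, map_mul,
      constantCoeff_X, zero_mul]
  | succ d =>
    rw [coeff_succ_X_mul]
    exact coeff_mk _ _

/-- successive approximations for surjectivity -/
noncomputable def gseq (hb : IsPBasis p b) (hβ : ∀ i, constantCoeff (β i) = b i)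
    (h : PowerSeries κ) : ℕ → PowerSeries κ
  | 0 => h
  | (k+1) => shift (gseq hb hβ h k
      - SigHom hp hb hβ (C (constantCoeff (gseq hb hβ h k))))

lemma gseq_spec (hb : IsPBasis p b) (hβ : ∀ i, constantCoeff (β i) = b i)
    (h : PowerSeries κ) (N : ℕ) :
    h = (∑ k ∈ Finset.range N, SigHom hp hb hβ (C (constantCoeff (gseq hp hb hβ h k))) * X ^ k)
      + X ^ N * gseq hp hb hβ h N := by
  induction N with
  | zero => simp [gseq]
  | succ N ih =>
    rw [Finset.sum_range_succ]
    have hstep : (X : PowerSeries κ) ^ N * gseq hp hb hβ h N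
        = SigHom hp hb hβ (C (constantCoeff (gseq hp hb hβ h N))) * X ^ N
          + X ^ (N+1) * gseq hp hb hβ h (N+1) := by
      have hc0 : constantCoeff (gseq hp hb hβ h N
          - SigHom hp hb hβ (C (constantCoeff (gseq hp hb hβ h N)))) = 0 := by
        rw [map_sub, SigHom_const hp hb hβ, constantCoeff_C, sub_self]
      have hsh := shift_spec _ hc0
      have hthis : gseq hp hb hβ h N
          = SigHom hp hb hβ (C (constantCoeff (gseq hp hb hβ h N)))
            + X * gseq hp hb hβ h (N+1) := by
        rw [gseq, hsh]
        ring
      have h2 := congrArg (fun z => (X : PowerSeries κ) ^ N * z) hthis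
      rw [h2]
      ring
    conv_lhs => rw [ih]
    rw [hstep]
    ring

lemma SigHom_surj (hb : IsPBasis p b) (hβ : ∀ i, constantCoeff (β i) = b i) :
    Function.Surjective (SigHom hp hb hβ) := by
  intro h
  set a : ℕ → κ := fun k => constantCoeff (gseq hp hb hβ h k) with ha
  refine ⟨mk a, ?_⟩
  ext d
  set N := d + 1 with hN
  -- decompose mk a below N
  have hdvd : (X : PowerSeries κ) ^ N ∣ (mk a - ∑ k ∈ Finset.range N, C (a k) * X ^ k) := by
    rw [X_pow_dvd_iff]
    intro d' hd'
    rw [map_sub, coeff_mk, map_sum, Finset.sum_eq_single d']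
    · rw [coeff_mul_X_pow', if_pos (le_refl d'), Nat.sub_self, coeff_zero_eq_constantCoeff_apply,
        constantCoeff_C, sub_self]
    · intro k hk hkd
      rw [coeff_mul_X_pow']
      split_ifs with hle
      · rw [coeff_C, if_neg (by omega)]
      · rfl
    · intro hmem
      exact absurd (Finset.mem_range.mpr hd') hmem
  obtain ⟨r, hrr⟩ := hdvd
  have hmka : mk a = (∑ k ∈ Finset.range N, C (a k) * X ^ k) + X ^ N * r := by
    rw [← hrr]; ring
  have hSig : SigHom hp hb hβ (mk a)
      = (∑ k ∈ Finset.range N, SigHom hp hb hβ (C (a k)) * X ^ k)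
        + X ^ N * SigHom hp hb hβ r := by
    rw [hmka, map_add, map_mul, map_sum, SigHom_Xpow hp hb hβ]
    congr 1
    refine Finset.sum_congr rfl fun k _ => ?_
    rw [map_mul, SigHom_Xpow hp hb hβ]
  have hg : h = (∑ k ∈ Finset.range N, SigHom hp hb hβ (C (a k)) * X ^ k)
      + X ^ N * gseq hp hb hβ h N := gseq_spec hp hb hβ h N
  have hdiff : h - SigHom hp hb hβ (mk a)
      = X ^ N * (gseq hp hb hβ h N - SigHom hp hb hβ r) := by
    conv_lhs => rw [hg, hSig]
    ring
  have hcd : coeff d (h - SigHom hp hb hβ (mk a)) = 0 := by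
    rw [hdiff, coeff_X_pow_mul', if_neg (by omega)]
  rw [map_sub] at hcd
  exact (sub_eq_zero.mp hcd).symm

end PBaux


/-- Let `κ` be a field of characteristic `p` with a finite `p`-basis `(b₁,…,b_m)`.
Fix `j` and let `b' ∈ κ[[s]]` be a power series with constant term `b j`.  Then there is
a ring automorphism `σ` of `κ((s))` with `σ(s) = s`, `σ(b_j) = b'`, and `σ(b_i) = b_i`
for `i ≠ j` (elements of `κ` being viewed as constant Laurent series). -/
theorem laurentSeries_automorphism_moving_pBasis_element
    {p : ℕ} (hp : p.Prime)
    {κ : Type} [Field κ] [CharP κ p]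
    {m : ℕ} (b : Fin m → κ) (hb : IsPBasis p b)
    (j : Fin m) (b' : PowerSeries κ)
    (hb' : PowerSeries.constantCoeff b' = b j) :
    ∃ σ : LaurentSeries κ ≃+* LaurentSeries κ,
      σ (HahnSeries.single (1 : ℤ) (1 : κ)) = HahnSeries.single (1 : ℤ) (1 : κ) ∧
      σ (HahnSeries.C (b j)) = HahnSeries.ofPowerSeries ℤ κ b' ∧
      ∀ i, i ≠ j → σ (HahnSeries.C (b i)) = HahnSeries.C (b i) := by
  classical
  set β : Fin m → PowerSeries κ := fun i => if i = j then b' else PowerSeries.C (b i)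
    with hβdef
  have hβ : ∀ i, PowerSeries.constantCoeff (β i) = b i := by
    intro i
    by_cases h : i = j
    · subst h; simp [hβdef, hb']
    · simp [hβdef, h]
  have hbij : Function.Bijective (PBaux.SigHom hp hb hβ) :=
    ⟨PBaux.SigHom_inj hp hb hβ, PBaux.SigHom_surj hp hb hβ⟩
  set Eq0 : PowerSeries κ ≃+* PowerSeries κ := RingEquiv.ofBijective _ hbij with hE
  have hEapp : ∀ x, Eq0 x = PBaux.SigHom hp hb hβ x := fun x => rfl
  have hmap : (nonZeroDivisors (PowerSeries κ)).map Eq0.toMonoidHom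
      = nonZeroDivisors (PowerSeries κ) := by
    ext x
    simp only [Submonoid.mem_map]
    constructor
    · rintro ⟨y, hy, rfl⟩
      rw [mem_nonZeroDivisors_iff_ne_zero] at hy ⊢
      intro h0
      exact hy (by apply Eq0.injective; rw [map_zero]; exact h0)
    · intro hx
      refine ⟨Eq0.symm x, ?_, Eq0.apply_symm_apply x⟩
      rw [mem_nonZeroDivisors_iff_ne_zero] at hx ⊢
      intro h0
      apply hx
      rw [← Eq0.apply_symm_apply x, h0, map_zero]
  refine ⟨IsLocalization.ringEquivOfRingEquiv (M := nonZeroDivisors (PowerSeries κ))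
    (T := nonZeroDivisors (PowerSeries κ)) (LaurentSeries κ) (LaurentSeries κ) Eq0 hmap,
    ?_, ?_, ?_⟩
  · have h1 : (HahnSeries.single (1:ℤ) (1:κ))
        = algebraMap (PowerSeries κ) (LaurentSeries κ) PowerSeries.X := by
      rw [show algebraMap (PowerSeries κ) (LaurentSeries κ) PowerSeries.X
          = HahnSeries.ofPowerSeries ℤ κ PowerSeries.X from rfl, HahnSeries.ofPowerSeries_X]
    rw [h1, IsLocalization.ringEquivOfRingEquiv_eq, hEapp, PBaux.SigHom_X hp hb hβ]
  · have h1 : (HahnSeries.C (b j) : LaurentSeries κ)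
        = algebraMap (PowerSeries κ) (LaurentSeries κ) (PowerSeries.C (b j)) := by
      rw [show algebraMap (PowerSeries κ) (LaurentSeries κ) (PowerSeries.C (b j))
          = HahnSeries.ofPowerSeries ℤ κ (PowerSeries.C (b j)) from rfl,
        HahnSeries.ofPowerSeries_C]
    rw [h1, IsLocalization.ringEquivOfRingEquiv_eq, hEapp, PBaux.SigHom_C_b hp hb hβ]
    show HahnSeries.ofPowerSeries ℤ κ (β j) = HahnSeries.ofPowerSeries ℤ κ b'
    rw [hβdef]
    simp
  · intro i hij
    have h1 : (HahnSeries.C (b i) : LaurentSeries κ)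
        = algebraMap (PowerSeries κ) (LaurentSeries κ) (PowerSeries.C (b i)) := by
      rw [show algebraMap (PowerSeries κ) (LaurentSeries κ) (PowerSeries.C (b i))
          = HahnSeries.ofPowerSeries ℤ κ (PowerSeries.C (b i)) from rfl,
        HahnSeries.ofPowerSeries_C]
    rw [h1, IsLocalization.ringEquivOfRingEquiv_eq, hEapp, PBaux.SigHom_C_b hp hb hβ]
    congr 1
    simp only [hβdef]
    rw [if_neg hij]
end

section
/- Let κ be a field of characteristic p with a finite p-basis (b₁,…,b_m), and let ψ̄ : κ → κ[[δ₁,…,δ_m]] be a ring homomorphism such that ψ̄(b_j) = b_j + δ_j for all j = 1,…,m and ψ̄(x) − x ∈ (δ₁,…,δ_m) for all x ∈ κ. Let g ∈ κ and let g₁,…,g_m ∈ κ satisfy dg = g₁·db₁ + ⋯ + g_m·db_m in Ω¹_{κ/𝔽_p}. Then ψ̄(g) − g − (g₁δ₁ + ⋯ + g_mδ_m) lies in the square (δ₁,…,δ_m)² of the ideal (δ₁,…,δ_m) of κ[[δ₁,…,δ_m]]. -/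
set_option maxHeartbeats 1000000 in

noncomputable def myDer (p : ℕ) {κ : Type} [Field κ] [CharP κ p] [Algebra (ZMod p) κ] {m : ℕ}
    (ψ : κ →+* MvPowerSeries (Fin m) κ)
    (hψ : ∀ x : κ, ψ x - (MvPowerSeries.C : κ →+* MvPowerSeries (Fin m) κ) x ∈
      Ideal.span (Set.range (MvPowerSeries.X : Fin m → MvPowerSeries (Fin m) κ))) :
    Derivation (ZMod p) κ
      (MvPowerSeries (Fin m) κ ⧸
        (Ideal.span (Set.range (MvPowerSeries.X : Fin m → MvPowerSeries (Fin m) κ))) ^ 2) :=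
  let I : Ideal (MvPowerSeries (Fin m) κ) := Ideal.span (Set.range MvPowerSeries.X)
  let mk := Ideal.Quotient.mk (I ^ 2)
  { toLinearMap := AddMonoidHom.toZModLinearMap p
      ((mk.comp ψ).toAddMonoidHom - (mk.comp ((MvPowerSeries.C : κ →+* MvPowerSeries (Fin m) κ))).toAddMonoidHom)
    map_one_eq_zero' := by
      simp only [AddMonoidHom.coe_toZModLinearMap, AddMonoidHom.sub_apply,
        RingHom.toAddMonoidHom_eq_coe, AddMonoidHom.coe_coe, RingHom.coe_comp,
        Function.comp_apply, map_one, sub_self]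
    leibniz' := by
      intro a c
      have hsm : ∀ (x : κ) (q : MvPowerSeries (Fin m) κ),
          x • mk q = mk ((MvPowerSeries.C : κ →+* MvPowerSeries (Fin m) κ) x) * mk q := by
        intro x q
        rw [Algebra.smul_def]
        congr 1
      have key : ψ (a*c) - (MvPowerSeries.C : κ →+* MvPowerSeries (Fin m) κ) (a*c)
          - ((MvPowerSeries.C : κ →+* MvPowerSeries (Fin m) κ) a * ψ c
              - (MvPowerSeries.C : κ →+* MvPowerSeries (Fin m) κ) a * (MvPowerSeries.C : κ →+* MvPowerSeries (Fin m) κ) c)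
          - ((MvPowerSeries.C : κ →+* MvPowerSeries (Fin m) κ) c * ψ a
              - (MvPowerSeries.C : κ →+* MvPowerSeries (Fin m) κ) c * (MvPowerSeries.C : κ →+* MvPowerSeries (Fin m) κ) a)
          = (ψ a - (MvPowerSeries.C : κ →+* MvPowerSeries (Fin m) κ) a) * (ψ c - (MvPowerSeries.C : κ →+* MvPowerSeries (Fin m) κ) c) := by
        rw [map_mul, map_mul]; ring
      have h2 : mk ((ψ a - (MvPowerSeries.C : κ →+* MvPowerSeries (Fin m) κ) a)
          * (ψ c - (MvPowerSeries.C : κ →+* MvPowerSeries (Fin m) κ) c)) = 0 :=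
        (Ideal.Quotient.eq_zero_iff_mem).2 (by rw [sq]; exact Ideal.mul_mem_mul (hψ a) (hψ c))
      rw [← key] at h2
      simp only [RingHom.map_sub, RingHom.map_mul] at h2
      simp only [AddMonoidHom.coe_toZModLinearMap, AddMonoidHom.sub_apply,
        RingHom.toAddMonoidHom_eq_coe, AddMonoidHom.coe_coe, RingHom.coe_comp,
        Function.comp_apply]
      rw [smul_sub, smul_sub, hsm, hsm, hsm, hsm]
      simp only [RingHom.map_mul]
      linear_combination h2 }

set_option maxHeartbeats 1000000 in
set_option synthInstance.maxHeartbeats 1000000 in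
theorem residual_deformation_first_order'
    {p : ℕ} (hp : p.Prime)
    {κ : Type} [Field κ] [CharP κ p] [Algebra (ZMod p) κ]
    {m : ℕ} (b : Fin m → κ)
    (ψ : κ →+* MvPowerSeries (Fin m) κ)
    (hψb : ∀ j, ψ (b j) = (MvPowerSeries.C : κ →+* MvPowerSeries (Fin m) κ) (b j) + MvPowerSeries.X j)
    (hψ : ∀ x : κ, ψ x - (MvPowerSeries.C : κ →+* MvPowerSeries (Fin m) κ) x ∈
      Ideal.span (Set.range (MvPowerSeries.X : Fin m → MvPowerSeries (Fin m) κ)))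
    (g : κ) (gc : Fin m → κ)
    (hdg : KaehlerDifferential.D (ZMod p) κ g
      = ∑ i, gc i • KaehlerDifferential.D (ZMod p) κ (b i)) :
    ψ g - (MvPowerSeries.C : κ →+* MvPowerSeries (Fin m) κ) g
        - ∑ i, (MvPowerSeries.C : κ →+* MvPowerSeries (Fin m) κ) (gc i) * MvPowerSeries.X i
      ∈ (Ideal.span
          (Set.range (MvPowerSeries.X : Fin m → MvPowerSeries (Fin m) κ))) ^ 2 := by
  set I : Ideal (MvPowerSeries (Fin m) κ) := Ideal.span (Set.range MvPowerSeries.X) with hI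
  set mk := Ideal.Quotient.mk (I ^ 2) with hmk
  set D := myDer p ψ hψ with hD
  have hDapp : ∀ x : κ, D x = mk (ψ x) - mk ((MvPowerSeries.C : κ →+* MvPowerSeries (Fin m) κ) x) := fun x => rfl
  have hsm : ∀ (x : κ) (q : MvPowerSeries (Fin m) κ),
      x • mk q = mk ((MvPowerSeries.C : κ →+* MvPowerSeries (Fin m) κ) x) * mk q := by
    intro x q
    rw [Algebra.smul_def]
    congr 1
  have h := congrArg (Derivation.liftKaehlerDifferential D) hdg
  rw [map_sum, Derivation.liftKaehlerDifferential_comp_D] at h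
  simp only [LinearMap.map_smul, Derivation.liftKaehlerDifferential_comp_D] at h
  rw [← Ideal.Quotient.eq_zero_iff_mem]
  show mk _ = 0
  rw [RingHom.map_sub, RingHom.map_sub, map_sum mk]
  have hx : ∀ i, mk ((MvPowerSeries.C : κ →+* MvPowerSeries (Fin m) κ) (gc i) * MvPowerSeries.X i)
      = gc i • D (b i) := by
    intro i
    rw [hDapp, hψb, RingHom.map_add, add_sub_cancel_left, hsm, RingHom.map_mul]
  calc mk (ψ g) - mk ((MvPowerSeries.C : κ →+* MvPowerSeries (Fin m) κ) g)
        - ∑ i, mk ((MvPowerSeries.C : κ →+* MvPowerSeries (Fin m) κ) (gc i) * MvPowerSeries.X i)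
      = D g - ∑ i, gc i • D (b i) := by
        rw [hDapp]; congr 1; exact Finset.sum_congr rfl fun i _ => hx i
    _ = 0 := by rw [h, sub_self]


set_option maxHeartbeats 1000000 in
set_option synthInstance.maxHeartbeats 1000000 in
/-- Let `κ` be a field of characteristic `p` with a finite `p`-basis `(b₁,…,b_m)`, and let
`ψ̄ : κ → κ[[δ₁,…,δ_m]]` be a ring homomorphism with `ψ̄(b_j) = b_j + δ_j` and
`ψ̄(x) − x ∈ (δ₁,…,δ_m)` for all `x`.  If `g ∈ κ` and `g₁,…,g_m ∈ κ` satisfy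
`dg = g₁·db₁ + ⋯ + g_m·db_m` in `Ω¹_{κ/𝔽_p}`, then
`ψ̄(g) − g − (g₁δ₁ + ⋯ + g_mδ_m) ∈ (δ₁,…,δ_m)²`. -/
theorem residual_deformation_first_order
    {p : ℕ} (hp : p.Prime)
    {κ : Type} [Field κ] [CharP κ p] [Algebra (ZMod p) κ]
    {m : ℕ} (b : Fin m → κ) (hb : IsPBasis p b)
    (ψ : κ →+* MvPowerSeries (Fin m) κ)
    (hψb : ∀ j, ψ (b j) = (MvPowerSeries.C : κ →+* MvPowerSeries (Fin m) κ) (b j) + MvPowerSeries.X j)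
    (hψ : ∀ x : κ, ψ x - (MvPowerSeries.C : κ →+* MvPowerSeries (Fin m) κ) x ∈
      Ideal.span (Set.range (MvPowerSeries.X : Fin m → MvPowerSeries (Fin m) κ)))
    (g : κ) (gc : Fin m → κ)
    (hdg : KaehlerDifferential.D (ZMod p) κ g
      = ∑ i, gc i • KaehlerDifferential.D (ZMod p) κ (b i)) :
    ψ g - (MvPowerSeries.C : κ →+* MvPowerSeries (Fin m) κ) g
        - ∑ i, (MvPowerSeries.C : κ →+* MvPowerSeries (Fin m) κ) (gc i) * MvPowerSeries.X i
      ∈ (Ideal.span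
          (Set.range (MvPowerSeries.X : Fin m → MvPowerSeries (Fin m) κ))) ^ 2 := by
  exact residual_deformation_first_order' hp b ψ hψb hψ g gc hdg
end
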